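/- arXiv:2404.11432 — 5 statements merged into one kernel-verified Lean document; each statement's English description precedes it below -/
import Mathlib

section
/- Let {(K_t, π_t)}_{t≥1} be a non-decreasing finite environment on a countable discrete set V. Then for every t ≥ 1 and every f ∈ ℓ²(π_t), Var_{π̃_1}(K_{0,t} f) ≤ (π_t(V)/π_1(V)) · Var_{π̃_t}(f) · ∏_{s=1}^t (1 − γ_s), where γ_s is the Poincaré constant of Q_s = K_s^* K_s. -/
open scoped BigOperators Classical
open Filter

noncomputable section

variable {V : Type*}

/-- Action of a kernel on functions: `(Kf)(x) = ∑_y K(x,y) f(y)`. -/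
def act (K : V → V → ℝ) (f : V → ℝ) : V → ℝ := fun x => ∑' y, K x y * f y

/-- Action of a kernel on measures: `(μK)(y) = ∑_x μ(x) K(x,y)`. -/
def actMeas (K : V → V → ℝ) (μ : V → ℝ) : V → ℝ := fun y => ∑' x, μ x * K x y

/-- `K` is a Markov transition operator. -/
def IsMarkov (K : V → V → ℝ) : Prop :=
  (∀ x y, 0 ≤ K x y) ∧ (∀ x y, K x y ≤ 1) ∧ (∀ x, HasSum (K x) 1)

/-- Total mass `π(V)` of a measure. -/
def mass (π : V → ℝ) : ℝ := ∑' x, π x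

/-- Normalized probability measure `π̃ = π / π(V)`. -/
def nmz (π : V → ℝ) : V → ℝ := fun x => π x / mass π

/-- `π(f) = ∑_x π(x) f(x)`. -/
def integral (p : V → ℝ) (f : V → ℝ) : ℝ := ∑' x, p x * f x

/-- Variance of `f` with respect to a probability measure `p`. -/
def var (p : V → ℝ) (f : V → ℝ) : ℝ :=
  (∑' x, p x * f x ^ 2) - (∑' x, p x * f x) ^ 2

/-- Membership in `ℓ²(π)`. -/
def MemL2 (π : V → ℝ) (f : V → ℝ) : Prop := Summable (fun x => π x * f x ^ 2)

/-- Adjoint kernel of `K` in `ℓ²(p)`: `K^*(x,y) = p(y) K(y,x)/p(x)`. -/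
def adjKer (p : V → ℝ) (K : V → V → ℝ) : V → V → ℝ := fun x y => p y * K y x / p x

/-- Composition of kernels. -/
def kmul (A B : V → V → ℝ) : V → V → ℝ := fun x y => ∑' z, A x z * B z y

/-- Multiplicative symmetrisation `Q = K^* K`. -/
def Qker (p : V → ℝ) (K : V → V → ℝ) : V → V → ℝ := kmul (adjKer p K) K

/-- Dirichlet form `E_{Q,p}(f,f) = (1/2) ∑_{x,y} (f(x)-f(y))² p(x) Q(x,y)`. -/
def dirichlet (Q : V → V → ℝ) (p : V → ℝ) (f : V → ℝ) : ℝ :=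
  (1 / 2) * ∑' x, ∑' y, (f x - f y) ^ 2 * p x * Q x y

/-- The Poincaré constant of `Q` with respect to the probability measure `p`:
the largest `γ ≥ 0` with `γ Var_p f ≤ E_{Q,p}(f,f)` for all `f ∈ ℓ²(p)`. -/
def poincareConst (Q : V → V → ℝ) (p : V → ℝ) : ℝ :=
  sSup {γ : ℝ | 0 ≤ γ ∧ ∀ f : V → ℝ, MemL2 p f → γ * var p f ≤ dirichlet Q p f}

/-- Non-decreasing finite environment `{(K_t, π_t)}_{t ≥ 1}`. -/
def NonDecEnv (K : ℕ → V → V → ℝ) (π : ℕ → V → ℝ) : Prop :=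
  (∀ t, 1 ≤ t → IsMarkov (K t)) ∧
  (∀ t, 1 ≤ t → ∀ x, 0 < π t x) ∧
  (∀ t, 1 ≤ t → Summable (π t)) ∧
  (∀ t, 1 ≤ t → ∀ y, HasSum (fun x => π t x * K t x y) (π t y)) ∧
  (∀ t, 1 ≤ t → ∀ x, π t x ≤ π (t + 1) x)

/-- `K_{s,t} f = K_{s+1} (K_{s+2} ( ⋯ (K_t f)))`. -/
def Kst (K : ℕ → V → V → ℝ) (s t : ℕ) (f : V → ℝ) : V → ℝ :=
  (List.range (t - s)).foldr (fun i g => act (K (s + 1 + i)) g) f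

/-- Dirac mass at `x`. -/
def delta (x : V) : V → ℝ := fun y => if y = x then (1:ℝ) else 0

/-- The law `μ K_1 ⋯ K_t` of the chain at time `t` with initial law `μ`. -/
def law (K : ℕ → V → V → ℝ) (t : ℕ) (μ : V → ℝ) : V → ℝ :=
  (List.range t).foldl (fun ν i => actMeas (K (i + 1)) ν) μ

/-- Total variation distance. -/
def dTV (μ ν : V → ℝ) : ℝ := (1 / 2) * ∑' x, |μ x - ν x|

end

noncomputable section
variable {V : Type*}

set_option maxHeartbeats 1000000 in
-- abs L1 from L2
lemma sumL1_of_L2 {p f : V → ℝ} (hp0 : ∀ x, 0 ≤ p x) (hps : Summable p)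
    (hf : Summable fun x => p x * f x ^ 2) : Summable fun x => p x * |f x| := by
  refine Summable.of_nonneg_of_le (fun x => mul_nonneg (hp0 x) (abs_nonneg _)) (fun x => ?_)
    ((hps.add hf).div_const 2)
  have h : |f x| ≤ (1 + f x ^ 2) / 2 := by nlinarith [sq_nonneg (|f x| - 1), sq_abs (f x)]
  have := mul_le_mul_of_nonneg_left h (hp0 x)
  nlinarith [hp0 x]

lemma sumL1_signed {p f : V → ℝ} (hp0 : ∀ x, 0 ≤ p x) (hps : Summable p)
    (hf : Summable fun x => p x * f x ^ 2) : Summable fun x => p x * f x := by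
  apply Summable.of_abs
  apply (sumL1_of_L2 hp0 hps hf).congr
  intro x; rw [abs_mul, abs_of_nonneg (hp0 x)]

-- Cauchy-Schwarz for tsums
lemma tsum_cs {w f : V → ℝ} (hw0 : ∀ x, 0 ≤ w x) (hw : Summable w)
    (h2 : Summable fun x => w x * f x ^ 2) :
    (∑' x, w x * f x) ^ 2 ≤ (∑' x, w x) * ∑' x, w x * f x ^ 2 := by
  have hL1 := sumL1_signed hw0 hw h2
  have ht : Tendsto (fun s : Finset V => (∑ x ∈ s, w x * f x) ^ 2) atTop
      (nhds ((∑' x, w x * f x) ^ 2)) := hL1.hasSum.pow 2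
  refine le_of_tendsto' ht fun s => ?_
  have key : (∑ x ∈ s, w x * f x) ^ 2 ≤ (∑ x ∈ s, w x) * ∑ x ∈ s, w x * f x ^ 2 := by
    have := Finset.sum_mul_sq_le_sq_mul_sq s (fun x => Real.sqrt (w x))
      (fun x => Real.sqrt (w x) * f x)
    calc (∑ x ∈ s, w x * f x) ^ 2
        = (∑ x ∈ s, Real.sqrt (w x) * (Real.sqrt (w x) * f x)) ^ 2 := by
          congr 1; apply Finset.sum_congr rfl; intro x _
          rw [← mul_assoc, Real.mul_self_sqrt (hw0 x)]
      _ ≤ (∑ x ∈ s, Real.sqrt (w x) ^ 2) * ∑ x ∈ s, (Real.sqrt (w x) * f x) ^ 2 := this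
      _ = (∑ x ∈ s, w x) * ∑ x ∈ s, w x * f x ^ 2 := by
          congr 1 <;> apply Finset.sum_congr rfl <;> intro x _
          · exact Real.sq_sqrt (hw0 x)
          · rw [mul_pow, Real.sq_sqrt (hw0 x)]
  refine key.trans (mul_le_mul (Summable.sum_le_tsum s (fun x _ => hw0 x) hw)
    (Summable.sum_le_tsum s (fun x _ => mul_nonneg (hw0 x) (sq_nonneg _)) h2)
    (Finset.sum_nonneg fun x _ => mul_nonneg (hw0 x) (sq_nonneg _))
    (tsum_nonneg fun x => hw0 x))


-- variance expansion around an arbitrary point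
lemma var_expand {p f : V → ℝ} (hp0 : ∀ x, 0 ≤ p x) (hp1 : HasSum p 1)
    (hf : MemL2 p f) (c : ℝ) :
    ∑' x, p x * (f x - c) ^ 2 = var p f + (c - integral p f) ^ 2 := by
  have hps : Summable p := hp1.summable
  have hL1 : Summable fun x => p x * f x := sumL1_signed hp0 hps hf
  have h1 : ∀ x, p x * (f x - c) ^ 2
      = (p x * f x ^ 2 - (2 * c) * (p x * f x)) + c ^ 2 * p x := by intro x; ring
  rw [tsum_congr h1, Summable.tsum_add (hf.sub (hL1.mul_left _)) ((hps.mul_left _)),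
    Summable.tsum_sub hf (hL1.mul_left _), tsum_mul_left, tsum_mul_left, hp1.tsum_eq]
  simp only [var, integral]
  ring

lemma var_nonneg' {p f : V → ℝ} (hp0 : ∀ x, 0 ≤ p x) (hp1 : HasSum p 1)
    (hf : MemL2 p f) : 0 ≤ var p f := by
  have := tsum_cs hp0 hp1.summable hf
  rw [hp1.tsum_eq, one_mul] at this
  simp only [var]; linarith

lemma var_le_expand {p f : V → ℝ} (hp0 : ∀ x, 0 ≤ p x) (hp1 : HasSum p 1)
    (hf : MemL2 p f) (c : ℝ) :
    var p f ≤ ∑' x, p x * (f x - c) ^ 2 := by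
  rw [var_expand hp0 hp1 hf c]; nlinarith [sq_nonneg (c - integral p f)]

section Kernel

variable {p : V → ℝ} {K : V → V → ℝ} {f : V → ℝ}

lemma ker_prod_summable_of (hp0 : ∀ x, 0 < p x)
    (hinv : ∀ y, HasSum (fun x => p x * K x y) (p y))
    (hK0 : ∀ x y, 0 ≤ K x y) {g : V → ℝ} (hg0 : ∀ y, 0 ≤ g y)
    (hg : Summable fun y => p y * g y) :
    Summable fun q : V × V => p q.1 * K q.1 q.2 * g q.2 := by
  have h0 : ∀ q : V × V, 0 ≤ p q.2 * K q.2 q.1 * g q.1 := fun q =>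
    mul_nonneg (mul_nonneg (hp0 _).le (hK0 _ _)) (hg0 _)
  have hswap : Summable fun q : V × V => p q.2 * K q.2 q.1 * g q.1 := by
    rw [summable_prod_of_nonneg h0]
    constructor
    · intro y
      exact ((hinv y).summable.mul_right (g y)).congr (fun z => by ring)
    · refine hg.congr fun y => ?_
      have : (fun z => p z * K z y * g y) = fun z => (p z * K z y) * g y := rfl
      rw [this, tsum_mul_right, (hinv y).tsum_eq]
  exact hswap.prod_symm

lemma summable_marginals {A B : Type*} {F : A × B → ℝ} (h0 : ∀ q, 0 ≤ F q) (hF : Summable F) :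
    (∀ x, Summable fun y => F (x, y)) ∧ Summable fun x => ∑' y, F (x, y) :=
  (summable_prod_of_nonneg h0).1 hF

lemma ker_row_summable (hp0 : ∀ x, 0 < p x)
    (hinv : ∀ y, HasSum (fun x => p x * K x y) (p y))
    (hK0 : ∀ x y, 0 ≤ K x y) (hf : MemL2 p f) (z : V) :
    Summable fun y => K z y * f y ^ 2 := by
  have hprod : Summable fun q : V × V => p q.1 * K q.1 q.2 * f q.2 ^ 2 :=
    ker_prod_summable_of hp0 hinv hK0 (fun y => sq_nonneg (f y)) hf
  have h := (summable_marginals (fun q =>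
      mul_nonneg (mul_nonneg (hp0 _).le (hK0 _ _)) (sq_nonneg _)) hprod).1 z
  exact (summable_mul_left_iff (a := p z) (ne_of_gt (hp0 z))).1
    (h.congr fun y => by ring)

lemma ker_S2_summable (hp0 : ∀ x, 0 < p x)
    (hinv : ∀ y, HasSum (fun x => p x * K x y) (p y))
    (hK0 : ∀ x y, 0 ≤ K x y) (hf : MemL2 p f) :
    Summable fun z => p z * ∑' y, K z y * f y ^ 2 := by
  have hprod : Summable fun q : V × V => p q.1 * K q.1 q.2 * f q.2 ^ 2 :=
    ker_prod_summable_of hp0 hinv hK0 (fun y => sq_nonneg (f y)) hf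
  have h := (summable_marginals (fun q =>
      mul_nonneg (mul_nonneg (hp0 _).le (hK0 _ _)) (sq_nonneg _)) hprod).2
  refine h.congr fun z => ?_
  rw [show (fun y => p z * K z y * f y ^ 2) = fun y => p z * (K z y * f y ^ 2) by
    funext y; ring, tsum_mul_left]

lemma ker_S2_tsum (hp0 : ∀ x, 0 < p x)
    (hinv : ∀ y, HasSum (fun x => p x * K x y) (p y))
    (hK0 : ∀ x y, 0 ≤ K x y) (hf : MemL2 p f) :
    ∑' z, p z * ∑' y, K z y * f y ^ 2 = ∑' x, p x * f x ^ 2 := by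
  have hU : Summable (Function.uncurry fun z y => p z * K z y * f y ^ 2) :=
    ker_prod_summable_of hp0 hinv hK0 (fun y => sq_nonneg (f y)) hf
  have hrow : ∀ z, Summable fun y => p z * K z y * f y ^ 2 := fun z => hU.prod_factor z
  have hcol : ∀ y, Summable fun z => p z * K z y * f y ^ 2 := fun y =>
    ((hinv y).summable.mul_right (f y ^ 2)).congr (fun z => by ring)
  have hcomm := Summable.tsum_comm' hU hrow hcol
  calc ∑' z, p z * ∑' y, K z y * f y ^ 2
      = ∑' z, ∑' y, p z * K z y * f y ^ 2 := by
        refine tsum_congr fun z => ?_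
        rw [show (fun y => p z * K z y * f y ^ 2) = fun y => p z * (K z y * f y ^ 2) by
          funext y; ring, tsum_mul_left]
    _ = ∑' y, ∑' z, p z * K z y * f y ^ 2 := hcomm.symm
    _ = ∑' x, p x * f x ^ 2 := by
        refine tsum_congr fun y => ?_
        rw [show (fun z => p z * K z y * f y ^ 2) = fun z => (p z * K z y) * f y ^ 2 from
          rfl, tsum_mul_right, (hinv y).tsum_eq]

lemma ker_rowL1 (hp0 : ∀ x, 0 < p x)
    (hinv : ∀ y, HasSum (fun x => p x * K x y) (p y))
    (hK : IsMarkov K) (hf : MemL2 p f) (z : V) :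
    Summable fun y => K z y * f y :=
  sumL1_signed (hK.1 z) (hK.2.2 z).summable (ker_row_summable hp0 hinv hK.1 hf z)

lemma act_sq_le (hp0 : ∀ x, 0 < p x)
    (hinv : ∀ y, HasSum (fun x => p x * K x y) (p y))
    (hK : IsMarkov K) (hf : MemL2 p f) (z : V) :
    (act K f z) ^ 2 ≤ ∑' y, K z y * f y ^ 2 := by
  have := tsum_cs (hK.1 z) (hK.2.2 z).summable (ker_row_summable hp0 hinv hK.1 hf z)
  rw [(hK.2.2 z).tsum_eq, one_mul] at this
  exact this

lemma ker_actL2 (hp0 : ∀ x, 0 < p x)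
    (hinv : ∀ y, HasSum (fun x => p x * K x y) (p y))
    (hK : IsMarkov K) (hf : MemL2 p f) : MemL2 p (act K f) := by
  refine Summable.of_nonneg_of_le (fun z => mul_nonneg (hp0 z).le (sq_nonneg _))
    (fun z => mul_le_mul_of_nonneg_left (act_sq_le hp0 hinv hK hf z) (hp0 z).le)
    (ker_S2_summable hp0 hinv hK.1 hf)

lemma ker_mean (hp0 : ∀ x, 0 < p x) (hps : Summable p)
    (hinv : ∀ y, HasSum (fun x => p x * K x y) (p y))
    (hK : IsMarkov K) (hf : MemL2 p f) :
    integral p (act K f) = integral p f := by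
  have habs : Summable (Function.uncurry fun z y => p z * K z y * |f y|) :=
    ker_prod_summable_of hp0 hinv hK.1 (fun y => abs_nonneg (f y))
      (sumL1_of_L2 (fun x => (hp0 x).le) hps hf)
  have hU : Summable (Function.uncurry fun z y => p z * K z y * f y) := by
    apply Summable.of_abs
    refine habs.congr fun q => ?_
    simp only [Function.uncurry]
    rw [abs_mul, abs_of_nonneg (mul_nonneg (hp0 _).le (hK.1 _ _))]
  have hrow : ∀ z, Summable fun y => p z * K z y * f y := fun z => hU.prod_factor z
  have hcol : ∀ y, Summable fun z => p z * K z y * f y := fun y =>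
    ((hinv y).summable.mul_right (f y)).congr (fun z => by ring)
  have hcomm := Summable.tsum_comm' hU hrow hcol
  calc integral p (act K f)
      = ∑' z, ∑' y, p z * K z y * f y := by
        refine tsum_congr fun z => ?_
        simp only [act]
        rw [show (fun y => p z * K z y * f y) = fun y => p z * (K z y * f y) by
          funext y; ring, tsum_mul_left]
    _ = ∑' y, ∑' z, p z * K z y * f y := hcomm.symm
    _ = integral p f := by
        refine tsum_congr fun y => ?_
        rw [show (fun z => p z * K z y * f y) = fun z => (p z * K z y) * f y from rfl,
          tsum_mul_right, (hinv y).tsum_eq]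

end Kernel

set_option maxHeartbeats 2000000
section Dirichlet

variable {p : V → ℝ} {K : V → V → ℝ} {f : V → ℝ}

lemma dirichlet_eq (hp0 : ∀ x, 0 < p x) (hp1 : HasSum p 1) (hK : IsMarkov K)
    (hinv : ∀ y, HasSum (fun x => p x * K x y) (p y)) (hf : MemL2 p f) :
    dirichlet (Qker p K) p f = (∑' x, p x * f x ^ 2) - ∑' x, p x * (act K f x) ^ 2 := by
  have hK0 := hK.1
  have hKs : ∀ z, Summable (K z) := fun z => (hK.2.2 z).summable
  have hrow := ker_row_summable hp0 hinv hK0 hf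
  have hrowL1 := ker_rowL1 hp0 hinv hK hf
  -- F1 : rewrite the Q-term as a sum over z
  have hQ : ∀ x y, (f x - f y) ^ 2 * p x * Qker p K x y
      = ∑' z, p z * (K z x * K z y * (f x - f y) ^ 2) := by
    intro x y
    have h1 : Qker p K x y = ∑' z, adjKer p K x z * K z y := rfl
    rw [h1, ← tsum_mul_left]
    refine tsum_congr fun z => ?_
    have hx : p x ≠ 0 := (hp0 x).ne'
    simp only [adjKer]
    field_simp
  -- F2 : per-z summability on the product
  have hzprod : ∀ z, Summable fun q : V × V => K z q.1 * K z q.2 * (f q.1 - f q.2) ^ 2 := by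
    intro z
    have hb1 : Summable fun q : V × V => (K z q.1 * f q.1 ^ 2) * K z q.2 :=
      Summable.mul_of_nonneg (hrow z) (hKs z)
        (fun x => mul_nonneg (hK0 _ _) (sq_nonneg _)) (fun y => hK0 _ _)
    have hb2 : Summable fun q : V × V => K z q.1 * (K z q.2 * f q.2 ^ 2) :=
      Summable.mul_of_nonneg (hKs z) (hrow z)
        (fun x => hK0 _ _) (fun y => mul_nonneg (hK0 _ _) (sq_nonneg _))
    refine Summable.of_nonneg_of_le
      (fun q => mul_nonneg (mul_nonneg (hK0 _ _) (hK0 _ _)) (sq_nonneg _))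
      (fun q => ?_) (((hb1.add hb2)).mul_left 2)
    have h2 : (f q.1 - f q.2) ^ 2 ≤ 2 * f q.1 ^ 2 + 2 * f q.2 ^ 2 := by nlinarith [sq_nonneg (f q.1 + f q.2)]
    have hkk : 0 ≤ K z q.1 * K z q.2 := mul_nonneg (hK0 _ _) (hK0 _ _)
    calc K z q.1 * K z q.2 * (f q.1 - f q.2) ^ 2
        ≤ K z q.1 * K z q.2 * (2 * f q.1 ^ 2 + 2 * f q.2 ^ 2) :=
          mul_le_mul_of_nonneg_left h2 hkk
      _ = 2 * ((K z q.1 * f q.1 ^ 2) * K z q.2 + K z q.1 * (K z q.2 * f q.2 ^ 2)) := by ring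
  -- F4 : value of the per-z product sum
  have hzval : ∀ z, ∑' q : V × V, K z q.1 * K z q.2 * (f q.1 - f q.2) ^ 2
      = 2 * ((∑' y, K z y * f y ^ 2) - (act K f z) ^ 2) := by
    intro z
    have hmarg := (summable_marginals
      (fun q => mul_nonneg (mul_nonneg (hK0 _ _) (hK0 _ _)) (sq_nonneg _)) (hzprod z)).1
    rw [Summable.tsum_prod' (hzprod z) hmarg]
    have hinner : ∀ x, ∑' y, K z x * K z y * (f x - f y) ^ 2
        = K z x * (f x ^ 2 - 2 * f x * act K f z + (∑' y, K z y * f y ^ 2)) := by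
      intro x
      have h1 : (fun y => K z x * K z y * (f x - f y) ^ 2)
          = fun y => K z x * ((f x ^ 2 * K z y - (2 * f x) * (K z y * f y)) + K z y * f y ^ 2) := by
        funext y; ring
      rw [h1, tsum_mul_left]
      congr 1
      rw [Summable.tsum_add (((hKs z).mul_left _).sub ((hrowL1 z).mul_left _)) (hrow z),
        Summable.tsum_sub ((hKs z).mul_left _) ((hrowL1 z).mul_left _),
        tsum_mul_left, tsum_mul_left, (hK.2.2 z).tsum_eq]
      simp only [act]
      ring
    rw [tsum_congr hinner]
    have h2 : (fun x => K z x * (f x ^ 2 - 2 * f x * act K f z + (∑' y, K z y * f y ^ 2)))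
        = fun x => ((K z x * f x ^ 2) - (2 * act K f z) * (K z x * f x))
            + (∑' y, K z y * f y ^ 2) * K z x := by
      funext x; ring
    rw [h2, Summable.tsum_add ((hrow z).sub ((hrowL1 z).mul_left _)) ((hKs z).mul_left _),
      Summable.tsum_sub (hrow z) ((hrowL1 z).mul_left _), tsum_mul_left, tsum_mul_left,
      (hK.2.2 z).tsum_eq]
    simp only [act]
    ring
  -- F5 : global summability of the triple family
  have hsq : ∀ z, (act K f z) ^ 2 ≤ ∑' y, K z y * f y ^ 2 := act_sq_le hp0 hinv hK hf
  have hH : Summable (Function.uncurry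
      fun z (q : V × V) => p z * (K z q.1 * K z q.2 * (f q.1 - f q.2) ^ 2)) := by
    have huc : Function.uncurry
        (fun z (q : V × V) => p z * (K z q.1 * K z q.2 * (f q.1 - f q.2) ^ 2))
        = fun r : V × (V × V) =>
          p r.1 * (K r.1 r.2.1 * K r.1 r.2.2 * (f r.2.1 - f r.2.2) ^ 2) := rfl
    rw [huc]
    rw [summable_prod_of_nonneg (fun r => mul_nonneg (hp0 _).le
      (mul_nonneg (mul_nonneg (hK0 _ _) (hK0 _ _)) (sq_nonneg _)))]
    constructor
    · intro z
      exact (hzprod z).mul_left (p z)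
    · have hval : ∀ z, ∑' q : V × V, p z * (K z q.1 * K z q.2 * (f q.1 - f q.2) ^ 2)
          = p z * (2 * ((∑' y, K z y * f y ^ 2) - (act K f z) ^ 2)) := by
        intro z; rw [tsum_mul_left, hzval z]
      refine Summable.congr ?_ (fun z => (hval z).symm)
      refine Summable.of_nonneg_of_le (fun z => ?_) (fun z => ?_)
        ((ker_S2_summable hp0 hinv hK0 hf).mul_left 2)
      · have := hsq z
        have := (hp0 z).le
        nlinarith
      · have := hsq z
        have h0 : 0 ≤ (act K f z) ^ 2 := sq_nonneg _
        have := (hp0 z).le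
        nlinarith
  -- F6 : swap the z-sum with the pair-sum
  have hswap : Summable fun r : (V × V) × V =>
      p r.2 * (K r.2 r.1.1 * K r.2 r.1.2 * (f r.1.1 - f r.1.2) ^ 2) := hH.prod_symm
  have hDsum : Summable fun q : V × V =>
      ∑' z, p z * (K z q.1 * K z q.2 * (f q.1 - f q.2) ^ 2) :=
    (summable_marginals (fun r => mul_nonneg (hp0 _).le
      (mul_nonneg (mul_nonneg (hK0 _ _) (hK0 _ _)) (sq_nonneg _))) hswap).2
  have hcolz : ∀ q : V × V, Summable fun z =>
      p z * (K z q.1 * K z q.2 * (f q.1 - f q.2) ^ 2) :=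
    (summable_marginals (fun r => mul_nonneg (hp0 _).le
      (mul_nonneg (mul_nonneg (hK0 _ _) (hK0 _ _)) (sq_nonneg _))) hswap).1
  have hcomm : ∑' q : V × V, ∑' z, p z * (K z q.1 * K z q.2 * (f q.1 - f q.2) ^ 2)
      = ∑' z, ∑' q : V × V, p z * (K z q.1 * K z q.2 * (f q.1 - f q.2) ^ 2) :=
    Summable.tsum_comm' hH (fun z => (hzprod z).mul_left (p z)) hcolz
  -- assemble
  have hDrow : ∀ x, Summable fun y =>
      ∑' z, p z * (K z x * K z y * (f x - f y) ^ 2) :=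
    (summable_marginals (fun q => tsum_nonneg fun z => mul_nonneg (hp0 _).le
      (mul_nonneg (mul_nonneg (hK0 _ _) (hK0 _ _)) (sq_nonneg _))) hDsum).1
  have key : ∑' x, ∑' y, (f x - f y) ^ 2 * p x * Qker p K x y
      = ∑' z, p z * (2 * ((∑' y, K z y * f y ^ 2) - (act K f z) ^ 2)) := by
    calc ∑' x, ∑' y, (f x - f y) ^ 2 * p x * Qker p K x y
        = ∑' x, ∑' y, ∑' z, p z * (K z x * K z y * (f x - f y) ^ 2) := by
          exact tsum_congr fun x => tsum_congr fun y => hQ x y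
      _ = ∑' q : V × V, ∑' z, p z * (K z q.1 * K z q.2 * (f q.1 - f q.2) ^ 2) :=
          (Summable.tsum_prod' hDsum hDrow).symm
      _ = ∑' z, ∑' q : V × V, p z * (K z q.1 * K z q.2 * (f q.1 - f q.2) ^ 2) := hcomm
      _ = ∑' z, p z * (2 * ((∑' y, K z y * f y ^ 2) - (act K f z) ^ 2)) := by
          refine tsum_congr fun z => ?_
          rw [tsum_mul_left, hzval z]
  simp only [dirichlet]
  rw [key]
  have hsplit : (fun z => p z * (2 * ((∑' y, K z y * f y ^ 2) - (act K f z) ^ 2)))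
      = fun z => 2 * ((p z * ∑' y, K z y * f y ^ 2) - p z * (act K f z) ^ 2) := by
    funext z; ring
  rw [hsplit, tsum_mul_left,
    Summable.tsum_sub (ker_S2_summable hp0 hinv hK0 hf) (ker_actL2 hp0 hinv hK hf),
    ker_S2_tsum hp0 hinv hK0 hf]
  ring

end Dirichlet

section Poincare

variable {p : V → ℝ} {K : V → V → ℝ} {f : V → ℝ}

lemma Qker_nonneg (hp0 : ∀ x, 0 < p x) (hK0 : ∀ x y, 0 ≤ K x y) (x y : V) :
    0 ≤ Qker p K x y := by
  refine tsum_nonneg fun z => mul_nonneg ?_ (hK0 _ _)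
  exact div_nonneg (mul_nonneg (hp0 _).le (hK0 _ _)) (hp0 _).le

lemma dirichlet_nonneg (hp0 : ∀ x, 0 < p x) (hK0 : ∀ x y, 0 ≤ K x y) (g : V → ℝ) :
    0 ≤ dirichlet (Qker p K) p g := by
  refine mul_nonneg (by norm_num) (tsum_nonneg fun x => tsum_nonneg fun y => ?_)
  exact mul_nonneg (mul_nonneg (sq_nonneg _) (hp0 _).le) (Qker_nonneg hp0 hK0 x y)

lemma poincare_zero_mem (hp0 : ∀ x, 0 < p x) (hK0 : ∀ x y, 0 ≤ K x y) :
    (0:ℝ) ∈ {γ : ℝ | 0 ≤ γ ∧ ∀ g : V → ℝ, MemL2 p g →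
      γ * var p g ≤ dirichlet (Qker p K) p g} := by
  refine ⟨le_refl 0, fun g _ => ?_⟩
  rw [zero_mul]
  exact dirichlet_nonneg hp0 hK0 g

lemma poincare_closed (hp0 : ∀ x, 0 < p x) :
    IsClosed {γ : ℝ | 0 ≤ γ ∧ ∀ g : V → ℝ, MemL2 p g →
      γ * var p g ≤ dirichlet (Qker p K) p g} := by
  have h : {γ : ℝ | 0 ≤ γ ∧ ∀ g : V → ℝ, MemL2 p g →
      γ * var p g ≤ dirichlet (Qker p K) p g}
      = Set.Ici 0 ∩ ⋂ (g : V → ℝ), ⋂ (_ : MemL2 p g),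
        {γ : ℝ | γ * var p g ≤ dirichlet (Qker p K) p g} := by
    ext γ
    simp [Set.mem_iInter, Set.mem_Ici]
  rw [h]
  exact isClosed_Ici.inter (isClosed_iInter fun g => isClosed_iInter fun _ =>
    isClosed_le (continuous_id.mul continuous_const) continuous_const)

lemma poincare_apply (hp0 : ∀ x, 0 < p x) (hK0 : ∀ x y, 0 ≤ K x y) (hf : MemL2 p f) :
    poincareConst (Qker p K) p * var p f ≤ dirichlet (Qker p K) p f := by
  simp only [poincareConst]
  by_cases hb : BddAbove {γ : ℝ | 0 ≤ γ ∧ ∀ g : V → ℝ, MemL2 p g →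
      γ * var p g ≤ dirichlet (Qker p K) p g}
  · have hmem := (poincare_closed hp0).csSup_mem ⟨0, poincare_zero_mem hp0 hK0⟩ hb
    exact hmem.2 f hf
  · rw [Real.sSup_of_not_bddAbove hb, zero_mul]
    exact dirichlet_nonneg hp0 hK0 f

lemma poincare_le_one (hp0 : ∀ x, 0 < p x) (hp1 : HasSum p 1) (hK : IsMarkov K)
    (hinv : ∀ y, HasSum (fun x => p x * K x y) (p y)) :
    poincareConst (Qker p K) p ≤ 1 := by
  have hK0 := hK.1
  simp only [poincareConst]
  by_cases hnt : ∃ a b : V, a ≠ b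
  · obtain ⟨a, b, hab⟩ := hnt
    have hδ : MemL2 p (delta a) := by
      refine summable_of_ne_finset_zero (s := {a}) fun x hx => ?_
      simp only [Finset.mem_singleton] at hx
      simp [delta, hx]
    have hval2 : ∑' x, p x * delta a x ^ 2 = p a := by
      rw [tsum_eq_single a (fun x hx => by simp [delta, hx])]
      simp [delta]
    have hval1 : ∑' x, p x * delta a x = p a := by
      rw [tsum_eq_single a (fun x hx => by simp [delta, hx])]
      simp [delta]
    have hvar : var p (delta a) = p a - p a ^ 2 := by
      simp only [var, hval2, hval1]
    have hpa1 : p a < 1 := by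
      have hsum2 : ∑ x ∈ ({a, b} : Finset V), p x ≤ 1 := by
        rw [← hp1.tsum_eq]
        exact Summable.sum_le_tsum _ (fun x _ => (hp0 x).le) hp1.summable
      rw [Finset.sum_insert (by simpa using hab), Finset.sum_singleton] at hsum2
      have := hp0 b
      linarith
    have hvarpos : 0 < var p (delta a) := by
      rw [hvar]; nlinarith [hp0 a]
    have hdle : dirichlet (Qker p K) p (delta a) ≤ var p (delta a) := by
      rw [dirichlet_eq hp0 hp1 hK hinv hδ]
      have hA := ker_actL2 hp0 hinv hK hδ
      have hcs := tsum_cs (fun x => (hp0 x).le) hp1.summable hA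
      rw [hp1.tsum_eq, one_mul] at hcs
      have hmean := ker_mean hp0 hp1.summable hinv hK hδ
      simp only [integral] at hmean
      simp only [var]
      rw [← hmean] at *
      linarith
    refine csSup_le ⟨0, poincare_zero_mem hp0 hK0⟩ fun γ' hγ' => ?_
    have h := hγ'.2 (delta a) hδ
    nlinarith [hdle, hvarpos]
  · push_neg at hnt
    cases isEmpty_or_nonempty V with
    | inl hE =>
      exact absurd (hp1.unique hasSum_empty) one_ne_zero
    | inr hNE =>
      set a := Classical.arbitrary V with ha
      have hpa : p a = 1 := by
        rw [← hp1.tsum_eq, tsum_eq_single a (fun x hx => absurd (hnt x a) hx)]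
      have hvz : ∀ g : V → ℝ, var p g = 0 := by
        intro g
        simp only [var]
        rw [tsum_eq_single a (fun x hx => absurd (hnt x a) hx),
          tsum_eq_single a (fun x hx => absurd (hnt x a) hx), hpa]
        ring
      have hub : ¬ BddAbove {γ : ℝ | 0 ≤ γ ∧ ∀ g : V → ℝ, MemL2 p g →
          γ * var p g ≤ dirichlet (Qker p K) p g} := by
        rintro ⟨M, hM⟩
        have hmem : max M 0 + 1 ∈ {γ : ℝ | 0 ≤ γ ∧ ∀ g : V → ℝ, MemL2 p g →
            γ * var p g ≤ dirichlet (Qker p K) p g} := by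
          refine ⟨by positivity, fun g _ => ?_⟩
          rw [hvz g, mul_zero]
          exact dirichlet_nonneg hp0 hK0 g
        have := hM hmem
        have := le_max_left M 0
        linarith
      rw [Real.sSup_of_not_bddAbove hub]
      norm_num

lemma var_step (hp0 : ∀ x, 0 < p x) (hp1 : HasSum p 1) (hK : IsMarkov K)
    (hinv : ∀ y, HasSum (fun x => p x * K x y) (p y)) (hf : MemL2 p f) :
    var p (act K f) ≤ (1 - poincareConst (Qker p K) p) * var p f := by
  have hpoin := poincare_apply hp0 hK.1 hf
  have hd := dirichlet_eq hp0 hp1 hK hinv hf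
  have hmean := ker_mean hp0 hp1.summable hinv hK hf
  simp only [integral] at hmean
  simp only [var] at *
  rw [hmean]
  nlinarith [hpoin, hd]

end Poincare

section Mono

lemma mass_pos [Nonempty V] {π : V → ℝ} (hpos : ∀ x, 0 < π x) (hs : Summable π) :
    0 < mass π :=
  Summable.tsum_pos hs (fun i => (hpos i).le) (Classical.arbitrary V) (hpos _)

lemma nmz_hasSum {π : V → ℝ} (hs : Summable π) (h : 0 < mass π) :
    HasSum (nmz π) 1 := by
  have h2 := hs.hasSum.div_const (mass π)
  rw [show (∑' b : V, π b) = mass π from rfl, div_self h.ne'] at h2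
  exact h2

lemma nmz_pos {π : V → ℝ} (hpos : ∀ x, 0 < π x) (h : 0 < mass π) (x : V) :
    0 < nmz π x := div_pos (hpos x) h

lemma memL2_nmz {π : V → ℝ} {f : V → ℝ} (h : 0 < mass π) :
    MemL2 (nmz π) f ↔ MemL2 π f := by
  simp only [MemL2]
  rw [show (fun x => nmz π x * f x ^ 2) = fun x => (mass π)⁻¹ * (π x * f x ^ 2) from
    funext fun x => by simp only [nmz]; ring]
  exact summable_mul_left_iff (inv_ne_zero h.ne')

lemma memL2_mono {π₁ π₂ : V → ℝ} {f : V → ℝ} (h1 : ∀ x, 0 ≤ π₁ x)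
    (hle : ∀ x, π₁ x ≤ π₂ x) (hf : MemL2 π₂ f) : MemL2 π₁ f :=
  Summable.of_nonneg_of_le (fun x => mul_nonneg (h1 x) (sq_nonneg _))
    (fun x => mul_le_mul_of_nonneg_right (hle x) (sq_nonneg _)) hf

lemma var_mono [Nonempty V] {π₁ π₂ : V → ℝ} {g : V → ℝ}
    (h1pos : ∀ x, 0 < π₁ x) (h2pos : ∀ x, 0 < π₂ x)
    (h1s : Summable π₁) (h2s : Summable π₂)
    (hle : ∀ x, π₁ x ≤ π₂ x) (hg : MemL2 π₂ g) :
    var (nmz π₁) g ≤ mass π₂ / mass π₁ * var (nmz π₂) g := by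
  have hm1 := mass_pos h1pos h1s
  have hm2 := mass_pos h2pos h2s
  have hg2 : MemL2 (nmz π₂) g := (memL2_nmz hm2).2 hg
  have hg1' : MemL2 π₁ g := memL2_mono (fun x => (h1pos x).le) hle hg
  have hg1 : MemL2 (nmz π₁) g := (memL2_nmz hm1).2 hg1'
  set c := integral (nmz π₂) g with hc
  have h1 : var (nmz π₁) g ≤ ∑' x, nmz π₁ x * (g x - c) ^ 2 :=
    var_le_expand (fun x => (nmz_pos h1pos hm1 x).le) (nmz_hasSum h1s hm1) hg1 c
  have heq1 : ∑' x, nmz π₁ x * (g x - c) ^ 2 = (∑' x, π₁ x * (g x - c) ^ 2) / mass π₁ := by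
    rw [show (fun x => nmz π₁ x * (g x - c) ^ 2)
      = fun x => (π₁ x * (g x - c) ^ 2) / mass π₁ from funext fun x => by
        simp only [nmz]; ring, tsum_div_const]
  have hS2 : Summable fun x => π₂ x * (g x - c) ^ 2 := by
    refine Summable.of_nonneg_of_le
      (fun x => mul_nonneg (h2pos x).le (sq_nonneg _)) (fun x => ?_)
      ((hg.mul_left 2).add (h2s.mul_left (2 * c ^ 2)))
    have hb : (g x - c) ^ 2 ≤ 2 * g x ^ 2 + 2 * c ^ 2 := by nlinarith [sq_nonneg (g x + c)]
    have := mul_le_mul_of_nonneg_left hb (h2pos x).le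
    nlinarith [this]
  have hS1 : Summable fun x => π₁ x * (g x - c) ^ 2 :=
    Summable.of_nonneg_of_le (fun x => mul_nonneg (h1pos x).le (sq_nonneg _))
      (fun x => mul_le_mul_of_nonneg_right (hle x) (sq_nonneg _)) hS2
  have hle2 : ∑' x, π₁ x * (g x - c) ^ 2 ≤ ∑' x, π₂ x * (g x - c) ^ 2 :=
    Summable.tsum_le_tsum (fun x => mul_le_mul_of_nonneg_right (hle x) (sq_nonneg _)) hS1 hS2
  have heq2 : ∑' x, π₂ x * (g x - c) ^ 2 = mass π₂ * var (nmz π₂) g := by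
    have hexp := var_expand (fun x => (nmz_pos h2pos hm2 x).le) (nmz_hasSum h2s hm2) hg2 c
    rw [← hc, sub_self] at hexp
    have heq2' : ∑' x, nmz π₂ x * (g x - c) ^ 2
        = (∑' x, π₂ x * (g x - c) ^ 2) / mass π₂ := by
      rw [show (fun x => nmz π₂ x * (g x - c) ^ 2)
        = fun x => (π₂ x * (g x - c) ^ 2) / mass π₂ from funext fun x => by
          simp only [nmz]; ring, tsum_div_const]
    rw [heq2'] at hexp
    have : (∑' x, π₂ x * (g x - c) ^ 2) / mass π₂ = var (nmz π₂) g := by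
      rw [hexp]; ring
    field_simp at this ⊢
    linarith [this]
  calc var (nmz π₁) g ≤ ∑' x, nmz π₁ x * (g x - c) ^ 2 := h1
    _ = (∑' x, π₁ x * (g x - c) ^ 2) / mass π₁ := heq1
    _ ≤ (∑' x, π₂ x * (g x - c) ^ 2) / mass π₁ := by
        gcongr
    _ = mass π₂ * var (nmz π₂) g / mass π₁ := by rw [heq2]
    _ = mass π₂ / mass π₁ * var (nmz π₂) g := by ring

end Mono

section KstLemmas

lemma Kst_self (K : ℕ → V → V → ℝ) (t : ℕ) (f : V → ℝ) : Kst K t t f = f := by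
  simp [Kst, Nat.sub_self]

lemma Kst_succ (K : ℕ → V → V → ℝ) (f : V → ℝ) {s t : ℕ} (h : s < t) :
    Kst K s t f = act (K (s + 1)) (Kst K (s + 1) t f) := by
  simp only [Kst]
  rw [show t - s = (t - (s + 1)) + 1 by omega, List.range_succ_eq_map,
    List.foldr_cons, List.foldr_map]
  have hfun : (fun (x : ℕ) (y : V → ℝ) => act (K (s + 1 + Nat.succ x)) y)
      = fun (i : ℕ) (g : V → ℝ) => act (K (s + 1 + 1 + i)) g := by
    funext i g
    have hx : s + 1 + Nat.succ i = s + 1 + 1 + i := by omega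
    rw [hx]
  rw [hfun]

end KstLemmas

end

set_option maxHeartbeats 2000000 in
/-- Theorem, Poincaré contraction of the variance.
In a non-decreasing finite environment, for every `t ≥ 1` and `f ∈ ℓ²(π_t)`,
`Var_{π̃_1}(K_{0,t} f) ≤ (π_t(V)/π_1(V)) · Var_{π̃_t}(f) · ∏_{s=1}^t (1 - γ_s)`. -/
theorem stmt0 {V : Type*} [Countable V]
    (K : ℕ → V → V → ℝ) (π : ℕ → V → ℝ)
    (henv : NonDecEnv K π)
    (γ : ℕ → ℝ)
    (hγ : ∀ s, γ s = poincareConst (Qker (nmz (π s)) (K s)) (nmz (π s)))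
    (t : ℕ) (ht : 1 ≤ t) (f : V → ℝ) (hf : MemL2 (π t) f) :
    var (nmz (π 1)) (Kst K 0 t f) ≤
      (mass (π t) / mass (π 1)) * var (nmz (π t)) f *
        ∏ s ∈ Finset.Icc 1 t, (1 - γ s) := by
  obtain ⟨hKm, hpos, hsum, hinv, hmono⟩ := henv
  rcases isEmpty_or_nonempty V with hE | hNE
  · simp [var, tsum_empty]
  · -- facts about the normalized measures
    have hfacts : ∀ s, 1 ≤ s → (∀ x, 0 < nmz (π s) x) ∧ HasSum (nmz (π s)) 1 ∧
        (∀ y, HasSum (fun x => nmz (π s) x * K s x y) (nmz (π s) y)) := by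
      intro s hs
      have hm := mass_pos (hpos s hs) (hsum s hs)
      refine ⟨nmz_pos (hpos s hs) hm, nmz_hasSum (hsum s hs) hm, fun y => ?_⟩
      have h2 := (hinv s hs y).div_const (mass (π s))
      simpa only [nmz, div_mul_eq_mul_div] using h2
    -- L² propagation down the chain
    have hL2 : ∀ d s, s + d = t → 1 ≤ s →
        MemL2 (π s) (Kst K s t f) ∧ (s < t → MemL2 (π (s + 1)) (Kst K s t f)) := by
      intro d
      induction d with
      | zero =>
        intro s hst hs
        have hseq : s = t := by omega
        subst hseq
        rw [Kst_self]
        exact ⟨hf, fun h => absurd h (lt_irrefl _)⟩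
      | succ d ih =>
        intro s hst hs
        have hslt : s < t := by omega
        have hs1 : 1 ≤ s + 1 := by omega
        obtain ⟨ih1, -⟩ := ih (s + 1) (by omega) hs1
        have hm1 := mass_pos (hpos (s + 1) hs1) (hsum (s + 1) hs1)
        obtain ⟨hpn, hhn, hin⟩ := hfacts (s + 1) hs1
        have hnmzL2 : MemL2 (nmz (π (s + 1))) (Kst K (s + 1) t f) := (memL2_nmz hm1).2 ih1
        have hact : MemL2 (nmz (π (s + 1))) (act (K (s + 1)) (Kst K (s + 1) t f)) :=
          ker_actL2 hpn hin (hKm (s + 1) hs1) hnmzL2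
        have hact' : MemL2 (π (s + 1)) (Kst K s t f) := by
          rw [Kst_succ K f hslt]
          exact (memL2_nmz hm1).1 hact
        exact ⟨memL2_mono (fun x => (hpos s hs x).le) (hmono s hs) hact', fun _ => hact'⟩
    have hγfacts : ∀ s, 1 ≤ s → 0 ≤ 1 - γ s := by
      intro s hs
      rw [hγ s]
      obtain ⟨hpn, hhn, hin⟩ := hfacts s hs
      linarith [poincare_le_one hpn hhn (hKm s hs) hin]
    -- main downward induction
    have main : ∀ d s, s + d = t → 1 ≤ s →
        var (nmz (π s)) (Kst K (s - 1) t f) ≤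
          mass (π t) / mass (π s) * var (nmz (π t)) f *
            ∏ u ∈ Finset.Icc s t, (1 - γ u) := by
      intro d
      induction d with
      | zero =>
        intro s hst hs
        have hseq : s = t := by omega
        subst hseq
        obtain ⟨hpn, hhn, hin⟩ := hfacts s hs
        have hm := mass_pos (hpos s hs) (hsum s hs)
        have hg : Kst K (s - 1) s f = act (K s) f := by
          rw [Kst_succ K f (show s - 1 < s by omega), show s - 1 + 1 = s by omega,
            Kst_self]
        rw [hg, Finset.Icc_self, Finset.prod_singleton, div_self hm.ne', one_mul]
        have hstep := var_step hpn hhn (hKm s hs) hin ((memL2_nmz hm).2 hf)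
        rw [hγ s]
        linarith [hstep]
      | succ d ih =>
        intro s hst hs
        have hslt : s < t := by omega
        have hs1 : 1 ≤ s + 1 := by omega
        obtain ⟨hpn, hhn, hin⟩ := hfacts s hs
        obtain ⟨hpn1, hhn1, hin1⟩ := hfacts (s + 1) hs1
        obtain ⟨hpnt, hhnt, hint⟩ := hfacts t ht
        have hm := mass_pos (hpos s hs) (hsum s hs)
        have hm1 := mass_pos (hpos (s + 1) hs1) (hsum (s + 1) hs1)
        have hmt := mass_pos (hpos t ht) (hsum t ht)
        obtain ⟨hL2s, hL2s1⟩ := hL2 (d + 1) s hst hs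
        have hgs1 : MemL2 (π (s + 1)) (Kst K s t f) := hL2s1 hslt
        have hstep : var (nmz (π s)) (Kst K (s - 1) t f) ≤
            (1 - γ s) * var (nmz (π s)) (Kst K s t f) := by
          have hg : Kst K (s - 1) t f = act (K s) (Kst K s t f) := by
            rw [Kst_succ K f (show s - 1 < t by omega), show s - 1 + 1 = s by omega]
          rw [hg, hγ s]
          exact var_step hpn hhn (hKm s hs) hin ((memL2_nmz hm).2 hL2s)
        have hmonos : var (nmz (π s)) (Kst K s t f) ≤
            mass (π (s + 1)) / mass (π s) * var (nmz (π (s + 1))) (Kst K s t f) :=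
          var_mono (hpos s hs) (hpos (s + 1) hs1) (hsum s hs) (hsum (s + 1) hs1)
            (hmono s hs) hgs1
        have hih := ih (s + 1) (by omega) hs1
        rw [show s + 1 - 1 = s from rfl] at hih
        have h1γ := hγfacts s hs
        have hicc : Finset.Icc s t = insert s (Finset.Icc (s + 1) t) := by
          ext u
          simp only [Finset.mem_Icc, Finset.mem_insert]
          omega
        have hnot : s ∉ Finset.Icc (s + 1) t := by
          simp only [Finset.mem_Icc]
          omega
        calc var (nmz (π s)) (Kst K (s - 1) t f)
            ≤ (1 - γ s) * var (nmz (π s)) (Kst K s t f) := hstep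
          _ ≤ (1 - γ s) * (mass (π (s + 1)) / mass (π s) *
                var (nmz (π (s + 1))) (Kst K s t f)) :=
              mul_le_mul_of_nonneg_left hmonos h1γ
          _ ≤ (1 - γ s) * (mass (π (s + 1)) / mass (π s) *
                (mass (π t) / mass (π (s + 1)) * var (nmz (π t)) f *
                  ∏ u ∈ Finset.Icc (s + 1) t, (1 - γ u))) := by
              refine mul_le_mul_of_nonneg_left ?_ h1γ
              exact mul_le_mul_of_nonneg_left hih (by positivity)
          _ = mass (π t) / mass (π s) * var (nmz (π t)) f *
                ∏ u ∈ Finset.Icc s t, (1 - γ u) := by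
              rw [hicc, Finset.prod_insert hnot]
              field_simp
    have hfin := main (t - 1) 1 (by omega) le_rfl
    rw [show (1 : ℕ) - 1 = 0 from rfl] at hfin
    exact hfin
end

section
/- Let {(K_t, π_t)}_{t≥1} be a non-decreasing finite environment on a countable discrete set V. Then for every t ≥ 1 and every f ∈ ℓ²(π̃_t), ‖K_{0,t} f − π̃_1(K_{0,t} f)‖_{ℓ²(π̃_1)} ≤ sqrt((π_t(V)/π_1(V)) · ∏_{s=1}^t (1 − γ_s)) · ‖f‖_{ℓ²(π̃_t)}, where γ_s is the Poincaré constant of Q_s = K_s^* K_s (here π̃_1(K_{0,t} f) denotes the constant function with value ∑_x π̃_1(x)(K_{0,t} f)(x)). -/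
open scoped BigOperators Classical
open Filter

noncomputable section
namespace Stmt1Aux

lemma tonelli {α β : Type*} (F : α → β → ℝ) (h0 : ∀ a b, 0 ≤ F a b)
    (h1 : ∀ a, Summable (F a)) (h2 : Summable fun a => ∑' b, F a b) :
    (∀ b, Summable fun a => F a b) ∧ (Summable fun b => ∑' a, F a b) ∧
      (∑' b, ∑' a, F a b) = ∑' a, ∑' b, F a b := by
  have h0' : (0:α × β → ℝ) ≤ fun q => F q.1 q.2 := fun q => h0 q.1 q.2
  have S : Summable (fun q : α × β => F q.1 q.2) :=
    (summable_prod_of_nonneg h0').mpr ⟨h1, h2⟩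
  have Ssymm : Summable (fun q : β × α => F q.2 q.1) := S.prod_symm
  have h0'' : (0:β × α → ℝ) ≤ fun q => F q.2 q.1 := fun q => h0 q.2 q.1
  obtain ⟨hcols, hcolsum⟩ := (summable_prod_of_nonneg h0'').mp Ssymm
  exact ⟨hcols, hcolsum, Summable.tsum_comm' S h1 hcols⟩

lemma fubini {α β : Type*} (F : α → β → ℝ)
    (h1 : ∀ a, Summable fun b => |F a b|) (h2 : Summable fun a => ∑' b, |F a b|) :
    (∀ b, Summable fun a => F a b) ∧ (Summable fun b => ∑' a, F a b) ∧
      (∑' b, ∑' a, F a b) = ∑' a, ∑' b, F a b := by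
  obtain ⟨hc, hcs, _⟩ := tonelli (fun a b => |F a b|) (fun a b => abs_nonneg _) h1 h2
  have Sabs : Summable (fun q : α × β => |F q.1 q.2|) :=
    (summable_prod_of_nonneg (fun q => abs_nonneg _)).mpr ⟨h1, h2⟩
  have S : Summable (fun q : α × β => F q.1 q.2) := Sabs.of_abs
  have hrows : ∀ a, Summable fun b => F a b := fun a => (h1 a).of_abs
  have hcols : ∀ b, Summable fun a => F a b := fun b => (hc b).of_abs
  refine ⟨hcols, ?_, Summable.tsum_comm' S hrows hcols⟩
  refine Summable.of_norm_bounded hcs (fun b => ?_)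
  simpa using (norm_tsum_le_tsum_norm (f := fun a => F a b) (by simpa using hc b))

lemma jensen {V : Type*} (w g : V → ℝ) (hw0 : ∀ y, 0 ≤ w y) (hw1 : HasSum w 1)
    (hg2 : Summable fun y => w y * g y ^ 2) (hg1 : Summable fun y => w y * g y) :
    (∑' y, w y * g y) ^ 2 ≤ ∑' y, w y * g y ^ 2 := by
  set c : ℝ := ∑' y, w y * g y with hc
  have key : ∀ y, w y * (g y - c) ^ 2 = w y * g y ^ 2 - (2 * c) * (w y * g y) + c ^ 2 * w y := by
    intro y; ring
  have h0 : 0 ≤ ∑' y, w y * (g y - c) ^ 2 :=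
    tsum_nonneg fun y => mul_nonneg (hw0 y) (sq_nonneg _)
  have hval : ∑' y, w y * (g y - c) ^ 2
      = (∑' y, w y * g y ^ 2) - (2*c) * c + c ^ 2 * 1 := by
    rw [show (fun y => w y * (g y - c)^2) = fun y => w y * g y ^ 2 - (2*c) * (w y * g y) + c^2 * w y from funext key]
    rw [Summable.tsum_add (hg2.sub (hg1.mul_left _)) (hw1.summable.mul_left _),
        Summable.tsum_sub hg2 (hg1.mul_left _), tsum_mul_left, tsum_mul_left, hw1.tsum_eq]
  nlinarith [h0, hval]

section Kernel
variable {V : Type*} {p : V → ℝ} {K : V → V → ℝ} {g : V → ℝ}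

lemma abs_le_half (a : ℝ) : |a| ≤ (1 + a ^ 2) / 2 := by nlinarith [sq_nonneg (|a| - 1), abs_nonneg a, sq_abs a]

/-- summability of rows against g², given positivity and invariance. -/
lemma row_sq_summable (hp : ∀ x, 0 < p x) (hK0 : ∀ x y, 0 ≤ K x y)
    (hinv : ∀ y, HasSum (fun x => p x * K x y) (p y)) (hg : MemL2 p g) (x : V) :
    Summable fun y => K x y * g y ^ 2 := by
  refine Summable.of_nonneg_of_le (fun y => mul_nonneg (hK0 x y) (sq_nonneg _))
    (fun y => ?_) ((hg.mul_left (p x)⁻¹))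
  have h1 : p x * K x y ≤ p y := le_hasSum (hinv y) x (fun j _ => mul_nonneg (hp j).le (hK0 j y))
  have h2 : K x y ≤ p y / p x := (le_div_iff₀' (hp x)).2 h1
  calc K x y * g y ^ 2 ≤ (p y / p x) * g y ^ 2 :=
        mul_le_mul_of_nonneg_right h2 (sq_nonneg _)
    _ = (p x)⁻¹ * (p y * g y ^ 2) := by ring

lemma row_abs_summable (hp : ∀ x, 0 < p x) (hK0 : ∀ x y, 0 ≤ K x y)
    (hK1 : ∀ x, HasSum (K x) 1)
    (hinv : ∀ y, HasSum (fun x => p x * K x y) (p y)) (hg : MemL2 p g) (x : V) :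
    Summable fun y => K x y * |g y| := by
  refine Summable.of_nonneg_of_le (fun y => mul_nonneg (hK0 x y) (abs_nonneg _))
    (fun y => ?_) (((hK1 x).summable.add (row_sq_summable hp hK0 hinv hg x)).mul_left (1/2))
  have := abs_le_half (g y)
  have h := mul_le_mul_of_nonneg_left this (hK0 x y)
  calc K x y * |g y| ≤ K x y * ((1 + g y ^ 2)/2) := h
    _ = 1/2 * (K x y + K x y * g y ^ 2) := by ring

lemma row_summable (hp : ∀ x, 0 < p x) (hK0 : ∀ x y, 0 ≤ K x y)
    (hK1 : ∀ x, HasSum (K x) 1)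
    (hinv : ∀ y, HasSum (fun x => p x * K x y) (p y)) (hg : MemL2 p g) (x : V) :
    Summable fun y => K x y * g y := by
  apply Summable.of_abs
  refine (row_abs_summable hp hK0 hK1 hinv hg x).congr fun y => ?_
  rw [abs_mul, abs_of_nonneg (hK0 x y)]

lemma l1_abs (hp : ∀ x, 0 < p x) (hp1 : HasSum p 1) (hg : MemL2 p g) :
    Summable fun x => p x * |g x| := by
  refine Summable.of_nonneg_of_le (fun y => mul_nonneg (hp y).le (abs_nonneg _))
    (fun y => ?_) ((hp1.summable.add hg).mul_left (1/2))
  calc p y * |g y| ≤ p y * ((1 + g y ^ 2)/2) :=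
        mul_le_mul_of_nonneg_left (abs_le_half (g y)) (hp y).le
    _ = 1/2 * (p y + p y * g y ^ 2) := by ring

lemma l1 (hp : ∀ x, 0 < p x) (hp1 : HasSum p 1) (hg : MemL2 p g) :
    Summable fun x => p x * g x := by
  apply Summable.of_abs
  refine (l1_abs hp hp1 hg).congr fun y => ?_
  rw [abs_mul, abs_of_nonneg (hp y).le]

end Kernel
end Stmt1Aux
namespace Stmt1Aux
section Kernel2
variable {V : Type*} {p : V → ℝ} {K : V → V → ℝ} {g : V → ℝ}

/-- Mean invariance: `∑ p (Kg) = ∑ p g`, with summability. -/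
lemma mean_inv (hp : ∀ x, 0 < p x) (hp1 : HasSum p 1) (hK0 : ∀ x y, 0 ≤ K x y)
    (hK1 : ∀ x, HasSum (K x) 1)
    (hinv : ∀ y, HasSum (fun x => p x * K x y) (p y)) (hg : MemL2 p g) :
    (Summable fun x => p x * act K g x) ∧ integral p (act K g) = integral p g := by
  set F : V → V → ℝ := fun x y => p x * (K x y * g y) with hF
  have habsF : ∀ x y, |F x y| = p x * (K x y * |g y|) := by
    intro x y
    rw [hF]; rw [abs_mul, abs_mul, abs_of_nonneg (hp x).le, abs_of_nonneg (hK0 x y)]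
  have h1 : ∀ x, Summable fun y => |F x y| := by
    intro x
    refine (((row_abs_summable hp hK0 hK1 hinv hg x).mul_left (p x))).congr fun y => ?_
    rw [habsF]
  have t1 := tonelli (fun y x => p x * (K x y * |g y|))
    (fun y x => mul_nonneg (hp x).le (mul_nonneg (hK0 x y) (abs_nonneg _)))
    (fun y => ((hinv y).summable.mul_right |g y|).congr (fun x => by ring))
    (by
      refine (l1_abs hp hp1 hg).congr fun y => ?_
      rw [show (fun x => p x * (K x y * |g y|)) = fun x => (p x * K x y) * |g y| from funext fun x => by ring,
        tsum_mul_right, (hinv y).tsum_eq])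
  have h2 : Summable fun x => ∑' y, |F x y| := by
    refine t1.2.1.congr fun x => ?_
    exact tsum_congr fun y => (habsF x y).symm
  obtain ⟨hcols, hcolsum, hswap⟩ := fubini F h1 h2
  have hrow_eq : ∀ x, p x * act K g x = ∑' y, F x y := by
    intro x; rw [hF]; simp only [act]; rw [tsum_mul_left]
  have hcol_eq : ∀ y, (∑' x, F x y) = p y * g y := by
    intro y
    rw [hF]
    rw [show (fun x => p x * (K x y * g y)) = fun x => (p x * K x y) * g y from funext fun x => by ring,
      tsum_mul_right, (hinv y).tsum_eq]
  constructor
  · refine Summable.of_norm_bounded h2 (fun x => ?_)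
    rw [hrow_eq x]
    simpa using (norm_tsum_le_tsum_norm (f := fun y => F x y) (by simpa using h1 x))
  · unfold integral
    calc (∑' x, p x * act K g x) = ∑' x, ∑' y, F x y := tsum_congr hrow_eq
      _ = ∑' y, ∑' x, F x y := hswap.symm
      _ = ∑' y, p y * g y := tsum_congr hcol_eq

/-- Summability of `z ↦ p z ∑_y K z y g y²` and its total. -/
lemma pq_fact (hp : ∀ x, 0 < p x) (hK0 : ∀ x y, 0 ≤ K x y)
    (hinv : ∀ y, HasSum (fun x => p x * K x y) (p y)) (hg : MemL2 p g) :
    (Summable fun z => p z * ∑' y, K z y * g y ^ 2) ∧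
      (∑' z, p z * ∑' y, K z y * g y ^ 2) = ∑' x, p x * g x ^ 2 := by
  have t1 := tonelli (fun y z => p z * (K z y * g y ^ 2))
    (fun y z => mul_nonneg (hp z).le (mul_nonneg (hK0 z y) (sq_nonneg _)))
    (fun y => ((hinv y).summable.mul_right (g y ^ 2)).congr (fun z => by ring))
    (by
      refine hg.congr fun y => ?_
      rw [show (fun z => p z * (K z y * g y ^ 2)) = fun z => (p z * K z y) * g y ^ 2 from funext fun z => by ring,
        tsum_mul_right, (hinv y).tsum_eq])
  have hrow_eq : ∀ z, (∑' y, p z * (K z y * g y ^ 2)) = p z * ∑' y, K z y * g y ^ 2 := by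
    intro z; rw [tsum_mul_left]
  have hcol_eq : ∀ y, (∑' z, p z * (K z y * g y ^ 2)) = p y * g y ^ 2 := by
    intro y
    rw [show (fun z => p z * (K z y * g y ^ 2)) = fun z => (p z * K z y) * g y ^ 2 from funext fun z => by ring,
      tsum_mul_right, (hinv y).tsum_eq]
  constructor
  · exact t1.2.1.congr fun z => hrow_eq z
  · calc (∑' z, p z * ∑' y, K z y * g y ^ 2) = ∑' z, ∑' y, p z * (K z y * g y ^ 2) :=
          tsum_congr fun z => (hrow_eq z).symm
      _ = ∑' y, ∑' z, p z * (K z y * g y ^ 2) := t1.2.2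
      _ = ∑' y, p y * g y ^ 2 := tsum_congr hcol_eq

/-- Jensen pointwise: `(Kg)(z)² ≤ (K g²)(z)`. -/
lemma actK_sq_le (hp : ∀ x, 0 < p x) (hK0 : ∀ x y, 0 ≤ K x y)
    (hK1 : ∀ x, HasSum (K x) 1)
    (hinv : ∀ y, HasSum (fun x => p x * K x y) (p y)) (hg : MemL2 p g) (z : V) :
    (act K g z) ^ 2 ≤ ∑' y, K z y * g y ^ 2 :=
  jensen (K z) g (hK0 z) (hK1 z) (row_sq_summable hp hK0 hinv hg z)
    (row_summable hp hK0 hK1 hinv hg z)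

/-- ℓ²-contraction: `Kg ∈ ℓ²(p)` and `‖Kg‖² ≤ ‖g‖²`. -/
lemma memL2_act (hp : ∀ x, 0 < p x) (hK0 : ∀ x y, 0 ≤ K x y)
    (hK1 : ∀ x, HasSum (K x) 1)
    (hinv : ∀ y, HasSum (fun x => p x * K x y) (p y)) (hg : MemL2 p g) :
    MemL2 p (act K g) ∧ (∑' x, p x * act K g x ^ 2) ≤ ∑' x, p x * g x ^ 2 := by
  obtain ⟨hsum, heq⟩ := pq_fact hp hK0 hinv hg
  have hle : ∀ z, p z * act K g z ^ 2 ≤ p z * ∑' y, K z y * g y ^ 2 := fun z =>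
    mul_le_mul_of_nonneg_left (actK_sq_le hp hK0 hK1 hinv hg z) (hp z).le
  have hm : MemL2 p (act K g) :=
    Summable.of_nonneg_of_le (fun z => mul_nonneg (hp z).le (sq_nonneg _)) hle hsum
  exact ⟨hm, heq ▸ Summable.tsum_le_tsum hle hm hsum⟩

/-- `var p g = ∑ p (g - μ)²` and related facts. -/
lemma center_summable (hp1 : HasSum p 1) (hg : MemL2 p g)
    (hg1 : Summable fun x => p x * g x) (c : ℝ) :
    Summable fun x => p x * (g x - c) ^ 2 := by
  refine (((hg.sub (hg1.mul_left (2*c))).add (hp1.summable.mul_left (c^2)))).congr fun x => ?_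
  ring

lemma center_val (hp1 : HasSum p 1) (hg : MemL2 p g)
    (hg1 : Summable fun x => p x * g x) (c : ℝ) :
    (∑' x, p x * (g x - c) ^ 2)
      = (∑' x, p x * g x ^ 2) - 2 * c * (∑' x, p x * g x) + c ^ 2 := by
  rw [show (fun x => p x * (g x - c) ^ 2)
      = fun x => p x * g x ^ 2 - (2*c) * (p x * g x) + c^2 * p x from funext fun x => by ring]
  rw [Summable.tsum_add (hg.sub (hg1.mul_left _)) (hp1.summable.mul_left _),
    Summable.tsum_sub hg (hg1.mul_left _), tsum_mul_left, tsum_mul_left, hp1.tsum_eq]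
  ring

lemma var_eq_center (hp1 : HasSum p 1) (hg : MemL2 p g)
    (hg1 : Summable fun x => p x * g x) :
    var p g = ∑' x, p x * (g x - integral p g) ^ 2 := by
  rw [center_val hp1 hg hg1, var, integral]; ring

lemma var_le_center (hp1 : HasSum p 1) (hg : MemL2 p g)
    (hg1 : Summable fun x => p x * g x) (c : ℝ) :
    var p g ≤ ∑' x, p x * (g x - c) ^ 2 := by
  rw [center_val hp1 hg hg1, var]
  nlinarith [sq_nonneg ((∑' x, p x * g x) - c)]

lemma var_nonneg' (hp : ∀ x, 0 < p x) (hp1 : HasSum p 1) (hg : MemL2 p g) :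
    0 ≤ var p g := by
  have := jensen p g (fun x => (hp x).le) hp1 hg (l1 hp hp1 hg)
  simpa [var] using sub_nonneg.2 this

end Kernel2
end Stmt1Aux
namespace Stmt1Aux
section Kernel3
variable {V : Type*} {p : V → ℝ} {K : V → V → ℝ} {g : V → ℝ}

lemma dirichlet_eq (hp : ∀ x, 0 < p x) (hp1 : HasSum p 1) (hK0 : ∀ x y, 0 ≤ K x y)
    (hK1 : ∀ x, HasSum (K x) 1)
    (hinv : ∀ y, HasSum (fun x => p x * K x y) (p y)) (hg : MemL2 p g) :
    dirichlet (Qker p K) p g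
      = (∑' x, p x * g x ^ 2) - ∑' x, p x * act K g x ^ 2 := by
  have hrowsum := row_summable hp hK0 hK1 hinv hg
  have hrowsq := row_sq_summable hp hK0 hinv hg
  -- inner y-sum
  have hyS : ∀ z x, Summable fun y => K z y * (g x - g y) ^ 2 := by
    intro z x
    have e : (fun y => K z y * (g x - g y) ^ 2)
        = fun y => (g x ^ 2 * K z y - (2 * g x) * (K z y * g y)) + K z y * g y ^ 2 :=
      funext fun y => by ring
    rw [e]
    exact (((hK1 z).summable.mul_left _).sub ((hrowsum z).mul_left _)).add (hrowsq z)
  have hyval : ∀ z x, (∑' y, K z y * (g x - g y) ^ 2)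
      = g x ^ 2 - 2 * g x * act K g z + (∑' y, K z y * g y ^ 2) := by
    intro z x
    have e : (fun y => K z y * (g x - g y) ^ 2)
        = fun y => (g x ^ 2 * K z y - (2 * g x) * (K z y * g y)) + K z y * g y ^ 2 :=
      funext fun y => by ring
    rw [e, Summable.tsum_add (((hK1 z).summable.mul_left _).sub ((hrowsum z).mul_left _)) (hrowsq z),
      Summable.tsum_sub ((hK1 z).summable.mul_left _) ((hrowsum z).mul_left _),
      tsum_mul_left, tsum_mul_left, (hK1 z).tsum_eq]
    simp only [act]
    ring
  -- inner x-sum of the y-sums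
  have hxS : ∀ z, Summable fun x => K z x * (g x ^ 2 - 2 * g x * act K g z + (∑' y, K z y * g y ^ 2)) := by
    intro z
    have e : (fun x => K z x * (g x ^ 2 - 2 * g x * act K g z + (∑' y, K z y * g y ^ 2)))
        = fun x => (K z x * g x ^ 2 - (2 * act K g z) * (K z x * g x))
            + (∑' y, K z y * g y ^ 2) * K z x := funext fun x => by ring
    rw [e]
    exact ((hrowsq z).sub ((hrowsum z).mul_left _)).add ((hK1 z).summable.mul_left _)
  have hxval : ∀ z, (∑' x, K z x * (g x ^ 2 - 2 * g x * act K g z + (∑' y, K z y * g y ^ 2)))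
      = 2 * ((∑' y, K z y * g y ^ 2) - act K g z ^ 2) := by
    intro z
    have e : (fun x => K z x * (g x ^ 2 - 2 * g x * act K g z + (∑' y, K z y * g y ^ 2)))
        = fun x => (K z x * g x ^ 2 - (2 * act K g z) * (K z x * g x))
            + (∑' y, K z y * g y ^ 2) * K z x := funext fun x => by ring
    rw [e, Summable.tsum_add ((hrowsq z).sub ((hrowsum z).mul_left _)) ((hK1 z).summable.mul_left _),
      Summable.tsum_sub (hrowsq z) ((hrowsum z).mul_left _), tsum_mul_left, tsum_mul_left,
      (hK1 z).tsum_eq]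
    simp only [act]
    try ring
  -- per-z product summability of F4
  set F4 : V → V × V → ℝ :=
    fun z w => p z * (K z w.1 * (K z w.2 * (g w.1 - g w.2) ^ 2)) with hF4
  have hF4nn : ∀ z w, 0 ≤ F4 z w := fun z w =>
    mul_nonneg (hp z).le (mul_nonneg (hK0 _ _) (mul_nonneg (hK0 _ _) (sq_nonneg _)))
  have hF4rowS : ∀ z x, Summable fun y => F4 z (x, y) := by
    intro z x
    exact (((hyS z x).mul_left (K z x)).mul_left (p z)).congr fun y => by
      simp only [hF4]; try ring
  have hF4rowval : ∀ z x, (∑' y, F4 z (x, y))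
      = p z * (K z x * (g x ^ 2 - 2 * g x * act K g z + (∑' y, K z y * g y ^ 2))) := by
    intro z x
    have : (fun y => F4 z (x, y)) = fun y => (p z * K z x) * (K z y * (g x - g y) ^ 2) :=
      funext fun y => by simp only [hF4]; ring
    rw [this, tsum_mul_left, hyval z x]
    ring
  have hF4S : ∀ z, Summable (F4 z) := by
    intro z
    refine (summable_prod_of_nonneg (fun w => hF4nn z w)).mpr ⟨hF4rowS z, ?_⟩
    refine (((hxS z).mul_left (p z)).congr fun x => ?_)
    rw [hF4rowval z x]
  have hF4val : ∀ z, (∑' w, F4 z w)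
      = 2 * (p z * (∑' y, K z y * g y ^ 2) - p z * act K g z ^ 2) := by
    intro z
    rw [Summable.tsum_prod' (hF4S z) (hF4rowS z)]
    calc (∑' x, ∑' y, F4 z (x, y))
        = ∑' x, p z * (K z x * (g x ^ 2 - 2 * g x * act K g z + (∑' y, K z y * g y ^ 2))) :=
          tsum_congr fun x => hF4rowval z x
      _ = p z * ∑' x, K z x * (g x ^ 2 - 2 * g x * act K g z + (∑' y, K z y * g y ^ 2)) :=
          tsum_mul_left
      _ = _ := by rw [hxval z]; ring
  -- Tonelli over z and w
  obtain ⟨hpq, hpqval⟩ := pq_fact hp hK0 hinv hg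
  obtain ⟨hmem2, _⟩ := memL2_act hp hK0 hK1 hinv hg
  have hsum2 : Summable fun z => ∑' w, F4 z w := by
    refine ((hpq.sub hmem2).mul_left 2).congr fun z => ?_
    rw [hF4val z]
  obtain ⟨hFcols, hFcolsum, hFswap⟩ := tonelli F4 hF4nn hF4S hsum2
  have hzsum : (∑' z, ∑' w, F4 z w)
      = 2 * ((∑' x, p x * g x ^ 2) - ∑' x, p x * act K g x ^ 2) := by
    calc (∑' z, ∑' w, F4 z w)
        = ∑' z, 2 * (p z * (∑' y, K z y * g y ^ 2) - p z * act K g z ^ 2) :=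
          tsum_congr hF4val
      _ = 2 * ∑' z, (p z * (∑' y, K z y * g y ^ 2) - p z * act K g z ^ 2) := tsum_mul_left
      _ = 2 * ((∑' z, p z * (∑' y, K z y * g y ^ 2)) - ∑' z, p z * act K g z ^ 2) := by
          rw [Summable.tsum_sub hpq hmem2]
      _ = _ := by rw [hpqval]
  -- identify the dirichlet sum with the swapped triple sum
  have hker : ∀ x y, (g x - g y) ^ 2 * p x * Qker p K x y = ∑' z, F4 z (x, y) := by
    intro x y
    unfold Qker kmul
    rw [← tsum_mul_left]
    refine tsum_congr fun z => ?_
    simp only [adjKer, hF4]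
    have hx : p x ≠ 0 := (hp x).ne'
    field_simp
  have hFcolsum' : Summable fun w : V × V => (g w.1 - g w.2) ^ 2 * p w.1 * Qker p K w.1 w.2 := by
    refine hFcolsum.congr fun w => ?_
    rw [hker w.1 w.2]
  have hHsecS : ∀ x, Summable fun y => (g x - g y) ^ 2 * p x * Qker p K x y := by
    intro x
    exact hFcolsum'.comp_injective (i := fun y => ((x, y) : V × V))
      (fun a b h => congrArg Prod.snd h)
  have hdsum : (∑' x, ∑' y, (g x - g y) ^ 2 * p x * Qker p K x y)
      = ∑' z, ∑' w : V × V, F4 z w := by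
    calc (∑' x, ∑' y, (g x - g y) ^ 2 * p x * Qker p K x y)
        = ∑' w : V × V, (g w.1 - g w.2) ^ 2 * p w.1 * Qker p K w.1 w.2 :=
          (Summable.tsum_prod' hFcolsum' hHsecS).symm
      _ = ∑' w : V × V, ∑' z, F4 z w := tsum_congr fun w => hker w.1 w.2
      _ = ∑' z, ∑' w : V × V, F4 z w := hFswap
  unfold dirichlet
  rw [hdsum, hzsum]
  ring

end Kernel3
end Stmt1Aux
namespace Stmt1Aux
section Poincare
variable {V : Type*} {p : V → ℝ} {K : V → V → ℝ} {g : V → ℝ}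

lemma dirichlet_nonneg (hp : ∀ x, 0 < p x) (hK0 : ∀ x y, 0 ≤ K x y) (f : V → ℝ) :
    0 ≤ dirichlet (Qker p K) p f := by
  unfold dirichlet
  have hQ : ∀ x y, 0 ≤ Qker p K x y := by
    intro x y
    refine tsum_nonneg fun z => mul_nonneg ?_ (hK0 z y)
    exact div_nonneg (mul_nonneg (hp z).le (hK0 z x)) (hp x).le
  refine mul_nonneg (by norm_num) (tsum_nonneg fun x => tsum_nonneg fun y => ?_)
  exact mul_nonneg (mul_nonneg (sq_nonneg _) (hp x).le) (hQ x y)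

lemma poincare_apply (hp : ∀ x, 0 < p x) (hp1 : HasSum p 1) (hK0 : ∀ x y, 0 ≤ K x y)
    (hg : MemL2 p g) :
    poincareConst (Qker p K) p * var p g ≤ dirichlet (Qker p K) p g := by
  set S := {γ : ℝ | 0 ≤ γ ∧ ∀ f : V → ℝ, MemL2 p f → γ * var p f ≤ dirichlet (Qker p K) p f}
    with hS
  have h0S : (0:ℝ) ∈ S := ⟨le_refl 0, fun f hf => by
    simpa using dirichlet_nonneg hp hK0 f⟩
  have hvar : 0 ≤ var p g := var_nonneg' hp hp1 hg
  rcases eq_or_lt_of_le hvar with hv | hv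
  · rw [← hv, mul_zero]
    exact dirichlet_nonneg hp hK0 g
  · have hle : ∀ a ∈ S, a ≤ dirichlet (Qker p K) p g / var p g := fun a ha =>
      (le_div_iff₀ hv).2 (ha.2 g hg)
    have : sSup S ≤ dirichlet (Qker p K) p g / var p g := csSup_le ⟨0, h0S⟩ hle
    exact (le_div_iff₀ hv).1 this

lemma poincare_le_one (hp : ∀ x, 0 < p x) (hp1 : HasSum p 1) (hK0 : ∀ x y, 0 ≤ K x y)
    (hK1 : ∀ x, HasSum (K x) 1)
    (hinv : ∀ y, HasSum (fun x => p x * K x y) (p y)) :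
    poincareConst (Qker p K) p ≤ 1 := by
  by_cases hvt : ∃ h : V → ℝ, MemL2 p h ∧ 0 < var p h
  · obtain ⟨h, hh, hhv⟩ := hvt
    have hE : dirichlet (Qker p K) p h ≤ var p h := by
      rw [dirichlet_eq hp hp1 hK0 hK1 hinv hh]
      have hmem := (memL2_act hp hK0 hK1 hinv hh).1
      have hjen := jensen p (act K h) (fun x => (hp x).le) hp1 hmem (l1 hp hp1 hmem)
      have hmean : (∑' x, p x * act K h x) = ∑' x, p x * h x :=
        (mean_inv hp hp1 hK0 hK1 hinv hh).2
      rw [hmean] at hjen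
      unfold var
      linarith
    have := poincare_apply hp hp1 hK0 hh
    nlinarith
  · push_neg at hvt
    have hnb : ¬ BddAbove {γ : ℝ | 0 ≤ γ ∧
        ∀ f : V → ℝ, MemL2 p f → γ * var p f ≤ dirichlet (Qker p K) p f} := by
      rintro ⟨b, hb⟩
      have hmem : max b 0 + 1 ∈ {γ : ℝ | 0 ≤ γ ∧
          ∀ f : V → ℝ, MemL2 p f → γ * var p f ≤ dirichlet (Qker p K) p f} := by
        refine ⟨by positivity, fun f hf => ?_⟩
        have h0 : var p f = 0 :=
          le_antisymm (hvt f hf) (var_nonneg' hp hp1 hf)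
        rw [h0, mul_zero]
        exact dirichlet_nonneg hp hK0 f
      have := hb hmem
      have := le_max_left b 0
      linarith
    unfold poincareConst
    rw [Real.sSup_of_not_bddAbove hnb]
    norm_num

lemma var_contraction (hp : ∀ x, 0 < p x) (hp1 : HasSum p 1) (hK0 : ∀ x y, 0 ≤ K x y)
    (hK1 : ∀ x, HasSum (K x) 1)
    (hinv : ∀ y, HasSum (fun x => p x * K x y) (p y)) (hg : MemL2 p g) :
    var p (act K g) ≤ (1 - poincareConst (Qker p K) p) * var p g := by
  have hmem := (memL2_act hp hK0 hK1 hinv hg).1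
  have hmean : (∑' x, p x * act K g x) = ∑' x, p x * g x :=
    (mean_inv hp hp1 hK0 hK1 hinv hg).2
  have hE := dirichlet_eq hp hp1 hK0 hK1 hinv hg
  have hP := poincare_apply hp hp1 hK0 hg
  unfold var at *
  rw [hmean]
  linarith

end Poincare
end Stmt1Aux
namespace Stmt1Aux
section Env
variable {V : Type*} {π π' : V → ℝ} {g : V → ℝ}

lemma mass_pos [Nonempty V] (hpos : ∀ x, 0 < π x) (hsum : Summable π) : 0 < mass π :=
  Summable.tsum_pos hsum (fun x => (hpos x).le) (Classical.arbitrary V) (hpos _)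

lemma nmz_pos [Nonempty V] (hpos : ∀ x, 0 < π x) (hsum : Summable π) (x : V) :
    0 < nmz π x := div_pos (hpos x) (mass_pos hpos hsum)

lemma nmz_hasSum_one [Nonempty V] (hpos : ∀ x, 0 < π x) (hsum : Summable π) :
    HasSum (nmz π) 1 := by
  have h := hsum.hasSum.div_const (mass π)
  have e : (∑' b, π b) / mass π = 1 := div_self (mass_pos hpos hsum).ne'
  rwa [e] at h

lemma nmz_inv [Nonempty V] (hpos : ∀ x, 0 < π x) (hsum : Summable π) {K : V → V → ℝ}
    (hinv : ∀ y, HasSum (fun x => π x * K x y) (π y)) (y : V) :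
    HasSum (fun x => nmz π x * K x y) (nmz π y) := by
  have h := (hinv y).div_const (mass π)
  refine h.congr_fun fun x => ?_
  simp only [nmz]
  ring

lemma memL2_mono [Nonempty V] (hpos : ∀ x, 0 < π x) (hsum : Summable π)
    (hpos' : ∀ x, 0 < π' x) (hsum' : Summable π')
    (hle : ∀ x, π x ≤ π' x) (hg : MemL2 (nmz π') g) : MemL2 (nmz π) g := by
  have hM := mass_pos hpos hsum
  have hM' := mass_pos hpos' hsum'
  refine Summable.of_nonneg_of_le
    (fun x => mul_nonneg (nmz_pos hpos hsum x).le (sq_nonneg _))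
    (fun x => ?_) (hg.mul_left (mass π' / mass π))
  have : mass π' / mass π * (nmz π' x * g x ^ 2) = π' x * g x ^ 2 / mass π := by
    simp only [nmz]
    field_simp
  rw [this]
  simp only [nmz]
  rw [div_mul_eq_mul_div]
  exact div_le_div_of_nonneg_right (mul_le_mul_of_nonneg_right (hle x) (sq_nonneg _)) hM.le

lemma var_mono [Nonempty V] (hpos : ∀ x, 0 < π x) (hsum : Summable π)
    (hpos' : ∀ x, 0 < π' x) (hsum' : Summable π')
    (hle : ∀ x, π x ≤ π' x) (hg : MemL2 (nmz π') g) :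
    var (nmz π) g ≤ (mass π' / mass π) * var (nmz π') g := by
  have hM := mass_pos hpos hsum
  have hM' := mass_pos hpos' hsum'
  have hp1 := nmz_hasSum_one hpos hsum
  have hp1' := nmz_hasSum_one hpos' hsum'
  have hg' : MemL2 (nmz π) g := memL2_mono hpos hsum hpos' hsum' hle hg
  have hl1 := l1 (nmz_pos hpos hsum) hp1 hg'
  have hl1' := l1 (nmz_pos hpos' hsum') hp1' hg
  set c : ℝ := integral (nmz π') g with hc
  have h1 : var (nmz π) g ≤ ∑' x, nmz π x * (g x - c) ^ 2 :=
    var_le_center hp1 hg' hl1 c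
  have h2 : (∑' x, nmz π x * (g x - c) ^ 2)
      ≤ mass π' / mass π * ∑' x, nmz π' x * (g x - c) ^ 2 := by
    rw [← tsum_mul_left]
    refine Summable.tsum_le_tsum (fun x => ?_) (center_summable hp1 hg' hl1 c)
      ((center_summable hp1' hg hl1' c).mul_left _)
    have e : mass π' / mass π * (nmz π' x * (g x - c) ^ 2) = π' x * (g x - c) ^ 2 / mass π := by
      simp only [nmz]; field_simp
    rw [e]
    simp only [nmz]
    rw [div_mul_eq_mul_div]
    exact div_le_div_of_nonneg_right (mul_le_mul_of_nonneg_right (hle x) (sq_nonneg _)) hM.le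
  have h3 : (∑' x, nmz π' x * (g x - c) ^ 2) = var (nmz π') g :=
    (var_eq_center hp1' hg hl1').symm
  calc var (nmz π) g ≤ mass π' / mass π * ∑' x, nmz π' x * (g x - c) ^ 2 := le_trans h1 h2
    _ = mass π' / mass π * var (nmz π') g := by rw [h3]

end Env

section KstLemmas
variable {V : Type*}

lemma Kst_self (K : ℕ → V → V → ℝ) (t : ℕ) (f : V → ℝ) : Kst K t t f = f := by
  simp [Kst]

lemma Kst_succ (K : ℕ → V → V → ℝ) {s t : ℕ} (h : s < t) (f : V → ℝ) :
    Kst K s t f = act (K (s + 1)) (Kst K (s + 1) t f) := by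
  unfold Kst
  have h1 : t - s = (t - (s + 1)) + 1 := by omega
  rw [h1, List.range_succ_eq_map, List.foldr_cons, List.foldr_map]
  have e : (fun (x : ℕ) (y : V → ℝ) => act (K (s + 1 + Nat.succ x)) y)
      = fun i g => act (K (s + 1 + 1 + i)) g := by
    funext i gg
    rw [show s + 1 + Nat.succ i = s + 1 + 1 + i from by omega]
  simp only [Nat.add_zero]
  rw [e]

end KstLemmas
end Stmt1Aux

/-- `ℓ²(p)`-norm: `‖f‖_{ℓ²(p)} = (∑_x p(x) f(x)²)^{1/2}`. -/
def l2norm {V : Type*} (p : V → ℝ) (f : V → ℝ) : ℝ := Real.sqrt (∑' x, p x * f x ^ 2)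

/-- Theorem, operator-norm form of the Poincaré contraction.
In a non-decreasing finite environment, for every `t ≥ 1` and `f ∈ ℓ²(π̃_t)`,
`‖K_{0,t} f − π̃_1(K_{0,t} f)‖_{ℓ²(π̃_1)} ≤ sqrt((π_t(V)/π_1(V)) ∏_{s=1}^t (1-γ_s)) ‖f‖_{ℓ²(π̃_t)}`. -/
theorem stmt1 {V : Type*} [Countable V]
    (K : ℕ → V → V → ℝ) (π : ℕ → V → ℝ)
    (henv : NonDecEnv K π)
    (γ : ℕ → ℝ)
    (hγ : ∀ s, γ s = poincareConst (Qker (nmz (π s)) (K s)) (nmz (π s)))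
    (t : ℕ) (ht : 1 ≤ t) (f : V → ℝ) (hf : MemL2 (nmz (π t)) f) :
    l2norm (nmz (π 1))
        (fun x => Kst K 0 t f x - integral (nmz (π 1)) (Kst K 0 t f)) ≤
      Real.sqrt ((mass (π t) / mass (π 1)) * ∏ s ∈ Finset.Icc 1 t, (1 - γ s)) *
        l2norm (nmz (π t)) f := by
  classical
  rcases isEmpty_or_nonempty V with hV | hV
  · simp only [l2norm, tsum_empty, Real.sqrt_zero, mul_zero]
    exact le_refl 0
  obtain ⟨hMar, hpos, hsum, hinv, hmono⟩ := henv
  have hKnn : ∀ s, 1 ≤ s → ∀ x y, 0 ≤ K s x y := fun s hs => (hMar s hs).1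
  have hK1 : ∀ s, 1 ≤ s → ∀ x, HasSum (K s x) 1 := fun s hs => (hMar s hs).2.2
  have hp : ∀ s, 1 ≤ s → ∀ x, 0 < nmz (π s) x :=
    fun s hs => Stmt1Aux.nmz_pos (hpos s hs) (hsum s hs)
  have hp1 : ∀ s, 1 ≤ s → HasSum (nmz (π s)) 1 :=
    fun s hs => Stmt1Aux.nmz_hasSum_one (hpos s hs) (hsum s hs)
  have hpinv : ∀ s, 1 ≤ s → ∀ y,
      HasSum (fun x => nmz (π s) x * K s x y) (nmz (π s) y) :=
    fun s hs => Stmt1Aux.nmz_inv (hpos s hs) (hsum s hs) (hinv s hs)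
  have hγ1 : ∀ s, 1 ≤ s → γ s ≤ 1 := fun s hs => by
    rw [hγ s]
    exact Stmt1Aux.poincare_le_one (hp s hs) (hp1 s hs) (hKnn s hs) (hK1 s hs) (hpinv s hs)
  have hcontr : ∀ s, 1 ≤ s → ∀ g : V → ℝ, MemL2 (nmz (π s)) g →
      var (nmz (π s)) (act (K s) g) ≤ (1 - γ s) * var (nmz (π s)) g := fun s hs g hg => by
    rw [hγ s]
    exact Stmt1Aux.var_contraction (hp s hs) (hp1 s hs) (hKnn s hs) (hK1 s hs) (hpinv s hs) hg
  have hMpos : ∀ s, 1 ≤ s → 0 < mass (π s) :=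
    fun s hs => Stmt1Aux.mass_pos (hpos s hs) (hsum s hs)
  have hprodnn : ∀ s, 1 ≤ s → 0 ≤ ∏ u ∈ Finset.Icc s t, (1 - γ u) := by
    intro s hs
    refine Finset.prod_nonneg fun u hu => ?_
    have := hγ1 u (le_trans hs (Finset.mem_Icc.mp hu).1)
    linarith
  -- main downward induction
  have main : ∀ n s, 1 ≤ s → s + n = t →
      MemL2 (nmz (π s)) (Kst K s t f) ∧
      var (nmz (π s)) (act (K s) (Kst K s t f)) ≤
        ((mass (π t) / mass (π s)) * ∏ u ∈ Finset.Icc s t, (1 - γ u)) *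
          (∑' x, nmz (π t) x * f x ^ 2) := by
    intro n
    induction n with
    | zero =>
      intro s hs hst
      have hst' : s = t := by omega
      subst hst'
      rw [Stmt1Aux.Kst_self]
      refine ⟨hf, ?_⟩
      have h1 := hcontr s hs f hf
      have h2 : var (nmz (π s)) f ≤ ∑' x, nmz (π s) x * f x ^ 2 := by
        unfold var
        nlinarith [sq_nonneg (∑' x, nmz (π s) x * f x)]
      have h3 : (0:ℝ) ≤ 1 - γ s := by linarith [hγ1 s hs]
      have h4 : var (nmz (π s)) (act (K s) f) ≤ (1 - γ s) * ∑' x, nmz (π s) x * f x ^ 2 := by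
        calc var (nmz (π s)) (act (K s) f) ≤ (1 - γ s) * var (nmz (π s)) f := h1
          _ ≤ (1 - γ s) * ∑' x, nmz (π s) x * f x ^ 2 := by
              exact mul_le_mul_of_nonneg_left h2 h3
      rw [Finset.Icc_self, Finset.prod_singleton, div_self (hMpos s hs).ne']
      linarith
    | succ n ih =>
      intro s hs hst
      have hslt : s < t := by omega
      have hs1 : 1 ≤ s + 1 := by omega
      have hrec : Kst K s t f = act (K (s + 1)) (Kst K (s + 1) t f) :=
        Stmt1Aux.Kst_succ K hslt f
      obtain ⟨ihmem, ihvar⟩ := ih (s + 1) hs1 (by omega)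
      have hmem1 : MemL2 (nmz (π (s + 1))) (Kst K s t f) := by
        rw [hrec]
        exact (Stmt1Aux.memL2_act (hp _ hs1) (hKnn _ hs1) (hK1 _ hs1) (hpinv _ hs1) ihmem).1
      have hmem : MemL2 (nmz (π s)) (Kst K s t f) :=
        Stmt1Aux.memL2_mono (hpos s hs) (hsum s hs) (hpos _ hs1) (hsum _ hs1)
          (hmono s hs) hmem1
      refine ⟨hmem, ?_⟩
      have h1 : var (nmz (π s)) (act (K s) (Kst K s t f))
          ≤ (1 - γ s) * var (nmz (π s)) (Kst K s t f) := hcontr s hs _ hmem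
      have h2 : var (nmz (π s)) (Kst K s t f)
          ≤ (mass (π (s + 1)) / mass (π s)) * var (nmz (π (s + 1))) (Kst K s t f) :=
        Stmt1Aux.var_mono (hpos s hs) (hsum s hs) (hpos _ hs1) (hsum _ hs1)
          (hmono s hs) hmem1
      have h3 : var (nmz (π (s + 1))) (Kst K s t f)
          = var (nmz (π (s + 1))) (act (K (s + 1)) (Kst K (s + 1) t f)) := by rw [hrec]
      have hγs : (0:ℝ) ≤ 1 - γ s := by linarith [hγ1 s hs]
      have hM := hMpos s hs
      have hM1 := hMpos (s + 1) hs1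
      have hMt := hMpos t ht
      have hratio : (0:ℝ) ≤ mass (π (s + 1)) / mass (π s) := by positivity
      have h5 : var (nmz (π s)) (act (K s) (Kst K s t f))
          ≤ (1 - γ s) * ((mass (π (s + 1)) / mass (π s)) *
            (((mass (π t) / mass (π (s + 1))) * ∏ u ∈ Finset.Icc (s + 1) t, (1 - γ u)) *
              (∑' x, nmz (π t) x * f x ^ 2))) := by
        calc var (nmz (π s)) (act (K s) (Kst K s t f))
            ≤ (1 - γ s) * var (nmz (π s)) (Kst K s t f) := h1
          _ ≤ (1 - γ s) * ((mass (π (s + 1)) / mass (π s)) *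
              var (nmz (π (s + 1))) (Kst K s t f)) :=
                mul_le_mul_of_nonneg_left h2 hγs
          _ ≤ _ := by
              refine mul_le_mul_of_nonneg_left (mul_le_mul_of_nonneg_left ?_ hratio) hγs
              rw [h3]
              exact ihvar
      have hsplit : (∏ u ∈ Finset.Icc s t, (1 - γ u))
          = (1 - γ s) * ∏ u ∈ Finset.Icc (s + 1) t, (1 - γ u) := by
        rw [← Finset.Ico_add_one_right_eq_Icc, ← Finset.Ico_add_one_right_eq_Icc,
          Finset.prod_eq_prod_Ico_succ_bot (by omega) _]
      calc var (nmz (π s)) (act (K s) (Kst K s t f)) ≤ _ := h5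
        _ = ((mass (π t) / mass (π s)) * ∏ u ∈ Finset.Icc s t, (1 - γ u)) *
              (∑' x, nmz (π t) x * f x ^ 2) := by
            rw [hsplit]
            field_simp
  -- assemble
  obtain ⟨hmem1, hvar1⟩ := main (t - 1) 1 le_rfl (by omega)
  have hrec0 : Kst K 0 t f = act (K 1) (Kst K 1 t f) :=
    Stmt1Aux.Kst_succ K (by omega) f
  have hmem0 : MemL2 (nmz (π 1)) (Kst K 0 t f) := by
    rw [hrec0]
    exact (Stmt1Aux.memL2_act (hp 1 le_rfl) (hKnn 1 le_rfl) (hK1 1 le_rfl)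
      (hpinv 1 le_rfl) hmem1).1
  have hl10 : Summable fun x => nmz (π 1) x * Kst K 0 t f x :=
    Stmt1Aux.l1 (hp 1 le_rfl) (hp1 1 le_rfl) hmem0
  have hLHS : l2norm (nmz (π 1))
      (fun x => Kst K 0 t f x - integral (nmz (π 1)) (Kst K 0 t f))
      = Real.sqrt (var (nmz (π 1)) (Kst K 0 t f)) := by
    unfold l2norm
    rw [Stmt1Aux.var_eq_center (hp1 1 le_rfl) hmem0 hl10]
  rw [hLHS, l2norm]
  have hA : (0:ℝ) ≤ (mass (π t) / mass (π 1)) * ∏ s ∈ Finset.Icc 1 t, (1 - γ s) := by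
    have := hprodnn 1 le_rfl
    have h1 := hMpos 1 le_rfl
    have h2 := hMpos t ht
    positivity
  rw [← Real.sqrt_mul hA]
  apply Real.sqrt_le_sqrt
  calc var (nmz (π 1)) (Kst K 0 t f)
      = var (nmz (π 1)) (act (K 1) (Kst K 1 t f)) := by rw [hrec0]
    _ ≤ _ := hvar1

end
end

section
/- Let {(K_t, π_t)}_{t≥1} be a non-decreasing finite environment on a countable discrete set V. Then for every r ≥ 1 and every f ∈ ℓ²(π_r), ‖K_r f − π̃_{r−1}(K_r f)‖²_{ℓ²(π_{r−1})} ≤ (1 − γ_r) · ‖f − π̃_r(f)‖²_{ℓ²(π_r)}, where γ_r is the Poincaré constant of Q_r = K_r^* K_r. -/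
open scoped BigOperators Classical
open Filter

namespace Stmt2Aux

lemma summable_mul_of_sq {ι : Type*} {a b : ι → ℝ} (ha : Summable fun i => a i ^ 2)
    (hb : Summable fun i => b i ^ 2) : Summable fun i => a i * b i := by
  refine Summable.of_abs (Summable.of_nonneg_of_le (fun i => abs_nonneg _)
    (fun i => ?_) (((ha.add hb).mul_left (1/2))))
  rw [abs_mul]
  nlinarith [sq_nonneg (|a i| - |b i|), sq_abs (a i), sq_abs (b i), abs_nonneg (a i), abs_nonneg (b i)]

lemma tsum_mul_sq_le {ι : Type*} {a b : ι → ℝ} (ha : Summable fun i => a i ^ 2)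
    (hb : Summable fun i => b i ^ 2) :
    (∑' i, a i * b i) ^ 2 ≤ (∑' i, a i ^ 2) * (∑' i, b i ^ 2) := by
  have hab := summable_mul_of_sq ha hb
  have key : ∀ s : Finset ι, (∑ i ∈ s, a i * b i) ^ 2 ≤ (∑' i, a i ^ 2) * (∑' i, b i ^ 2) := by
    intro s
    refine (Finset.sum_mul_sq_le_sq_mul_sq s a b).trans ?_
    have h1 : ∑ i ∈ s, a i ^ 2 ≤ ∑' i, a i ^ 2 := Summable.sum_le_tsum s (fun i _ => sq_nonneg _) ha
    have h2 : ∑ i ∈ s, b i ^ 2 ≤ ∑' i, b i ^ 2 := Summable.sum_le_tsum s (fun i _ => sq_nonneg _) hb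
    have h3 : (0:ℝ) ≤ ∑ i ∈ s, a i ^ 2 := Finset.sum_nonneg fun i _ => sq_nonneg _
    have h4 : (0:ℝ) ≤ ∑ i ∈ s, b i ^ 2 := Finset.sum_nonneg fun i _ => sq_nonneg _
    have h5 : (0:ℝ) ≤ ∑' i, b i ^ 2 := tsum_nonneg fun i => sq_nonneg _
    nlinarith
  have ht : Filter.Tendsto (fun s : Finset ι => (∑ i ∈ s, a i * b i) ^ 2) Filter.atTop
      (nhds ((∑' i, a i * b i) ^ 2)) := hab.hasSum.pow 2
  exact le_of_tendsto ht (Filter.Eventually.of_forall key)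

lemma summable_pf {ι : Type*} {p f : ι → ℝ} (hp : ∀ i, 0 ≤ p i) (hps : Summable p)
    (hpf2 : Summable fun i => p i * f i ^ 2) : Summable fun i => p i * f i := by
  have ha : Summable fun i => (Real.sqrt (p i)) ^ 2 :=
    hps.congr fun i => (Real.sq_sqrt (hp i)).symm
  have hb : Summable fun i => (Real.sqrt (p i) * f i) ^ 2 :=
    hpf2.congr fun i => by rw [mul_pow, Real.sq_sqrt (hp i)]
  exact (summable_mul_of_sq ha hb).congr fun i => by
    rw [← mul_assoc, Real.mul_self_sqrt (hp i)]

variable {V : Type*} {p : V → ℝ} {Kk : V → V → ℝ} {g : V → ℝ}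

/-- Core identity: `E_{Q,p}(g,g) = ‖g‖² − ‖Kg‖²` plus needed summabilities. -/
lemma core (hp0 : ∀ x, 0 < p x) (hps : HasSum p 1)
    (hK0 : ∀ x y, 0 ≤ Kk x y) (hK1 : ∀ x, HasSum (Kk x) 1)
    (hinv : ∀ y, HasSum (fun x => p x * Kk x y) (p y))
    (hg2 : Summable fun x => p x * g x ^ 2) :
    (Summable fun x => p x * (act Kk g x) ^ 2) ∧
      dirichlet (Qker p Kk) p g
        = (∑' x, p x * g x ^ 2) - ∑' x, p x * (act Kk g x) ^ 2 := by
  classical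
  have hKle : ∀ x y, p x * Kk x y ≤ p y := fun x y =>
    le_hasSum (hinv y) x (fun z _ => mul_nonneg (hp0 z).le (hK0 z y))
  -- summability of K(x,·) g², K(x,·) g
  have hD1 : ∀ x, Summable fun y => Kk x y * g y ^ 2 := by
    intro x
    refine Summable.of_nonneg_of_le (fun y => mul_nonneg (hK0 x y) (sq_nonneg _))
      (fun y => ?_) (hg2.mul_left (p x)⁻¹)
    have h1 : Kk x y ≤ (p x)⁻¹ * p y := by
      rw [← div_eq_inv_mul, le_div_iff₀ (hp0 x), mul_comm]
      exact hKle x y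
    calc Kk x y * g y ^ 2 ≤ ((p x)⁻¹ * p y) * g y ^ 2 := by nlinarith [sq_nonneg (g y)]
      _ = (p x)⁻¹ * (p y * g y ^ 2) := by ring
  have hpabs : Summable fun y => p y * |g y| := by
    refine summable_pf (fun y => (hp0 y).le) hps.summable (hg2.congr fun y => ?_)
    rw [sq_abs]
  have hD2 : ∀ x, Summable fun y => Kk x y * g y := by
    intro x
    refine Summable.of_abs (Summable.of_nonneg_of_le (fun y => abs_nonneg _)
      (fun y => ?_) (hpabs.mul_left (p x)⁻¹))
    rw [abs_mul, abs_of_nonneg (hK0 x y)]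
    have h1 : Kk x y ≤ (p x)⁻¹ * p y := by
      rw [← div_eq_inv_mul, le_div_iff₀ (hp0 x), mul_comm]
      exact hKle x y
    calc Kk x y * |g y| ≤ ((p x)⁻¹ * p y) * |g y| := by nlinarith [abs_nonneg (g y)]
      _ = (p x)⁻¹ * (p y * |g y|) := by ring
  -- Jensen
  have hD3 : ∀ z, (act Kk g z) ^ 2 ≤ ∑' y, Kk z y * g y ^ 2 := by
    intro z
    have ha : Summable fun y => (Real.sqrt (Kk z y)) ^ 2 :=
      (hK1 z).summable.congr fun y => (Real.sq_sqrt (hK0 z y)).symm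
    have hb : Summable fun y => (Real.sqrt (Kk z y) * g y) ^ 2 :=
      (hD1 z).congr fun y => by rw [mul_pow, Real.sq_sqrt (hK0 z y)]
    have := tsum_mul_sq_le ha hb
    have e1 : ∑' y, Real.sqrt (Kk z y) * (Real.sqrt (Kk z y) * g y) = act Kk g z :=
      tsum_congr fun y => by rw [← mul_assoc, Real.mul_self_sqrt (hK0 z y)]
    have e2 : ∑' y, (Real.sqrt (Kk z y)) ^ 2 = 1 := by
      rw [tsum_congr fun y => Real.sq_sqrt (hK0 z y), (hK1 z).tsum_eq]
    have e3 : ∑' y, (Real.sqrt (Kk z y) * g y) ^ 2 = ∑' y, Kk z y * g y ^ 2 :=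
      tsum_congr fun y => by rw [mul_pow, Real.sq_sqrt (hK0 z y)]
    rw [e1, e2, e3, one_mul] at this
    exact this
  -- invariance of the pair sum : F2 over (y,z)
  have hF2nn : 0 ≤ fun w : V × V => p w.2 * Kk w.2 w.1 * g w.1 ^ 2 :=
    Pi.le_def.mpr fun w => mul_nonneg (mul_nonneg (hp0 _).le (hK0 _ _)) (sq_nonneg _)
  have hF2 : Summable fun w : V × V => p w.2 * Kk w.2 w.1 * g w.1 ^ 2 := by
    rw [summable_prod_of_nonneg hF2nn]
    constructor
    · intro y
      exact ((hinv y).summable.mul_right (g y ^ 2))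
    · refine Summable.congr hg2 fun y => ?_
      have e : (∑' (z : V), p (y, z).2 * Kk (y, z).2 (y, z).1 * g (y, z).1 ^ 2)
          = ∑' (z : V), (fun x => p x * Kk x y) z * g y ^ 2 := tsum_congr fun z => rfl
      rw [e, tsum_mul_right, (hinv y).tsum_eq]
  have hG2 : Summable fun w : V × V => p w.1 * Kk w.1 w.2 * g w.2 ^ 2 := by
    have := hF2.prod_symm
    exact this.congr fun w => rfl
  have hG2split := (summable_prod_of_nonneg
    (Pi.le_def.mpr fun w : V × V =>
      mul_nonneg (mul_nonneg (hp0 _).le (hK0 _ _)) (sq_nonneg _))).mp hG2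
  have hD5pre : Summable fun z => p z * ∑' y, Kk z y * g y ^ 2 := by
    refine Summable.congr hG2split.2 fun z => ?_
    rw [← tsum_mul_left]
    exact tsum_congr fun y => by ring
  have hinv_eq : ∑' z, p z * ∑' y, Kk z y * g y ^ 2 = ∑' x, p x * g x ^ 2 := by
    have e1 : ∑' (w : V × V), p w.1 * Kk w.1 w.2 * g w.2 ^ 2
        = ∑' z, ∑' y, p z * Kk z y * g y ^ 2 := Summable.tsum_prod hG2
    have e2 : ∑' (w : V × V), p w.2 * Kk w.2 w.1 * g w.1 ^ 2
        = ∑' y, ∑' z, p z * Kk z y * g y ^ 2 := Summable.tsum_prod hF2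
    have e3 : ∑' (w : V × V), p w.1 * Kk w.1 w.2 * g w.2 ^ 2
        = ∑' (w : V × V), p w.2 * Kk w.2 w.1 * g w.1 ^ 2 :=
      ((Equiv.prodComm V V).tsum_eq _).symm
    calc ∑' z, p z * ∑' y, Kk z y * g y ^ 2
        = ∑' z, ∑' y, p z * Kk z y * g y ^ 2 := by
          refine tsum_congr fun z => ?_
          rw [← tsum_mul_left]; exact tsum_congr fun y => by ring
      _ = ∑' y, ∑' z, p z * Kk z y * g y ^ 2 := by rw [← e1, e3, e2]
      _ = ∑' x, p x * g x ^ 2 := by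
          refine tsum_congr fun y => ?_
          have : ∀ z, p z * Kk z y * g y ^ 2 = (p z * Kk z y) * g y ^ 2 := fun z => rfl
          rw [tsum_congr this, tsum_mul_right, (hinv y).tsum_eq]
  have hD5 : Summable fun z => p z * (act Kk g z) ^ 2 := by
    refine Summable.of_nonneg_of_le (fun z => mul_nonneg (hp0 z).le (sq_nonneg _))
      (fun z => mul_le_mul_of_nonneg_left (hD3 z) (hp0 z).le) hD5pre
  refine ⟨hD5, ?_⟩
  -- notation
  set A : V → ℝ := fun z => ∑' y, Kk z y * g y ^ 2 with hA
  set B : V → ℝ := fun z => act Kk g z with hB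
  have hAnn : ∀ z, 0 ≤ A z := fun z => tsum_nonneg fun y => mul_nonneg (hK0 z y) (sq_nonneg _)
  -- inner-y sum
  have hSy_sum : ∀ z x, Summable fun y => Kk z y * (g x - g y) ^ 2 := by
    intro z x
    refine Summable.of_nonneg_of_le (fun y => mul_nonneg (hK0 z y) (sq_nonneg _)) (fun y => ?_)
      (((hK1 z).summable.mul_left (2 * g x ^ 2)).add ((hD1 z).mul_left 2))
    have h1 : (g x - g y) ^ 2 ≤ 2 * g x ^ 2 + 2 * g y ^ 2 := by nlinarith [sq_nonneg (g x + g y)]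
    calc Kk z y * (g x - g y) ^ 2 ≤ Kk z y * (2 * g x ^ 2 + 2 * g y ^ 2) :=
          mul_le_mul_of_nonneg_left h1 (hK0 z y)
      _ = 2 * g x ^ 2 * Kk z y + 2 * (Kk z y * g y ^ 2) := by ring
  have hSy : ∀ z x, ∑' y, Kk z y * (g x - g y) ^ 2 = g x ^ 2 - 2 * g x * B z + A z := by
    intro z x
    have e : ∀ y, Kk z y * (g x - g y) ^ 2
        = g x ^ 2 * Kk z y - (2 * g x) * (Kk z y * g y) + Kk z y * g y ^ 2 := fun y => by ring
    rw [tsum_congr e,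
      Summable.tsum_add (Summable.sub ((hK1 z).summable.mul_left _) ((hD2 z).mul_left _)) (hD1 z),
      Summable.tsum_sub ((hK1 z).summable.mul_left _) ((hD2 z).mul_left _),
      tsum_mul_left, tsum_mul_left, (hK1 z).tsum_eq]
    simp only [hA, hB, act]
    ring
  -- inner-x sum
  have hSx_sum : ∀ z, Summable fun x => Kk z x * (g x ^ 2 - 2 * g x * B z + A z) := by
    intro z
    refine Summable.congr (Summable.add (Summable.sub (hD1 z) ((hD2 z).mul_left (2 * B z)))
      ((hK1 z).summable.mul_left (A z))) fun x => ?_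
    ring
  have hSx : ∀ z, ∑' x, Kk z x * (g x ^ 2 - 2 * g x * B z + A z) = 2 * A z - 2 * B z ^ 2 := by
    intro z
    have e : ∀ x, Kk z x * (g x ^ 2 - 2 * g x * B z + A z)
        = Kk z x * g x ^ 2 - (2 * B z) * (Kk z x * g x) + A z * Kk z x := fun x => by ring
    rw [tsum_congr e,
      Summable.tsum_add (Summable.sub (hD1 z) ((hD2 z).mul_left _)) ((hK1 z).summable.mul_left _),
      Summable.tsum_sub (hD1 z) ((hD2 z).mul_left _), tsum_mul_left, tsum_mul_left, (hK1 z).tsum_eq]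
    simp only [hA, hB, act]
    ring
  -- the pair sum for fixed z
  have hPnn : ∀ z, 0 ≤ fun w : V × V => Kk z w.1 * Kk z w.2 * (g w.1 - g w.2) ^ 2 :=
    fun z => Pi.le_def.mpr fun w => mul_nonneg (mul_nonneg (hK0 _ _) (hK0 _ _)) (sq_nonneg _)
  have hP : ∀ z, Summable fun w : V × V => Kk z w.1 * Kk z w.2 * (g w.1 - g w.2) ^ 2 := by
    intro z
    rw [summable_prod_of_nonneg (hPnn z)]
    constructor
    · intro x
      exact ((hSy_sum z x).mul_left (Kk z x)).congr fun y => by ring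
    · refine Summable.congr ((hSx_sum z).congr fun x => rfl) fun x => ?_
      have e : (∑' (y : V), Kk z (x, y).1 * Kk z (x, y).2 * (g (x, y).1 - g (x, y).2) ^ 2)
          = ∑' (y : V), Kk z x * (Kk z y * (g x - g y) ^ 2) := tsum_congr fun y => by
        show Kk z x * Kk z y * (g x - g y) ^ 2 = Kk z x * (Kk z y * (g x - g y) ^ 2)
        ring
      rw [e, tsum_mul_left, hSy z x]
  have hPval : ∀ z, ∑' w : V × V, Kk z w.1 * Kk z w.2 * (g w.1 - g w.2) ^ 2
      = 2 * A z - 2 * B z ^ 2 := by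
    intro z
    rw [Summable.tsum_prod (hP z)]
    calc ∑' x, ∑' y, Kk z x * Kk z y * (g x - g y) ^ 2
        = ∑' x, Kk z x * (g x ^ 2 - 2 * g x * B z + A z) := by
          refine tsum_congr fun x => ?_
          rw [← hSy z x, ← tsum_mul_left]
          exact tsum_congr fun y => by ring
      _ = 2 * A z - 2 * B z ^ 2 := hSx z
  -- triple sum
  have hTnn : 0 ≤ fun w : V × V × V =>
      p w.1 * (Kk w.1 w.2.1 * Kk w.1 w.2.2 * (g w.2.1 - g w.2.2) ^ 2) :=
    Pi.le_def.mpr fun w => mul_nonneg (hp0 _).le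
      (mul_nonneg (mul_nonneg (hK0 _ _) (hK0 _ _)) (sq_nonneg _))
  have hT : Summable fun w : V × V × V =>
      p w.1 * (Kk w.1 w.2.1 * Kk w.1 w.2.2 * (g w.2.1 - g w.2.2) ^ 2) := by
    rw [summable_prod_of_nonneg hTnn]
    constructor
    · intro z
      exact (hP z).mul_left (p z)
    · refine Summable.congr (Summable.sub (hD5pre.mul_left 2) (hD5.mul_left 2)) fun z => ?_
      show 2 * (p z * ∑' (y : V), Kk z y * g y ^ 2) - 2 * (p z * act Kk g z ^ 2)
        = ∑' (w : V × V), p z * (Kk z w.1 * Kk z w.2 * (g w.1 - g w.2) ^ 2)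
      rw [tsum_mul_left, hPval z]
      simp only [hA, hB]
      ring
  have hTval : ∑' w : V × V × V,
      p w.1 * (Kk w.1 w.2.1 * Kk w.1 w.2.2 * (g w.2.1 - g w.2.2) ^ 2)
      = 2 * ((∑' x, p x * g x ^ 2) - ∑' x, p x * (act Kk g x) ^ 2) := by
    have e1 : ∀ z, ∑' w : V × V, p z * (Kk z w.1 * Kk z w.2 * (g w.1 - g w.2) ^ 2)
        = 2 * (p z * A z) - 2 * (p z * B z ^ 2) := by
      intro z
      rw [tsum_mul_left, hPval z]
      ring
    have e0 : (∑' w : V × V × V,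
        p w.1 * (Kk w.1 w.2.1 * Kk w.1 w.2.2 * (g w.2.1 - g w.2.2) ^ 2))
        = ∑' z, ∑' w : V × V, p z * (Kk z w.1 * Kk z w.2 * (g w.1 - g w.2) ^ 2) :=
      (Summable.tsum_prod hT).trans (tsum_congr fun z => rfl)
    rw [e0, tsum_congr e1, Summable.tsum_sub (hD5pre.mul_left 2) (hD5.mul_left 2),
      tsum_mul_left, tsum_mul_left, hinv_eq]
    ring
  -- rewrite the Dirichlet form
  have hU : Summable fun w : (V × V) × V =>
      p w.2 * (Kk w.2 w.1.1 * Kk w.2 w.1.2 * (g w.1.1 - g w.1.2) ^ 2) := by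
    have := hT.prod_symm
    exact this.congr fun w => rfl
  have hUnn : 0 ≤ fun w : (V × V) × V =>
      p w.2 * (Kk w.2 w.1.1 * Kk w.2 w.1.2 * (g w.1.1 - g w.1.2) ^ 2) :=
    Pi.le_def.mpr fun w => mul_nonneg (hp0 _).le
      (mul_nonneg (mul_nonneg (hK0 _ _) (hK0 _ _)) (sq_nonneg _))
  have hUval : ∑' w : (V × V) × V,
      p w.2 * (Kk w.2 w.1.1 * Kk w.2 w.1.2 * (g w.1.1 - g w.1.2) ^ 2)
      = 2 * ((∑' x, p x * g x ^ 2) - ∑' x, p x * (act Kk g x) ^ 2) := by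
    rw [← hTval, ← (Equiv.prodComm (V × V) V).tsum_eq]
    exact tsum_congr fun w => rfl
  -- identify summand of dirichlet with ∑'_z
  have hQsummand : ∀ x y, (g x - g y) ^ 2 * p x * Qker p Kk x y
      = ∑' z, p z * (Kk z x * Kk z y * (g x - g y) ^ 2) := by
    intro x y
    have e0 : Qker p Kk x y = ∑' z, (p z * Kk z x / p x) * Kk z y := rfl
    rw [e0, ← tsum_mul_left]
    refine tsum_congr fun z => ?_
    have hx := (hp0 x).ne'
    field_simp
  have hpairsum : Summable fun w : V × V => ∑' z,
      p z * (Kk z w.1 * Kk z w.2 * (g w.1 - g w.2) ^ 2) :=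
    ((summable_prod_of_nonneg hUnn).mp hU).2
  calc dirichlet (Qker p Kk) p g
      = (1 / 2) * ∑' x, ∑' y, (g x - g y) ^ 2 * p x * Qker p Kk x y := rfl
    _ = (1 / 2) * ∑' x, ∑' y, ∑' z, p z * (Kk z x * Kk z y * (g x - g y) ^ 2) := by
        rw [tsum_congr fun x => tsum_congr fun y => hQsummand x y]
    _ = (1 / 2) * ∑' w : (V × V) × V,
          p w.2 * (Kk w.2 w.1.1 * Kk w.2 w.1.2 * (g w.1.1 - g w.1.2) ^ 2) := by
        congr 1
        exact ((Summable.tsum_prod hpairsum).symm).trans (Summable.tsum_prod hU).symm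
    _ = (∑' x, p x * g x ^ 2) - ∑' x, p x * (act Kk g x) ^ 2 := by
        rw [hUval]; ring


lemma tsum_shift {ι : Type*} {μ h : ι → ℝ} (hμ : Summable μ)
    (h1 : Summable fun x => μ x * h x) (h2 : Summable fun x => μ x * h x ^ 2) (t : ℝ) :
    ∑' x, μ x * (h x - t) ^ 2
      = (∑' x, μ x * h x ^ 2) - 2 * t * (∑' x, μ x * h x) + t ^ 2 * ∑' x, μ x := by
  have e : ∀ x, μ x * (h x - t) ^ 2
      = μ x * h x ^ 2 - (2 * t) * (μ x * h x) + t ^ 2 * μ x := fun x => by ring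
  rw [tsum_congr e, Summable.tsum_add (Summable.sub h2 (h1.mul_left _)) (hμ.mul_left _),
    Summable.tsum_sub h2 (h1.mul_left _), tsum_mul_left, tsum_mul_left]

lemma dirichlet_sub_const (Q : V → V → ℝ) (p f : V → ℝ) (m : ℝ) :
    dirichlet Q p (fun x => f x - m) = dirichlet Q p f := by
  unfold dirichlet
  congr 1
  exact tsum_congr fun x => tsum_congr fun y => by rw [sub_sub_sub_cancel_right]

lemma poincare_le (Q : V → V → ℝ) (p : V → ℝ)
    (hE : ∀ h : V → ℝ, 0 ≤ dirichlet Q p h) (f : V → ℝ) (hf : MemL2 p f) :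
    0 ≤ poincareConst Q p ∧ poincareConst Q p * var p f ≤ dirichlet Q p f := by
  classical
  set S := {γ : ℝ | 0 ≤ γ ∧ ∀ g : V → ℝ, MemL2 p g → γ * var p g ≤ dirichlet Q p g} with hS
  have h0 : (0:ℝ) ∈ S := ⟨le_refl 0, fun g _ => by rw [zero_mul]; exact hE g⟩
  have hPC : poincareConst Q p = sSup S := rfl
  have h0le : 0 ≤ sSup S := by
    by_cases hb : BddAbove S
    · exact le_csSup hb h0
    · rw [Real.sSup_of_not_bddAbove hb]
  refine ⟨hPC ▸ h0le, ?_⟩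
  rw [hPC]
  rcases lt_or_ge 0 (var p f) with hv | hv
  · have hub : sSup S ≤ dirichlet Q p f / var p f :=
      csSup_le ⟨0, h0⟩ fun γ' hγ' => (le_div_iff₀ hv).mpr (hγ'.2 f hf)
    calc sSup S * var p f ≤ (dirichlet Q p f / var p f) * var p f :=
          mul_le_mul_of_nonneg_right hub hv.le
      _ = dirichlet Q p f := div_mul_cancel₀ _ hv.ne'
  · have h2 : sSup S * var p f ≤ sSup S * 0 := mul_le_mul_of_nonneg_left hv h0le
    rw [mul_zero] at h2
    exact h2.trans (hE f)

end Stmt2Aux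


/-- one-step Poincaré contraction in a non-decreasing environment.
For every `r ≥ 1` and `f ∈ ℓ²(π_r)`,
`‖K_r f − π̃_{r-1}(K_r f)‖²_{ℓ²(π_{r-1})} ≤ (1 − γ_r) ‖f − π̃_r(f)‖²_{ℓ²(π_r)}`,
with the convention `π_0 := π_1`. -/
theorem stmt2 {V : Type*} [Countable V]
    (K : ℕ → V → V → ℝ) (π : ℕ → V → ℝ)
    (henv : NonDecEnv K π) (hπ0 : π 0 = π 1)
    (γ : ℕ → ℝ)
    (hγ : ∀ s, γ s = poincareConst (Qker (nmz (π s)) (K s)) (nmz (π s)))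
    (r : ℕ) (hr : 1 ≤ r) (f : V → ℝ) (hf : MemL2 (π r) f) :
    (∑' x, π (r - 1) x *
        (act (K r) f x - integral (nmz (π (r - 1))) (act (K r) f)) ^ 2) ≤
      (1 - γ r) * ∑' x, π r x * (f x - integral (nmz (π r)) f) ^ 2 := by
  classical
  rcases isEmpty_or_nonempty V with hV | hV
  · simp [tsum_empty]
  obtain ⟨x0⟩ := hV
  obtain ⟨hKmark, hpos, hsum, hinvπ, hmono⟩ := henv
  obtain ⟨hK0, hK1b, hK1⟩ := hKmark r hr
  have hπsum : Summable (π r) := hsum r hr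
  have hπpos : ∀ x, 0 < π r x := hpos r hr
  set M := mass (π r) with hM
  have hMpos : 0 < M := Summable.tsum_pos hπsum (fun x => (hπpos x).le) x0 (hπpos x0)
  set p := nmz (π r) with hp
  have hp0 : ∀ x, 0 < p x := fun x => div_pos (hπpos x) hMpos
  have hpm : ∀ x, p x * M = π r x := fun x => div_mul_cancel₀ _ hMpos.ne'
  have hps : HasSum p 1 := by
    have h1 := hπsum.hasSum.div_const M
    have hMe : (∑' b, π r b) = M := rfl
    rw [hMe, div_self hMpos.ne'] at h1
    exact h1
  have hinvp : ∀ y, HasSum (fun x => p x * K r x y) (p y) := by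
    intro y
    have h1 := (hinvπ r hr y).div_const M
    have e : (fun x => π r x * K r x y / M) = fun x => p x * K r x y :=
      funext fun x => (div_mul_eq_mul_div _ _ _).symm
    rw [e] at h1
    exact h1
  have hf' : Summable (fun x => π r x * f x ^ 2) := hf
  have hf2p : Summable fun x => p x * f x ^ 2 :=
    (hf'.div_const M).congr fun x => (div_mul_eq_mul_div _ _ _).symm
  set m := integral p f with hm
  set g : V → ℝ := fun x => f x - m with hg
  have hpf : Summable fun x => p x * f x :=
    Stmt2Aux.summable_pf (fun x => (hp0 x).le) hps.summable hf2p
  have hg2 : Summable fun x => p x * g x ^ 2 := by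
    have e : ∀ x, p x * f x ^ 2 - (2 * m) * (p x * f x) + m ^ 2 * p x = p x * g x ^ 2 :=
      fun x => by simp only [hg]; ring
    exact ((hf2p.sub (hpf.mul_left _)).add (hps.summable.mul_left _)).congr e
  obtain ⟨hKg2, hcore⟩ := Stmt2Aux.core hp0 hps hK0 hK1 hinvp hg2
  -- act(K) f = act(K) g + m
  have hKle : ∀ x y, p x * K r x y ≤ p y := fun x y =>
    le_hasSum (hinvp y) x (fun z _ => mul_nonneg (hp0 z).le (hK0 z y))
  have hpabsf : Summable fun y => p y * |f y| :=
    Stmt2Aux.summable_pf (fun y => (hp0 y).le) hps.summable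
      (hf2p.congr fun y => by rw [sq_abs])
  have hKf_sum : ∀ x, Summable fun y => K r x y * f y := by
    intro x
    refine Summable.of_abs (Summable.of_nonneg_of_le (fun y => abs_nonneg _)
      (fun y => ?_) (hpabsf.mul_left (p x)⁻¹))
    rw [abs_mul, abs_of_nonneg (hK0 x y)]
    have h1 : K r x y ≤ (p x)⁻¹ * p y := by
      rw [← div_eq_inv_mul, le_div_iff₀ (hp0 x), mul_comm]
      exact hKle x y
    calc K r x y * |f y| ≤ ((p x)⁻¹ * p y) * |f y| :=
          mul_le_mul_of_nonneg_right h1 (abs_nonneg _)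
      _ = (p x)⁻¹ * (p y * |f y|) := by ring
  have hact : ∀ x, act (K r) f x = act (K r) g x + m := by
    intro x
    have e : ∀ y, K r x y * g y = K r x y * f y - m * K r x y := fun y => by
      simp only [hg]; ring
    have h1 : act (K r) g x = act (K r) f x - m * 1 := by
      show (∑' y, K r x y * g y) = (∑' y, K r x y * f y) - m * 1
      rw [tsum_congr e, Summable.tsum_sub (hKf_sum x) ((hK1 x).summable.mul_left m),
        tsum_mul_left, (hK1 x).tsum_eq]
    rw [h1]; ring
  -- summability at the π r level
  have hKgabs : Summable fun x => p x * |act (K r) g x| :=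
    Stmt2Aux.summable_pf (fun x => (hp0 x).le) hps.summable
      (hKg2.congr fun x => by rw [sq_abs])
  have hπKg2 : Summable fun x => π r x * act (K r) g x ^ 2 :=
    (hKg2.mul_left M).congr fun x => by rw [← mul_assoc, mul_comm M, hpm x]
  have hπKgabs : Summable fun x => π r x * |act (K r) g x| :=
    (hKgabs.mul_left M).congr fun x => by rw [← mul_assoc, mul_comm M, hpm x]
  have hπKg : Summable fun x => π r x * act (K r) g x :=
    Summable.of_abs (hπKgabs.congr fun x => by
      rw [abs_mul, abs_of_nonneg (hπpos x).le])
  have hπKF2 : Summable fun x => π r x * act (K r) f x ^ 2 := by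
    have e : ∀ x, π r x * act (K r) g x ^ 2 + (2 * m) * (π r x * act (K r) g x)
        + m ^ 2 * π r x = π r x * act (K r) f x ^ 2 := fun x => by rw [hact x]; ring
    exact ((hπKg2.add (hπKg.mul_left _)).add (hπsum.mul_left _)).congr e
  have hπabsKF : Summable fun x => π r x * |act (K r) f x| :=
    Stmt2Aux.summable_pf (fun x => (hπpos x).le) hπsum
      (hπKF2.congr fun x => by rw [sq_abs])
  -- the measure π (r-1)
  have hle' : ∀ x, π (r - 1) x ≤ π r x := by
    rcases Nat.lt_or_ge r 2 with h2 | h2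
    · have : r = 1 := by omega
      subst this
      intro x; simp [hπ0]
    · intro x
      have h3 : 1 ≤ r - 1 := by omega
      have h4 := hmono (r - 1) h3 x
      have h5 : r - 1 + 1 = r := by omega
      rwa [h5] at h4
  have hpos' : ∀ x, 0 < π (r - 1) x := by
    rcases Nat.lt_or_ge r 2 with h2 | h2
    · have : r = 1 := by omega
      subst this
      intro x; rw [show (1:ℕ) - 1 = 0 from rfl, hπ0]; exact hπpos x
    · have h3 : 1 ≤ r - 1 := by omega
      exact hpos (r - 1) h3
  have hπ'sum : Summable (π (r - 1)) :=
    Summable.of_nonneg_of_le (fun x => (hpos' x).le) hle' hπsum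
  have hM'pos : 0 < mass (π (r - 1)) :=
    Summable.tsum_pos hπ'sum (fun x => (hpos' x).le) x0 (hpos' x0)
  set c := integral (nmz (π (r - 1))) (act (K r) f) with hc
  have hπ'KF2 : Summable fun x => π (r - 1) x * act (K r) f x ^ 2 :=
    Summable.of_nonneg_of_le (fun x => mul_nonneg (hpos' x).le (sq_nonneg _))
      (fun x => mul_le_mul_of_nonneg_right (hle' x) (sq_nonneg _)) hπKF2
  have hπ'KF : Summable fun x => π (r - 1) x * act (K r) f x := by
    refine Summable.of_abs (Summable.of_nonneg_of_le (fun x => abs_nonneg _)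
      (fun x => ?_) hπabsKF)
    rw [abs_mul, abs_of_nonneg (hpos' x).le]
    exact mul_le_mul_of_nonneg_right (hle' x) (abs_nonneg _)
  -- value of c
  have hcY : c * mass (π (r - 1)) = ∑' x, π (r - 1) x * act (K r) f x := by
    have e1 : c = (∑' x, π (r - 1) x * act (K r) f x) / mass (π (r - 1)) := by
      rw [hc]
      show (∑' x, (π (r - 1) x / mass (π (r - 1))) * act (K r) f x) = _
      rw [tsum_congr fun x => div_mul_eq_mul_div (π (r - 1) x) (mass (π (r - 1)))
        (act (K r) f x), tsum_div_const]
    rw [e1, div_mul_cancel₀ _ hM'pos.ne']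
  -- Step A : the mean minimises the L² distance
  have stepA : (∑' x, π (r - 1) x * (act (K r) f x - c) ^ 2)
      ≤ ∑' x, π (r - 1) x * (act (K r) f x - m) ^ 2 := by
    rw [Stmt2Aux.tsum_shift hπ'sum hπ'KF hπ'KF2 c,
      Stmt2Aux.tsum_shift hπ'sum hπ'KF hπ'KF2 m, ← hcY]
    rw [show (∑' (x : V), π (r - 1) x) = mass (π (r - 1)) from rfl]
    nlinarith [hM'pos, mul_nonneg hM'pos.le (sq_nonneg (c - m))]
  -- Step B : monotonicity of the measure
  have hπrKm2 : Summable fun x => π r x * (act (K r) f x - m) ^ 2 :=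
    hπKg2.congr fun x => by rw [hact x]; ring
  have hπ'Km2 : Summable fun x => π (r - 1) x * (act (K r) f x - m) ^ 2 :=
    Summable.of_nonneg_of_le (fun x => mul_nonneg (hpos' x).le (sq_nonneg _))
      (fun x => mul_le_mul_of_nonneg_right (hle' x) (sq_nonneg _)) hπrKm2
  have stepB : (∑' x, π (r - 1) x * (act (K r) f x - m) ^ 2)
      ≤ ∑' x, π r x * (act (K r) f x - m) ^ 2 :=
    Summable.tsum_le_tsum (fun x => mul_le_mul_of_nonneg_right (hle' x) (sq_nonneg _))
      hπ'Km2 hπrKm2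
  -- Step C : Poincaré inequality
  have hQnn : ∀ x y, 0 ≤ Qker p (K r) x y := fun x y =>
    tsum_nonneg fun z => mul_nonneg
      (div_nonneg (mul_nonneg (hp0 z).le (hK0 z x)) (hp0 x).le) (hK0 z y)
  have hE : ∀ h : V → ℝ, 0 ≤ dirichlet (Qker p (K r)) p h := fun h =>
    mul_nonneg (by norm_num) (tsum_nonneg fun x => tsum_nonneg fun y =>
      mul_nonneg (mul_nonneg (sq_nonneg _) (hp0 x).le) (hQnn x y))
  obtain ⟨hγ0, hγle⟩ := Stmt2Aux.poincare_le (Qker p (K r)) p hE f hf2p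
  have hγr : γ r = poincareConst (Qker p (K r)) p := hγ r
  have hvar : var p f = ∑' x, p x * g x ^ 2 := by
    have e1 : (∑' x, p x * g x ^ 2) = ∑' x, p x * (f x - m) ^ 2 :=
      tsum_congr fun x => rfl
    rw [e1, Stmt2Aux.tsum_shift hps.summable hpf hf2p m, hps.tsum_eq]
    have hm' : (∑' x, p x * f x) = m := rfl
    show (∑' x, p x * f x ^ 2) - (∑' x, p x * f x) ^ 2 = _
    rw [hm']
    ring
  have hdg : dirichlet (Qker p (K r)) p g = dirichlet (Qker p (K r)) p f := by
    rw [hg]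
    exact Stmt2Aux.dirichlet_sub_const _ _ _ _
  have hfinal : (∑' x, p x * act (K r) g x ^ 2)
      ≤ (1 - γ r) * ∑' x, p x * g x ^ 2 := by
    have h1 : γ r * var p f ≤ dirichlet (Qker p (K r)) p f := hγr ▸ hγle
    rw [hvar, ← hdg, hcore] at h1
    nlinarith [h1]
  -- assembling
  have hconv : ∀ h : V → ℝ, (∑' x, π r x * h x) = M * ∑' x, p x * h x := by
    intro h
    rw [← tsum_mul_left]
    exact tsum_congr fun x => by rw [← mul_assoc, mul_comm M, hpm x]
  calc (∑' x, π (r - 1) x * (act (K r) f x - c) ^ 2)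
      ≤ ∑' x, π (r - 1) x * (act (K r) f x - m) ^ 2 := stepA
    _ ≤ ∑' x, π r x * (act (K r) f x - m) ^ 2 := stepB
    _ = M * ∑' x, p x * act (K r) g x ^ 2 := by
        rw [tsum_congr fun x => show π r x * (act (K r) f x - m) ^ 2
          = π r x * act (K r) g x ^ 2 from by rw [hact x]; ring]
        exact hconv _
    _ ≤ M * ((1 - γ r) * ∑' x, p x * g x ^ 2) :=
        mul_le_mul_of_nonneg_left hfinal hMpos.le
    _ = (1 - γ r) * ∑' x, π r x * (f x - m) ^ 2 := by
        have e2 : (∑' x, π r x * (f x - m) ^ 2) = ∑' x, π r x * g x ^ 2 :=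
          tsum_congr fun x => rfl
        rw [e2, hconv fun x => g x ^ 2]
        ring
end

section
/- Let {(K_t, π_t)}_{t≥1} be a non-decreasing finite environment on a countable discrete set V, and let γ_s be the Poincaré constant of Q_s = K_s^* K_s. Then for every t ≥ 1 and all x, y ∈ V, d_TV(μ_t^x, μ_t^y) ≤ (1/2) · sqrt(π_t(V)/π_1(V)) · (1/sqrt(π̃_1(x)) + 1/sqrt(π̃_1(y))) · ∏_{s=1}^t sqrt(1 − γ_s). -/
open scoped BigOperators Classical
open Filter

section Helpers
variable {ι κ : Type*}

/-- Cauchy–Schwarz for tsums. -/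
lemma tsum_CS (a b : ι → ℝ) (ha : Summable fun x => a x ^ 2)
    (hb : Summable fun x => b x ^ 2) :
    (∑' x, a x * b x) ^ 2 ≤ (∑' x, a x ^ 2) * (∑' x, b x ^ 2) := by
  have habs : Summable fun x => |a x * b x| := by
    refine Summable.of_nonneg_of_le (fun x => abs_nonneg _) (fun x => ?_)
      (((ha.add hb).div_const 2))
    have h1 : |a x * b x| = |a x| * |b x| := abs_mul _ _
    have h2 : |a x| ^ 2 = a x ^ 2 := sq_abs _
    have h3 : |b x| ^ 2 = b x ^ 2 := sq_abs _
    nlinarith [abs_nonneg (a x), abs_nonneg (b x), sq_nonneg (|a x| - |b x|)]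
  have hab : Summable fun x => a x * b x := habs.of_abs
  have ht : Tendsto (fun F : Finset ι => (∑ x ∈ F, a x * b x) ^ 2) atTop
      (nhds ((∑' x, a x * b x) ^ 2)) := hab.hasSum.pow 2
  refine le_of_tendsto ht ?_
  filter_upwards with F
  calc (∑ x ∈ F, a x * b x) ^ 2 ≤ (∑ x ∈ F, a x ^ 2) * (∑ x ∈ F, b x ^ 2) :=
        Finset.sum_mul_sq_le_sq_mul_sq F a b
    _ ≤ (∑' x, a x ^ 2) * (∑' x, b x ^ 2) :=
        mul_le_mul (Summable.sum_le_tsum F (fun x _ => sq_nonneg _) ha)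
          (Summable.sum_le_tsum F (fun x _ => sq_nonneg _) hb)
          (Finset.sum_nonneg (fun x _ => sq_nonneg _)) (tsum_nonneg (fun x => sq_nonneg _))

/-- Fubini for summable double families. -/
lemma my_tsum_comm {f : ι → κ → ℝ} (h : Summable (Function.uncurry f)) :
    ∑' x, ∑' y, f x y = ∑' y, ∑' x, f x y :=
  (Summable.tsum_comm' h (fun b => h.prod_factor b) (fun c => h.prod_symm.prod_factor c)).symm

/-- Summability criterion for nonnegative double families. -/
lemma my_summable_prod {f : ι → κ → ℝ} (h0 : ∀ x y, 0 ≤ f x y)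
    (h1 : ∀ x, Summable (f x)) (h2 : Summable fun x => ∑' y, f x y) :
    Summable (Function.uncurry f) :=
  (summable_prod_of_nonneg (fun p => h0 p.1 p.2)).2 ⟨h1, h2⟩

set_option maxHeartbeats 1000000 in
lemma tsum_prod_mul {F : ι → ℝ} {G : κ → ℝ} (hFG : Summable fun q : ι × κ => F q.1 * G q.2)
    (hG : Summable (G : κ → ℝ)) :
    ∑' q : ι × κ, F q.1 * G q.2 = (∑' x, F x) * (∑' y, G y) := by
  have h1 : ∑' q : ι × κ, F q.1 * G q.2 = ∑' x, ∑' y, F x * G y :=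
    Summable.tsum_prod' hFG fun b => by simpa using hG.mul_left (F b)
  rw [h1, ← tsum_mul_right]
  exact tsum_congr fun x => tsum_mul_left

lemma sqrt_finset_prod {s : Finset ι} {f : ι → ℝ} (hf : ∀ i ∈ s, 0 ≤ f i) :
    Real.sqrt (∏ i ∈ s, f i) = ∏ i ∈ s, Real.sqrt (f i) := by
  classical
  induction s using Finset.induction_on with
  | empty => simp
  | insert a t hx ih =>
    rw [Finset.prod_insert hx, Finset.prod_insert hx,
      Real.sqrt_mul (hf a (Finset.mem_insert_self a t)),
      ih (fun i hi => hf i (Finset.mem_insert_of_mem hi))]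

lemma sqrt_max_zero (c : ℝ) : Real.sqrt (max c 0) = Real.sqrt c := by
  rcases le_total c 0 with h | h
  · rw [max_eq_right h, Real.sqrt_zero, Real.sqrt_eq_zero_of_nonpos h]
  · rw [max_eq_left h]

end Helpers

section Step
variable {V : Type*} [Countable V]

lemma actMeas_hasSum (K : V → V → ℝ) (hK0 : ∀ x y, 0 ≤ K x y) (hK1 : ∀ x, HasSum (K x) 1)
    {μ : V → ℝ} {c : ℝ} (hμa : Summable fun x => |μ x|) (hm : HasSum μ c) :
    HasSum (actMeas K μ) c := by
  have hK1' : ∀ z y, K z y ≤ 1 := fun z y => le_hasSum (hK1 z) y (fun j _ => hK0 z j)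
  have habs : Summable (Function.uncurry fun x y => |μ x| * K x y) := by
    refine my_summable_prod (fun x y => mul_nonneg (abs_nonneg _) (hK0 x y))
      (fun x => (hK1 x).summable.mul_left _) ?_
    have he : ∀ x, ∑' y, |μ x| * K x y = |μ x| := by
      intro x
      rw [tsum_mul_left, (hK1 x).tsum_eq, mul_one]
    rw [funext he]
    exact hμa
  have hU : Summable (Function.uncurry fun x y => μ x * K x y) := by
    rw [← summable_abs_iff]
    refine habs.congr fun q => ?_
    simp [Function.uncurry, abs_mul, abs_of_nonneg (hK0 q.1 q.2)]
  have hsum : Summable (actMeas K μ) := by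
    refine (hU.prod_symm.prod).congr fun y => ?_
    rfl
  rw [Summable.hasSum_iff hsum]
  have h1 : ∑' y, actMeas K μ y = ∑' y, ∑' x, μ x * K x y := rfl
  rw [h1, ← my_tsum_comm hU]
  have h2 : ∀ x, ∑' y, μ x * K x y = μ x := by
    intro x
    rw [tsum_mul_left, (hK1 x).tsum_eq, mul_one]
  rw [tsum_congr h2, hm.tsum_eq]

set_option maxHeartbeats 4000000 in
lemma step (K : V → V → ℝ) (p : V → ℝ)
    (hK0 : ∀ x y, 0 ≤ K x y) (hK1 : ∀ x, HasSum (K x) 1)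
    (hp : ∀ x, 0 < p x) (hps : HasSum p 1)
    (hinv : ∀ y, HasSum (fun x => p x * K x y) (p y)) (ν : V → ℝ)
    (hν0 : HasSum ν 0) (hνs : Summable fun z => ν z ^ 2 / p z) :
    Summable (fun z => actMeas K ν z ^ 2 / p z) ∧
    (∑' z, actMeas K ν z ^ 2 / p z) ≤
      max (1 - poincareConst (Qker p K) p) 0 * ∑' z, ν z ^ 2 / p z ∧
    HasSum (actMeas K ν) 0 := by
  classical
  have hpne : ∀ x, p x ≠ 0 := fun x => (hp x).ne'
  have hK1' : ∀ z y, K z y ≤ 1 := fun z y => le_hasSum (hK1 z) y (fun j _ => hK0 z j)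
  have hpK_le : ∀ z y, p z * K z y ≤ p y := fun z y =>
    le_hasSum (hinv y) z (fun j _ => mul_nonneg (hp j).le (hK0 j y))
  have hνa : Summable fun z => |ν z| := by
    refine Summable.of_nonneg_of_le (fun z => abs_nonneg _) (fun z => ?_)
      ((hps.summable.add hνs).div_const 2)
    have hv : ν z ^ 2 / p z * p z = ν z ^ 2 := div_mul_cancel₀ _ (hpne z)
    nlinarith [sq_nonneg (p z - |ν z|), sq_abs (ν z), hp z, abs_nonneg (ν z)]
  set ν' : V → ℝ := actMeas K ν with hν'def
  have hν'0 : HasSum ν' 0 := actMeas_hasSum K hK0 hK1 hνa hν0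
  -- the key square-integrability family
  set W : V → V → ℝ := fun x y => ν x ^ 2 / p x * K x y with hWdef
  have hWnn : ∀ x y, 0 ≤ W x y := fun x y =>
    mul_nonneg (div_nonneg (sq_nonneg _) (hp x).le) (hK0 x y)
  have hWrow : ∀ x, ∑' y, W x y = ν x ^ 2 / p x := by
    intro x; rw [hWdef]; rw [tsum_mul_left, (hK1 x).tsum_eq, mul_one]
  have hWs : Summable (Function.uncurry W) := by
    refine my_summable_prod hWnn (fun x => (hK1 x).summable.mul_left _) ?_
    rw [funext hWrow]; exact hνs
  -- pointwise Cauchy-Schwarz for ν'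
  have hCS4 : ∀ y, ν' y ^ 2 ≤ (∑' x, W x y) * p y := by
    intro y
    have e1 : ∀ x, (ν x * Real.sqrt (K x y) / Real.sqrt (p x)) ^ 2 = W x y := by
      intro x
      rw [div_pow, mul_pow, Real.sq_sqrt (hK0 x y), Real.sq_sqrt (hp x).le]
      rw [hWdef]; ring
    have e2 : ∀ x, (Real.sqrt (p x) * Real.sqrt (K x y)) ^ 2 = p x * K x y := by
      intro x
      rw [mul_pow, Real.sq_sqrt (hK0 x y), Real.sq_sqrt (hp x).le]
    have e3 : ∀ x, (ν x * Real.sqrt (K x y) / Real.sqrt (p x)) *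
        (Real.sqrt (p x) * Real.sqrt (K x y)) = ν x * K x y := by
      intro x
      have hs : Real.sqrt (p x) ≠ 0 := Real.sqrt_ne_zero'.2 (hp x)
      have : Real.sqrt (K x y) * Real.sqrt (K x y) = K x y := Real.mul_self_sqrt (hK0 x y)
      rw [div_mul_eq_mul_div, div_eq_iff hs]
      linear_combination ν x * Real.sqrt (p x) * this
    have h := tsum_CS (fun x => ν x * Real.sqrt (K x y) / Real.sqrt (p x))
      (fun x => Real.sqrt (p x) * Real.sqrt (K x y))
      (by rw [funext e1]
          refine Summable.of_nonneg_of_le (fun x => hWnn x y) (fun x => ?_) hνs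
          exact mul_le_of_le_one_right (div_nonneg (sq_nonneg _) (hp x).le) (hK1' x y))
      (by rw [funext e2]; exact (hinv y).summable)
    rw [funext e3, funext e1, funext e2, (hinv y).tsum_eq] at h
    have hn : ν' y = ∑' x, ν x * K x y := rfl
    rw [hn]
    exact h
  
  -- square integrability of ν'
  have hcol : Summable fun y => ∑' x, W x y := hWs.prod_symm.prod
  have hB1 : ∀ y, ν' y ^ 2 / p y ≤ ∑' x, W x y := by
    intro y
    rw [div_le_iff₀ (hp y)]
    exact hCS4 y
  have hsum' : Summable fun y => ν' y ^ 2 / p y :=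
    Summable.of_nonneg_of_le (fun y => div_nonneg (sq_nonneg _) (hp y).le) hB1 hcol
  set A : ℝ := ∑' z, ν z ^ 2 / p z with hAdef
  set N : ℝ := ∑' y, ν' y ^ 2 / p y with hNdef
  have hAnn : 0 ≤ A := tsum_nonneg fun z => div_nonneg (sq_nonneg _) (hp z).le
  have hNnn : 0 ≤ N := tsum_nonneg fun z => div_nonneg (sq_nonneg _) (hp z).le
  rcases eq_or_lt_of_le hNnn with hN0 | hNpos
  · exact ⟨hsum', by rw [← hN0]; exact mul_nonneg (le_max_right _ _) hAnn, hν'0⟩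
  -- main case : N > 0
  refine ⟨hsum', ?_, hν'0⟩
  set h : V → ℝ := fun y => ν' y / p y with hhdef
  have hph : ∀ y, p y * h y = ν' y := by
    intro y; rw [hhdef]; rw [mul_comm]; exact div_mul_cancel₀ _ (hpne y)
  have hphh : ∀ y, p y * h y ^ 2 = ν' y ^ 2 / p y := by
    intro y
    rw [hhdef]
    field_simp
  have hL2h : MemL2 p h := by
    unfold MemL2
    rw [funext hphh]
    exact hsum'
  have hmean : ∑' y, p y * h y = 0 := by
    rw [funext hph]
    exact hν'0.tsum_eq
  have hNeq : ∑' y, p y * h y ^ 2 = N := by rw [funext hphh]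
  have hvar : var p h = N := by
    unfold var
    rw [hNeq, hmean]
    ring
  
  -- Q kernel facts
  set Q : V → V → ℝ := Qker p K with hQdef
  have hQz : ∀ x y, Summable fun z => p z * K z x * K z y := by
    intro x y
    refine Summable.of_nonneg_of_le
      (fun z => mul_nonneg (mul_nonneg (hp z).le (hK0 z x)) (hK0 z y))
      (fun z => mul_le_of_le_one_right (mul_nonneg (hp z).le (hK0 z x)) (hK1' z y))
      (hinv x).summable
  have hQform : ∀ x y, Q x y = (∑' z, p z * K z x * K z y) / p x := by
    intro x y
    have h1 : Q x y = ∑' z, (p z * K z x / p x) * K z y := rfl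
    have h2 : ∀ z, (p z * K z x / p x) * K z y = (p z * K z x * K z y) / p x := by
      intro z; ring
    rw [h1, tsum_congr h2, tsum_div_const]
  have hpxQ : ∀ x y, p x * Q x y = ∑' z, p z * K z x * K z y := by
    intro x y
    rw [hQform, mul_comm, div_mul_cancel₀ _ (hpne x)]
  have hQnn : ∀ x y, 0 ≤ Q x y := by
    intro x y
    rw [hQform]
    exact div_nonneg (tsum_nonneg fun z =>
      mul_nonneg (mul_nonneg (hp z).le (hK0 z x)) (hK0 z y)) (hp x).le
  have hQsym : ∀ x y, p x * Q x y = p y * Q y x := by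
    intro x y
    rw [hpxQ, hpxQ]
    exact tsum_congr fun z => by ring
  have hQrowS : ∀ x, Summable (Function.uncurry fun z y => p z * K z x * K z y) := by
    intro x
    refine my_summable_prod
      (fun z y => mul_nonneg (mul_nonneg (hp z).le (hK0 z x)) (hK0 z y))
      (fun z => (hK1 z).summable.mul_left _) ?_
    have he : ∀ z, ∑' y, p z * K z x * K z y = p z * K z x := by
      intro z; rw [tsum_mul_left, (hK1 z).tsum_eq, mul_one]
    rw [funext he]
    exact (hinv x).summable
  have hpQcol : ∀ x, Summable fun y => p x * Q x y := by
    intro x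
    refine ((hQrowS x).prod_symm.prod).congr fun y => ?_
    exact (hpxQ x y).symm
  have hpQsum : ∀ x, ∑' y, p x * Q x y = p x := by
    intro x
    have h1 : ∑' y, p x * Q x y = ∑' y, ∑' z, p z * K z x * K z y := by
      exact tsum_congr fun y => hpxQ x y
    rw [h1, ← my_tsum_comm (hQrowS x)]
    have h2 : ∀ z, ∑' y, p z * K z x * K z y = p z * K z x := by
      intro z; rw [tsum_mul_left, (hK1 z).tsum_eq, mul_one]
    rw [tsum_congr h2, (hinv x).tsum_eq]
  have hQrow : ∀ x, HasSum (Q x) 1 := by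
    intro x
    have hsQ : Summable (Q x) := by
      refine ((hpQcol x).mul_left (p x)⁻¹).congr fun y => ?_
      rw [inv_mul_cancel_left₀ (hpne x)]
    rw [Summable.hasSum_iff hsQ]
    have := hpQsum x
    rw [tsum_mul_left] at this
    exact mul_left_cancel₀ (hpne x) (by rw [this, mul_one])
  have hdiri_nn : ∀ f : V → ℝ, 0 ≤ dirichlet Q p f := by
    intro f
    refine mul_nonneg (by norm_num) (tsum_nonneg fun x => tsum_nonneg fun y => ?_)
    exact mul_nonneg (mul_nonneg (sq_nonneg _) (hp x).le) (hQnn x y)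
  
  -- per-row summability for h
  have hKz_le : ∀ z y, K z y ≤ p y / p z := by
    intro z y
    rw [le_div_iff₀ (hp z)]
    calc K z y * p z = p z * K z y := by ring
      _ ≤ p y := hpK_le z y
  have hS1 : ∀ z, Summable fun y => K z y * h y ^ 2 := by
    intro z
    refine Summable.of_nonneg_of_le (fun y => mul_nonneg (hK0 z y) (sq_nonneg _))
      (fun y => ?_) (hL2h.mul_left (p z)⁻¹)
    calc K z y * h y ^ 2 ≤ p y / p z * h y ^ 2 :=
          mul_le_mul_of_nonneg_right (hKz_le z y) (sq_nonneg _)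
      _ = (p z)⁻¹ * (p y * h y ^ 2) := by ring
  have hS2a : ∀ z, Summable fun y => K z y * |h y| := by
    intro z
    refine Summable.of_nonneg_of_le (fun y => mul_nonneg (hK0 z y) (abs_nonneg _))
      (fun y => ?_) (((hK1 z).summable.add (hS1 z)).div_const 2)
    nlinarith [hK0 z y, sq_nonneg (1 - |h y|), sq_abs (h y), abs_nonneg (h y),
      mul_nonneg (hK0 z y) (sq_nonneg (1 - |h y|))]
  have hS2 : ∀ z, Summable fun y => K z y * h y := by
    intro z
    rw [← summable_abs_iff]
    refine (hS2a z).congr fun y => ?_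
    rw [abs_mul, abs_of_nonneg (hK0 z y)]
  set a : V → ℝ := act K h with hadef
  set b : V → ℝ := fun z => ∑' y, K z y * h y ^ 2 with hbdef
  have hCSab : ∀ z, a z ^ 2 ≤ b z := by
    intro z
    have e1 : ∀ y, Real.sqrt (K z y) ^ 2 = K z y := fun y => Real.sq_sqrt (hK0 z y)
    have e2 : ∀ y, (Real.sqrt (K z y) * h y) ^ 2 = K z y * h y ^ 2 := by
      intro y; rw [mul_pow, Real.sq_sqrt (hK0 z y)]
    have e3 : ∀ y, Real.sqrt (K z y) * (Real.sqrt (K z y) * h y) = K z y * h y := by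
      intro y; rw [← mul_assoc, Real.mul_self_sqrt (hK0 z y)]
    have hcs := tsum_CS (fun y => Real.sqrt (K z y)) (fun y => Real.sqrt (K z y) * h y)
      (by rw [funext e1]; exact (hK1 z).summable)
      (by rw [funext e2]; exact hS1 z)
    rw [funext e3, funext e1, funext e2, (hK1 z).tsum_eq, one_mul] at hcs
    exact hcs
  -- Summable (p * b) with total N
  have hYZ : Summable (Function.uncurry fun y z => p z * K z y * h y ^ 2) := by
    refine my_summable_prod
      (fun y z => mul_nonneg (mul_nonneg (hp z).le (hK0 z y)) (sq_nonneg _))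
      (fun y => (hinv y).summable.mul_right _) ?_
    have he : ∀ y, ∑' z, p z * K z y * h y ^ 2 = p y * h y ^ 2 := by
      intro y; rw [tsum_mul_right, (hinv y).tsum_eq]
    rw [funext he]
    exact hL2h
  have hpbz : ∀ z, ∑' y, p z * K z y * h y ^ 2 = p z * b z := by
    intro z
    rw [hbdef, ← tsum_mul_left]
    exact tsum_congr fun y => by ring
  have hpb : Summable fun z => p z * b z := by
    refine (hYZ.prod_symm.prod).congr fun z => ?_
    exact hpbz z
  have hpbN : ∑' z, p z * b z = N := by
    rw [← tsum_congr hpbz,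
      my_tsum_comm (f := fun z y => p z * K z y * h y ^ 2) hYZ.prod_symm]
    have he : ∀ y, ∑' z, p z * K z y * h y ^ 2 = p y * h y ^ 2 := by
      intro y; rw [tsum_mul_right, (hinv y).tsum_eq]
    rw [tsum_congr he, hNeq]
  have hpa2 : Summable fun z => p z * a z ^ 2 := by
    refine Summable.of_nonneg_of_le (fun z => mul_nonneg (hp z).le (sq_nonneg _))
      (fun z => mul_le_mul_of_nonneg_left (hCSab z) (hp z).le) hpb
  set M : ℝ := ∑' z, p z * a z ^ 2 with hMdef
  have hMnn : 0 ≤ M := tsum_nonneg fun z => mul_nonneg (hp z).le (sq_nonneg _)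
  
  -- Dirichlet form identity
  have hD1 : Summable fun q : V × V => h q.1 ^ 2 * (p q.1 * Q q.1 q.2) := by
    refine my_summable_prod (f := fun x y => h x ^ 2 * (p x * Q x y))
      (fun x y => mul_nonneg (sq_nonneg _) (mul_nonneg (hp x).le (hQnn x y)))
      (fun x => ((hQrow x).summable.mul_left (p x)).mul_left (h x ^ 2)) ?_
    have he : ∀ x, ∑' y, h x ^ 2 * (p x * Q x y) = h x ^ 2 * p x := by
      intro x
      rw [tsum_mul_left, tsum_mul_left, (hQrow x).tsum_eq, mul_one]
    rw [funext he]
    exact hL2h.congr fun x => by ring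
  have hD2 : Summable fun q : V × V => h q.2 ^ 2 * (p q.1 * Q q.1 q.2) := by
    refine hD1.prod_symm.congr fun q => ?_
    show h q.2 ^ 2 * (p q.2 * Q q.2 q.1) = _
    rw [hQsym q.2 q.1]
  have hDs : Summable fun q : V × V => (h q.1 - h q.2) ^ 2 * p q.1 * Q q.1 q.2 := by
    refine Summable.of_nonneg_of_le
      (fun q => mul_nonneg (mul_nonneg (sq_nonneg _) (hp q.1).le) (hQnn q.1 q.2))
      (fun q => ?_) ((hD1.add hD2).mul_left 2)
    have hpQ : 0 ≤ p q.1 * Q q.1 q.2 := mul_nonneg (hp q.1).le (hQnn q.1 q.2)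
    nlinarith [sq_nonneg (h q.1 + h q.2), mul_nonneg (sq_nonneg (h q.1 + h q.2)) hpQ]
  have hE3row : ∀ q : V × V,
      Summable fun z => (h q.1 - h q.2) ^ 2 * (p z * K z q.1 * K z q.2) :=
    fun q => (hQz q.1 q.2).mul_left _
  have hDz : ∀ q : V × V, (h q.1 - h q.2) ^ 2 * p q.1 * Q q.1 q.2
      = ∑' z, (h q.1 - h q.2) ^ 2 * (p z * K z q.1 * K z q.2) := by
    intro q
    rw [mul_assoc, hpxQ, ← tsum_mul_left]
  have hE3 : Summable (Function.uncurry
      fun (q : V × V) z => (h q.1 - h q.2) ^ 2 * (p z * K z q.1 * K z q.2)) := by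
    refine my_summable_prod
      (fun q z => mul_nonneg (sq_nonneg _)
        (mul_nonneg (mul_nonneg (hp z).le (hK0 z q.1)) (hK0 z q.2)))
      hE3row ?_
    exact hDs.congr fun q => hDz q
  have hinner : ∀ z, (∑' q : V × V, (h q.1 - h q.2) ^ 2 * (p z * K z q.1 * K z q.2))
      = p z * (2 * b z - 2 * a z ^ 2) := by
    intro z
    have P1 : Summable fun q : V × V => (K z q.1 * h q.1 ^ 2) * K z q.2 :=
      (hS1 z).mul_of_nonneg (hK1 z).summable
        (fun y => mul_nonneg (hK0 z y) (sq_nonneg _)) (fun y => hK0 z y)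
    have P2 : Summable fun q : V × V => K z q.1 * (K z q.2 * h q.2 ^ 2) :=
      (hK1 z).summable.mul_of_nonneg (hS1 z)
        (fun y => hK0 z y) (fun y => mul_nonneg (hK0 z y) (sq_nonneg _))
    have P3 : Summable fun q : V × V => (K z q.1 * h q.1) * (K z q.2 * h q.2) := by
      rw [← summable_abs_iff]
      refine ((hS2a z).mul_of_nonneg (hS2a z)
        (fun y => mul_nonneg (hK0 z y) (abs_nonneg _))
        (fun y => mul_nonneg (hK0 z y) (abs_nonneg _))).congr fun q => ?_
      rw [abs_mul, abs_mul, abs_mul, abs_of_nonneg (hK0 z q.1), abs_of_nonneg (hK0 z q.2)]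
    have hexp : ∀ q : V × V, (h q.1 - h q.2) ^ 2 * (p z * K z q.1 * K z q.2)
        = p z * (((K z q.1 * h q.1 ^ 2) * K z q.2 + K z q.1 * (K z q.2 * h q.2 ^ 2))
          - 2 * ((K z q.1 * h q.1) * (K z q.2 * h q.2))) := by
      intro q; ring
    rw [tsum_congr hexp, tsum_mul_left]
    have hsub : (∑' q : V × V, (((K z q.1 * h q.1 ^ 2) * K z q.2
          + K z q.1 * (K z q.2 * h q.2 ^ 2))
          - 2 * ((K z q.1 * h q.1) * (K z q.2 * h q.2))))
        = (∑' q : V × V, ((K z q.1 * h q.1 ^ 2) * K z q.2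
            + K z q.1 * (K z q.2 * h q.2 ^ 2)))
          - 2 * ∑' q : V × V, (K z q.1 * h q.1) * (K z q.2 * h q.2) := by
      rw [Summable.tsum_sub (P1.add P2) (P3.mul_left 2), tsum_mul_left]
    have t1 := tsum_prod_mul (F := fun x => K z x * h x ^ 2) (G := K z) P1 (hK1 z).summable
    have t2 := tsum_prod_mul (F := K z) (G := fun y => K z y * h y ^ 2) P2 (hS1 z)
    have t3 := tsum_prod_mul (F := fun x => K z x * h x) (G := fun y => K z y * h y) P3 (hS2 z)
    rw [hsub, Summable.tsum_add P1 P2, t1, t2, t3, (hK1 z).tsum_eq]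
    have hbz : (∑' y, K z y * h y ^ 2) = b z := rfl
    have haz : (∑' y, K z y * h y) = a z := rfl
    rw [hbz, haz]
    ring
  have hEdiri : dirichlet Q p h = N - M := by
    have h0 : dirichlet Q p h
        = (1 / 2) * ∑' x, ∑' y, (h x - h y) ^ 2 * p x * Q x y := rfl
    have h1 : (∑' x, ∑' y, (h x - h y) ^ 2 * p x * Q x y)
        = ∑' q : V × V, (h q.1 - h q.2) ^ 2 * p q.1 * Q q.1 q.2 :=
      (Summable.tsum_prod' hDs (fun bb => hDs.prod_factor bb)).symm
    have h2 : (∑' q : V × V, (h q.1 - h q.2) ^ 2 * p q.1 * Q q.1 q.2)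
        = ∑' z, ∑' q : V × V, (h q.1 - h q.2) ^ 2 * (p z * K z q.1 * K z q.2) := by
      rw [tsum_congr hDz]
      exact my_tsum_comm hE3
    have h3 : (∑' z, ∑' q : V × V, (h q.1 - h q.2) ^ 2 * (p z * K z q.1 * K z q.2))
        = ∑' z, (2 * (p z * b z) - 2 * (p z * a z ^ 2)) := by
      refine tsum_congr fun z => ?_
      rw [hinner z]; ring
    have h4 : (∑' z, (2 * (p z * b z) - 2 * (p z * a z ^ 2)))
        = 2 * N - 2 * M := by
      rw [Summable.tsum_sub ((hpb.mul_left 2)) ((hpa2.mul_left 2)), tsum_mul_left,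
        tsum_mul_left, hpbN, ← hMdef]
    rw [h0, h1, h2, h3, h4]
    ring
  
  -- Poincaré inequality for h
  have hpoin : poincareConst Q p * N ≤ N - M := by
    have h0S : (0:ℝ) ∈ {γ : ℝ | 0 ≤ γ ∧
        ∀ f : V → ℝ, MemL2 p f → γ * var p f ≤ dirichlet Q p f} :=
      ⟨le_rfl, fun f _ => by rw [zero_mul]; exact hdiri_nn f⟩
    have hub : ∀ γ' ∈ {γ : ℝ | 0 ≤ γ ∧
        ∀ f : V → ℝ, MemL2 p f → γ * var p f ≤ dirichlet Q p f}, γ' ≤ (N - M) / N := by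
      rintro γ' ⟨-, hin⟩
      have h1 := hin h hL2h
      rw [hvar, hEdiri] at h1
      exact (le_div_iff₀ hNpos).2 h1
    have hs : poincareConst Q p ≤ (N - M) / N := csSup_le ⟨0, h0S⟩ hub
    exact (le_div_iff₀ hNpos).1 hs
  -- N = ⟨ν, a⟩
  have hXY2 : Summable (Function.uncurry fun x y => p x * K x y * h y ^ 2) :=
    hYZ.prod_symm.congr fun q => rfl
  have hZabs : Summable fun q : V × V => |ν q.1 * K q.1 q.2 * h q.2| := by
    refine Summable.of_nonneg_of_le (fun q => abs_nonneg _) (fun q => ?_)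
      ((hWs.add hXY2).div_const 2)
    obtain ⟨x, y⟩ := q
    have key : 2 * (|ν x| * |h y|) ≤ ν x ^ 2 / p x + p x * h y ^ 2 := by
      rw [← sub_le_iff_le_add, le_div_iff₀ (hp x)]
      have habs2 : (p x) ^ 2 * |h y| ^ 2 = (p x) ^ 2 * h y ^ 2 := by rw [sq_abs]
      nlinarith [sq_nonneg (|ν x| - p x * |h y|), sq_abs (ν x), habs2]
    calc |ν x * K x y * h y| = K x y * (|ν x| * |h y|) := by
          rw [abs_mul, abs_mul, abs_of_nonneg (hK0 x y)]; ring
      _ ≤ K x y * ((ν x ^ 2 / p x + p x * h y ^ 2) / 2) :=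
          mul_le_mul_of_nonneg_left (by linarith) (hK0 x y)
      _ = (Function.uncurry W (x, y) + Function.uncurry (fun x y => p x * K x y * h y ^ 2) (x, y)) / 2 := by
          simp only [Function.uncurry, hWdef]; ring
  have hZ : Summable (Function.uncurry fun x y => ν x * K x y * h y) := by
    rw [← summable_abs_iff]
    exact hZabs.congr fun q => rfl
  have hNform : N = ∑' x, ν x * a x := by
    have e0 : ∀ y, ν' y ^ 2 / p y = ν' y * h y := by
      intro y; rw [pow_two, mul_div_assoc]
    have e1 : ∀ y, ν' y * h y = ∑' x, ν x * K x y * h y := by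
      intro y
      have hy : ν' y = ∑' x, ν x * K x y := rfl
      rw [hy, ← tsum_mul_right]
    have e2 : N = ∑' y, ∑' x, ν x * K x y * h y := by
      rw [hNdef, tsum_congr e0, tsum_congr e1]
    have e3 : ∀ x, ∑' y, ν x * K x y * h y = ν x * a x := by
      intro x
      have : ∀ y, ν x * K x y * h y = ν x * (K x y * h y) := fun y => by ring
      rw [tsum_congr this, tsum_mul_left]
      rfl
    rw [e2, ← my_tsum_comm (f := fun x y => ν x * K x y * h y) hZ, tsum_congr e3]
  -- Cauchy-Schwarz : N² ≤ A M
  have hCSN : N ^ 2 ≤ A * M := by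
    have e1 : ∀ x, (ν x / Real.sqrt (p x)) ^ 2 = ν x ^ 2 / p x := by
      intro x; rw [div_pow, Real.sq_sqrt (hp x).le]
    have e2 : ∀ x, (Real.sqrt (p x) * a x) ^ 2 = p x * a x ^ 2 := by
      intro x; rw [mul_pow, Real.sq_sqrt (hp x).le]
    have e3 : ∀ x, (ν x / Real.sqrt (p x)) * (Real.sqrt (p x) * a x) = ν x * a x := by
      intro x
      have hs : Real.sqrt (p x) ≠ 0 := Real.sqrt_ne_zero'.2 (hp x)
      field_simp
    have hcs := tsum_CS (fun x => ν x / Real.sqrt (p x)) (fun x => Real.sqrt (p x) * a x)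
      (by rw [funext e1]; exact hνs) (by rw [funext e2]; exact hpa2)
    rw [funext e3, funext e1, funext e2] at hcs
    rw [hNform]
    exact hcs
  have hM2 : M ≤ (1 - poincareConst Q p) * N := by linarith
  have hfin : N ≤ (1 - poincareConst Q p) * A := by
    have h5 : N * N ≤ ((1 - poincareConst Q p) * A) * N := by
      calc N * N = N ^ 2 := by ring
        _ ≤ A * M := hCSN
        _ ≤ A * ((1 - poincareConst Q p) * N) := mul_le_mul_of_nonneg_left hM2 hAnn
        _ = ((1 - poincareConst Q p) * A) * N := by ring
    exact le_of_mul_le_mul_right h5 hNpos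
  calc N ≤ (1 - poincareConst Q p) * A := hfin
    _ ≤ max (1 - poincareConst Q p) 0 * A :=
        mul_le_mul_of_nonneg_right (le_max_left _ _) hAnn

omit [Countable V] in
lemma law_succ (K : ℕ → V → V → ℝ) (t : ℕ) (μ : V → ℝ) :
    law K (t + 1) μ = actMeas (K (t + 1)) (law K t μ) := by
  unfold law
  rw [List.range_succ, List.foldl_append]
  rfl

lemma law_facts (K : ℕ → V → V → ℝ)
    (hM : ∀ t, 1 ≤ t → IsMarkov (K t)) (x : V) :
    ∀ t, (∀ z, 0 ≤ law K t (delta x) z) ∧ HasSum (law K t (delta x)) 1 := by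
  intro t
  induction t with
  | zero =>
    constructor
    · intro z
      unfold law delta
      simp only [List.range_zero, List.foldl_nil]
      split <;> norm_num
    · exact hasSum_ite_eq x 1
  | succ s ih =>
    obtain ⟨hnn, hsum1⟩ := ih
    obtain ⟨hK0, _, hK1⟩ := hM (s + 1) (Nat.le_add_left 1 s)
    rw [law_succ]
    constructor
    · intro z
      exact tsum_nonneg fun w => mul_nonneg (hnn w) (hK0 w z)
    · refine actMeas_hasSum (K (s + 1)) hK0 hK1 ?_ hsum1
      exact hsum1.summable.congr fun z => (abs_of_nonneg (hnn z)).symm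

end Step

set_option maxHeartbeats 4000000 in
/-- Theorem: quantitative merging under Poincaré inequalities.
In a non-decreasing finite environment, for every `t ≥ 1` and all `x, y ∈ V`,
`d_TV(μ_t^x, μ_t^y) ≤ (1/2)·sqrt(π_t(V)/π_1(V))·(1/sqrt(π̃_1(x)) + 1/sqrt(π̃_1(y)))
  · ∏_{s=1}^t sqrt(1 − γ_s)`. -/
theorem stmt5 {V : Type*} [Countable V]
    (K : ℕ → V → V → ℝ) (π : ℕ → V → ℝ)
    (henv : NonDecEnv K π)
    (γ : ℕ → ℝ)
    (hγ : ∀ s, γ s = poincareConst (Qker (nmz (π s)) (K s)) (nmz (π s)))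
    (t : ℕ) (ht : 1 ≤ t) (x y : V) :
    dTV (law K t (delta x)) (law K t (delta y)) ≤
      (1 / 2) * Real.sqrt (mass (π t) / mass (π 1)) *
        (1 / Real.sqrt (nmz (π 1) x) + 1 / Real.sqrt (nmz (π 1) y)) *
        ∏ s ∈ Finset.Icc 1 t, Real.sqrt (1 - γ s) := by
  classical
  rcases isEmpty_or_nonempty V with hV | hV
  · have h0 : dTV (law K t (delta x)) (law K t (delta y)) = 0 := by
      unfold dTV
      rw [tsum_eq_sum (s := (∅ : Finset V)) (fun z _ => (IsEmpty.false z).elim)]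
      simp
    rw [h0]
    positivity
  obtain ⟨x0⟩ := hV
  obtain ⟨hM, hpos, hsum, hinvπ, hmono⟩ := henv
  -- mass facts
  have hmassp : ∀ s, 1 ≤ s → 0 < mass (π s) := by
    intro s hs
    have hm0 : HasSum (π s) (mass (π s)) := (hsum s hs).hasSum
    have h1 : π s x0 ≤ mass (π s) :=
      le_hasSum hm0 x0 (fun j _ => (hpos s hs j).le)
    exact lt_of_lt_of_le (hpos s hs x0) h1
  have hp : ∀ s, 1 ≤ s → ∀ z, 0 < nmz (π s) z := fun s hs z =>
    div_pos (hpos s hs z) (hmassp s hs)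
  have hps : ∀ s, 1 ≤ s → HasSum (nmz (π s)) 1 := by
    intro s hs
    have hm0 : HasSum (π s) (mass (π s)) := (hsum s hs).hasSum
    have := hm0.div_const (mass (π s))
    rwa [div_self (hmassp s hs).ne'] at this
  have hinvp : ∀ s, 1 ≤ s → ∀ z, HasSum (fun w => nmz (π s) w * K s w z) (nmz (π s) z) := by
    intro s hs z
    have := (hinvπ s hs z).div_const (mass (π s))
    refine this.congr_fun fun w => ?_
    unfold nmz
    rw [div_mul_eq_mul_div]
  -- laws and their difference
  set ν : ℕ → V → ℝ := fun s z => law K s (delta x) z - law K s (delta y) z with hνdef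
  have hlx := law_facts K hM x
  have hly := law_facts K hM y
  have hν0 : ∀ s, HasSum (ν s) 0 := by
    intro s
    have := (hlx s).2.sub (hly s).2
    rwa [sub_self] at this
  have hνsub : ∀ s, ν (s + 1) = actMeas (K (s + 1)) (ν s) := by
    intro s
    obtain ⟨hK0, _, hK1⟩ := hM (s + 1) (Nat.le_add_left 1 s)
    have hK1' : ∀ w z, K (s+1) w z ≤ 1 := fun w z => le_hasSum (hK1 w) z (fun j _ => hK0 w j)
    funext z
    have hr1 : Summable fun w => law K s (delta x) w * K (s+1) w z :=
      Summable.of_nonneg_of_le (fun w => mul_nonneg ((hlx s).1 w) (hK0 w z))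
        (fun w => mul_le_of_le_one_right ((hlx s).1 w) (hK1' w z)) (hlx s).2.summable
    have hr2 : Summable fun w => law K s (delta y) w * K (s+1) w z :=
      Summable.of_nonneg_of_le (fun w => mul_nonneg ((hly s).1 w) (hK0 w z))
        (fun w => mul_le_of_le_one_right ((hly s).1 w) (hK1' w z)) (hly s).2.summable
    show law K (s+1) (delta x) z - law K (s+1) (delta y) z = _
    rw [law_succ, law_succ]
    have : actMeas (K (s+1)) (ν s) z
        = ∑' w, (law K s (delta x) w * K (s+1) w z - law K s (delta y) w * K (s+1) w z) := by
      refine tsum_congr fun w => ?_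
      show (law K s (delta x) w - law K s (delta y) w) * K (s+1) w z = _
      ring
    rw [this, Summable.tsum_sub hr1 hr2]
    rfl
  -- value of the initial chi-square
  set B0 : ℝ := ∑' z, ν 0 z ^ 2 / nmz (π 1) z with hB0def
  have hν0out : ∀ z, z ∉ ({x, y} : Finset V) → ν 0 z ^ 2 / nmz (π 1) z = 0 := by
    intro z hz
    simp only [Finset.mem_insert, Finset.mem_singleton, not_or] at hz
    have h1 : ν 0 z = 0 := by
      show law K 0 (delta x) z - law K 0 (delta y) z = 0
      show delta x z - delta y z = 0
      unfold delta
      rw [if_neg hz.1, if_neg hz.2, sub_zero]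
    rw [h1]
    simp
  have hB0sum : Summable fun z => ν 0 z ^ 2 / nmz (π 1) z :=
    summable_of_ne_finset_zero hν0out
  have hB0le : B0 ≤ (1 / Real.sqrt (nmz (π 1) x) + 1 / Real.sqrt (nmz (π 1) y)) ^ 2 := by
    have ha2 : (1 / Real.sqrt (nmz (π 1) x)) ^ 2 = 1 / nmz (π 1) x := by
      rw [div_pow, one_pow, Real.sq_sqrt (hp 1 le_rfl x).le]
    have hb2 : (1 / Real.sqrt (nmz (π 1) y)) ^ 2 = 1 / nmz (π 1) y := by
      rw [div_pow, one_pow, Real.sq_sqrt (hp 1 le_rfl y).le]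
    have hab : 0 ≤ (1 / Real.sqrt (nmz (π 1) x)) * (1 / Real.sqrt (nmz (π 1) y)) := by
      positivity
    by_cases hxy : x = y
    · have hz : ∀ z, ν 0 z ^ 2 / nmz (π 1) z = 0 := by
        intro z
        have : ν 0 z = 0 := by
          show law K 0 (delta x) z - law K 0 (delta y) z = 0
          rw [hxy, sub_self]
        rw [this]
        simp
      have : B0 = 0 := by rw [hB0def, tsum_congr hz, tsum_zero]
      rw [this]
      positivity
    · have hxy' : y ≠ x := fun hc => hxy hc.symm
      have hBval : B0 = 1 / nmz (π 1) x + 1 / nmz (π 1) y := by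
        rw [hB0def, tsum_eq_sum (s := ({x, y} : Finset V)) hν0out,
          Finset.sum_pair hxy]
        have hfx : ν 0 x = 1 := by
          show delta x x - delta y x = 1
          unfold delta
          rw [if_pos rfl, if_neg hxy, sub_zero]
        have hfy : ν 0 y = -1 := by
          show delta x y - delta y y = -1
          unfold delta
          rw [if_neg hxy', if_pos rfl, zero_sub]
        rw [hfx, hfy]
        norm_num
      rw [hBval]
      nlinarith [ha2, hb2, hab]
  -- main induction
  have hmain : ∀ s, 1 ≤ s → Summable (fun z => ν s z ^ 2 / nmz (π s) z) ∧
      (∑' z, ν s z ^ 2 / nmz (π s) z)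
        ≤ mass (π s) / mass (π 1) * B0 * ∏ u ∈ Finset.Icc 1 s, max (1 - γ u) 0 := by
    intro s hs
    induction s, hs using Nat.le_induction with
    | base =>
      obtain ⟨hK0, _, hK1⟩ := hM 1 le_rfl
      have hstep := step (K 1) (nmz (π 1)) hK0 hK1 (hp 1 le_rfl) (hps 1 le_rfl)
        (hinvp 1 le_rfl) (ν 0) (hν0 0) hB0sum
      have h01 : ν 1 = actMeas (K 1) (ν 0) := by simpa using hνsub 0
      rw [← h01] at hstep
      obtain ⟨hs1, hs2, _⟩ := hstep
      refine ⟨hs1, ?_⟩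
      rw [div_self (hmassp 1 le_rfl).ne', one_mul]
      have hIcc : Finset.Icc 1 1 = {1} := Finset.Icc_self 1
      rw [hIcc, Finset.prod_singleton]
      calc ∑' z, ν 1 z ^ 2 / nmz (π 1) z
          ≤ max (1 - poincareConst (Qker (nmz (π 1)) (K 1)) (nmz (π 1))) 0 * B0 := hs2
        _ = B0 * max (1 - γ 1) 0 := by rw [hγ 1]; ring
    | succ s hs ih =>
      obtain ⟨ihs, ihb⟩ := ih
      have hs' : 1 ≤ s + 1 := by omega
      have hms := hmassp s hs
      have hms' := hmassp (s + 1) hs'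
      have hchgpt : ∀ z, ν s z ^ 2 / nmz (π (s+1)) z
          ≤ mass (π (s+1)) / mass (π s) * (ν s z ^ 2 / nmz (π s) z) := by
        intro z
        have e1 : ν s z ^ 2 / nmz (π (s+1)) z
            = ν s z ^ 2 * mass (π (s+1)) / π (s+1) z := by
          unfold nmz
          rw [div_div_eq_mul_div]
        have e2 : mass (π (s+1)) / mass (π s) * (ν s z ^ 2 / nmz (π s) z)
            = ν s z ^ 2 * mass (π (s+1)) / π s z := by
          unfold nmz
          rw [div_div_eq_mul_div]
          field_simp [hms.ne', (hpos s hs z).ne']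
        rw [e1, e2]
        exact div_le_div_of_nonneg_left (mul_nonneg (sq_nonneg _) hms'.le)
          (hpos s hs z) (hmono s hs z)
      have hchgsum : Summable fun z => ν s z ^ 2 / nmz (π (s+1)) z :=
        Summable.of_nonneg_of_le
          (fun z => div_nonneg (sq_nonneg _) (hp (s+1) hs' z).le) hchgpt
          (ihs.mul_left _)
      have hchg : (∑' z, ν s z ^ 2 / nmz (π (s+1)) z)
          ≤ mass (π (s+1)) / mass (π s) * ∑' z, ν s z ^ 2 / nmz (π s) z := by
        refine (Summable.tsum_le_tsum hchgpt hchgsum (ihs.mul_left _)).trans_eq ?_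
        exact tsum_mul_left
      obtain ⟨hK0, _, hK1⟩ := hM (s+1) hs'
      have hstep := step (K (s+1)) (nmz (π (s+1))) hK0 hK1 (hp (s+1) hs') (hps (s+1) hs')
        (hinvp (s+1) hs') (ν s) (hν0 s) hchgsum
      rw [← hνsub s] at hstep
      obtain ⟨hs1, hs2, _⟩ := hstep
      refine ⟨hs1, ?_⟩
      calc ∑' z, ν (s+1) z ^ 2 / nmz (π (s+1)) z
          ≤ max (1 - γ (s+1)) 0 * ∑' z, ν s z ^ 2 / nmz (π (s+1)) z := by
            rw [hγ (s+1)]; exact hs2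
        _ ≤ max (1 - γ (s+1)) 0 * (mass (π (s+1)) / mass (π s)
              * (mass (π s) / mass (π 1) * B0
                * ∏ u ∈ Finset.Icc 1 s, max (1 - γ u) 0)) := by
            refine mul_le_mul_of_nonneg_left ?_ (le_max_right _ _)
            exact hchg.trans (mul_le_mul_of_nonneg_left ihb (div_nonneg hms'.le hms.le))
        _ = mass (π (s+1)) / mass (π 1) * B0
              * ∏ u ∈ Finset.Icc 1 (s+1), max (1 - γ u) 0 := by
            rw [Finset.prod_Icc_succ_top hs']
            field_simp [hms.ne', (hmassp 1 le_rfl).ne']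
  -- final assembly
  obtain ⟨hts, htb⟩ := hmain t ht
  have hBtnn : 0 ≤ ∑' z, ν t z ^ 2 / nmz (π t) z :=
    tsum_nonneg fun z => div_nonneg (sq_nonneg _) (hp t ht z).le
  have hB0nn : 0 ≤ B0 := tsum_nonneg fun z => div_nonneg (sq_nonneg _) (hp 1 le_rfl z).le
  have hdtv : dTV (law K t (delta x)) (law K t (delta y)) = (1/2) * ∑' z, |ν t z| := rfl
  have habs_le : (∑' z, |ν t z|) ≤ Real.sqrt (∑' z, ν t z ^ 2 / nmz (π t) z) := by
    have e1 : ∀ z, Real.sqrt (nmz (π t) z) ^ 2 = nmz (π t) z := fun z =>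
      Real.sq_sqrt (hp t ht z).le
    have e2 : ∀ z, (|ν t z| / Real.sqrt (nmz (π t) z)) ^ 2 = ν t z ^ 2 / nmz (π t) z := by
      intro z
      rw [div_pow, sq_abs, Real.sq_sqrt (hp t ht z).le]
    have e3 : ∀ z, Real.sqrt (nmz (π t) z) * (|ν t z| / Real.sqrt (nmz (π t) z)) = |ν t z| := by
      intro z
      rw [mul_div_cancel₀]
      exact Real.sqrt_ne_zero'.2 (hp t ht z)
    have hcs := tsum_CS (fun z => Real.sqrt (nmz (π t) z))
      (fun z => |ν t z| / Real.sqrt (nmz (π t) z))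
      (by rw [funext e1]; exact (hps t ht).summable)
      (by rw [funext e2]; exact hts)
    rw [funext e3, funext e1, funext e2, (hps t ht).tsum_eq, one_mul] at hcs
    rw [show (∑' z, |ν t z|) = Real.sqrt ((∑' z, |ν t z|) ^ 2) from
      (Real.sqrt_sq (tsum_nonneg fun z => abs_nonneg _)).symm]
    exact Real.sqrt_le_sqrt hcs
  have hprod_nn : (0:ℝ) ≤ ∏ u ∈ Finset.Icc 1 t, Real.sqrt (1 - γ u) :=
    Finset.prod_nonneg fun u _ => Real.sqrt_nonneg _
  have hsqrtBt : Real.sqrt (∑' z, ν t z ^ 2 / nmz (π t) z)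
      ≤ Real.sqrt (mass (π t) / mass (π 1)) * Real.sqrt B0
        * ∏ u ∈ Finset.Icc 1 t, Real.sqrt (1 - γ u) := by
    have h1 := Real.sqrt_le_sqrt htb
    have h2 : Real.sqrt (mass (π t) / mass (π 1) * B0
          * ∏ u ∈ Finset.Icc 1 t, max (1 - γ u) 0)
        = Real.sqrt (mass (π t) / mass (π 1)) * Real.sqrt B0
          * Real.sqrt (∏ u ∈ Finset.Icc 1 t, max (1 - γ u) 0) := by
      rw [Real.sqrt_mul (mul_nonneg (div_nonneg (hmassp t ht).le (hmassp 1 le_rfl).le) hB0nn), Real.sqrt_mul (div_nonneg (hmassp t ht).le (hmassp 1 le_rfl).le)]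
    have h3 : Real.sqrt (∏ u ∈ Finset.Icc 1 t, max (1 - γ u) 0)
        = ∏ u ∈ Finset.Icc 1 t, Real.sqrt (1 - γ u) := by
      rw [sqrt_finset_prod (fun u _ => le_max_right _ _)]
      exact Finset.prod_congr rfl fun u _ => sqrt_max_zero _
    calc Real.sqrt (∑' z, ν t z ^ 2 / nmz (π t) z)
        ≤ Real.sqrt (mass (π t) / mass (π 1) * B0
            * ∏ u ∈ Finset.Icc 1 t, max (1 - γ u) 0) := h1
      _ = _ := by rw [h2, h3]
  have hsqB0 : Real.sqrt B0 ≤ 1 / Real.sqrt (nmz (π 1) x) + 1 / Real.sqrt (nmz (π 1) y) := by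
    have := Real.sqrt_le_sqrt hB0le
    rwa [Real.sqrt_sq (by positivity)] at this
  rw [hdtv]
  have hhalf : (0:ℝ) ≤ 1/2 := by norm_num
  calc (1/2) * ∑' z, |ν t z|
      ≤ (1/2) * (Real.sqrt (mass (π t) / mass (π 1)) * Real.sqrt B0
          * ∏ u ∈ Finset.Icc 1 t, Real.sqrt (1 - γ u)) :=
        mul_le_mul_of_nonneg_left (habs_le.trans hsqrtBt) hhalf
    _ ≤ (1/2) * (Real.sqrt (mass (π t) / mass (π 1))
          * (1 / Real.sqrt (nmz (π 1) x) + 1 / Real.sqrt (nmz (π 1) y))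
          * ∏ u ∈ Finset.Icc 1 t, Real.sqrt (1 - γ u)) := by
        refine mul_le_mul_of_nonneg_left ?_ hhalf
        refine mul_le_mul_of_nonneg_right ?_ hprod_nn
        exact mul_le_mul_of_nonneg_left hsqB0 (Real.sqrt_nonneg _)
    _ = (1/2) * Real.sqrt (mass (π t) / mass (π 1))
          * (1 / Real.sqrt (nmz (π 1) x) + 1 / Real.sqrt (nmz (π 1) y))
          * ∏ s ∈ Finset.Icc 1 t, Real.sqrt (1 - γ s) := by ring
end

section
/- Let {(K_t, π_t)}_{t≥1} be a non-decreasing finite environment on a countable discrete set V. Then for every r ≥ 1 and every g ∈ ℓ²(π_r), E_{Q_r,π_r}(g,g) ≤ ‖g − π̃_r(g)‖²_{ℓ²(π_r)} − ‖K_r g − π̃_{r−1}(K_r g)‖²_{ℓ²(π_{r−1})}, where E_{Q_r,π_r}(g,g) := π_r(V) · E_{Q_r,π̃_r}(g,g). -/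
open scoped BigOperators Classical
open Filter

section helpers
variable {V : Type*}

private lemma mul_abs_le_aux (a b : ℝ) (ha : 0 ≤ a) : a * |b| ≤ (a + a * b ^ 2) / 2 := by
  nlinarith [mul_nonneg ha (sq_nonneg (|b| - 1)), sq_abs b]

private lemma summable_of_mul_left_pos {c : ℝ} (hc : 0 < c) {f : V → ℝ}
    (h : Summable (fun y => c * f y)) : Summable f := by
  have h2 := h.mul_left c⁻¹
  simpa [← mul_assoc, inv_mul_cancel₀ hc.ne'] using h2

private lemma tonelli_pair {π : V → ℝ} {K : V → V → ℝ} {u : V → ℝ}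
    (hπ : ∀ x, 0 ≤ π x) (hK : ∀ x y, 0 ≤ K x y) (hu : ∀ y, 0 ≤ u y)
    (hst : ∀ y, HasSum (fun z => π z * K z y) (π y))
    (hsum : Summable (fun y => π y * u y)) :
    (∀ z, Summable (fun y => π z * (K z y * u y))) ∧
    Summable (fun z => π z * ∑' y, K z y * u y) ∧
    (∑' z, π z * ∑' y, K z y * u y) = ∑' y, π y * u y := by
  set P : V × V → ℝ := fun q => π q.2 * (K q.2 q.1 * u q.1) with hP
  have hP0 : 0 ≤ P := fun q => mul_nonneg (hπ _) (mul_nonneg (hK _ _) (hu _))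
  have hfib : ∀ y, HasSum (fun z => P (y, z)) (π y * u y) := by
    intro y
    have h1 : HasSum (fun z => (π z * K z y) * u y) (π y * u y) := (hst y).mul_right (u y)
    have h2 : (fun z => (π z * K z y) * u y) = fun z => P (y, z) := by
      funext z; simp only [hP]; ring
    rwa [h2] at h1
  have hPsum : Summable P := by
    rw [summable_prod_of_nonneg hP0]
    refine ⟨fun y => (hfib y).summable, ?_⟩
    have h3 : (fun y => ∑' z, P (y, z)) = fun y => π y * u y := by
      funext y; exact (hfib y).tsum_eq
    rw [h3]; exact hsum
  have hPS : HasSum P (∑' y, π y * u y) := by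
    have h4 := hPsum.hasSum.prod_fiberwise (fun y => hfib y)
    have := h4.tsum_eq
    rw [this]
    exact hPsum.hasSum
  have hPsum2 : Summable (fun q : V × V => P q.swap) := hPsum.prod_symm
  have hPS2 : HasSum (fun q : V × V => P q.swap) (∑' y, π y * u y) := by
    have := ((Equiv.prodComm V V).hasSum_iff (f := P) (a := ∑' y, π y * u y)).2 hPS
    exact this
  have hfibz : ∀ z, Summable (fun y => π z * (K z y * u y)) := by
    intro z
    have := hPsum2.prod_factor z
    simpa [hP] using this
  have h6 := hPS2.prod_fiberwise (fun z => (hPsum2.prod_factor z).hasSum)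
  have h7 : (fun z => ∑' y, (fun q : V × V => P q.swap) (z, y)) = fun z => π z * ∑' y, K z y * u y := by
    funext z
    have hq : (fun y => (fun q : V × V => P q.swap) (z, y)) = fun y => π z * (K z y * u y) := by
      funext y; rfl
    rw [hq, tsum_mul_left]
  rw [h7] at h6
  exact ⟨hfibz, h6.summable, h6.tsum_eq⟩

end helpers

/-- Proposition: control of the Dirichlet form in a
non-decreasing environment. For every `r ≥ 1` and `g ∈ ℓ²(π_r)`,
`E_{Q_r,π_r}(g,g) ≤ ‖g − π̃_r(g)‖²_{ℓ²(π_r)} − ‖K_r g − π̃_{r-1}(K_r g)‖²_{ℓ²(π_{r-1})}`,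
where `E_{Q_r,π_r}(g,g) := π_r(V)·E_{Q_r,π̃_r}(g,g)` and `π_0 := π_1`. -/
theorem stmt6 {V : Type*} [Countable V]
    (K : ℕ → V → V → ℝ) (π : ℕ → V → ℝ)
    (henv : NonDecEnv K π) (hπ0 : π 0 = π 1)
    (r : ℕ) (hr : 1 ≤ r) (g : V → ℝ) (hg : MemL2 (π r) g) :
    mass (π r) * dirichlet (Qker (nmz (π r)) (K r)) (nmz (π r)) g ≤
      (∑' x, π r x * (g x - integral (nmz (π r)) g) ^ 2) -
        ∑' x, π (r - 1) x *
          (act (K r) g x - integral (nmz (π (r - 1))) (act (K r) g)) ^ 2 := by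
  classical
  obtain ⟨hMar, hpos, hsum, hstat, hmono⟩ := henv
  rcases isEmpty_or_nonempty V with hV | hV
  · simp [mass, dirichlet, tsum_empty]
  obtain ⟨hK0, hK1, hKrow⟩ := hMar r hr
  have hπpos : ∀ x, 0 < π r x := hpos r hr
  have hπsum : Summable (π r) := hsum r hr
  have hst : ∀ y, HasSum (fun x => π r x * K r x y) (π r y) := hstat r hr
  have hprev : (∀ x, 0 < π (r-1) x) ∧ Summable (π (r-1)) ∧ ∀ x, π (r-1) x ≤ π r x := by
    rcases eq_or_lt_of_le hr with h1 | h2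
    · have hr1 : r = 1 := h1.symm
      subst hr1
      simp only [Nat.sub_self, hπ0]
      exact ⟨hpos 1 le_rfl, hsum 1 le_rfl, fun x => le_rfl⟩
    · have h1 : 1 ≤ r - 1 := by omega
      have h2' : r - 1 + 1 = r := by omega
      exact ⟨hpos _ h1, hsum _ h1, fun x => h2' ▸ hmono (r-1) h1 x⟩
  obtain ⟨hπppos, hπpsum, hπple⟩ := hprev
  have hM0 : 0 < mass (π r) := by
    have := Summable.tsum_pos hπsum (fun x => (hπpos x).le) (Classical.arbitrary V) (hπpos _)
    simpa [mass] using this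
  set M : ℝ := mass (π r) with hMdef
  set p : V → ℝ := nmz (π r) with hpdef
  have hpx : ∀ x, p x = π r x / M := fun x => rfl
  have hp_pos : ∀ x, 0 < p x := fun x => div_pos (hπpos x) hM0
  set c : ℝ := integral (nmz (π r)) g with hcdef
  set f : V → ℝ := fun x => g x - c with hfdef
  have hfx : ∀ x, f x = g x - c := fun x => rfl
  -- summability of weighted squares of f
  have hfsq : Summable (fun x => π r x * f x ^ 2) := by
    refine Summable.of_nonneg_of_le (fun x => mul_nonneg (hπpos x).le (sq_nonneg _)) (fun x => ?_)
      ((hg.mul_left 2).add (hπsum.mul_left (2 * c ^ 2)))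
    have h1 : f x ^ 2 ≤ 2 * g x ^ 2 + 2 * c ^ 2 := by rw [hfx]; nlinarith [sq_nonneg (g x + c)]
    calc π r x * f x ^ 2 ≤ π r x * (2 * g x ^ 2 + 2 * c ^ 2) :=
          mul_le_mul_of_nonneg_left h1 (hπpos x).le
      _ = 2 * (π r x * g x ^ 2) + 2 * c ^ 2 * π r x := by ring
  have hπabsf : Summable (fun x => π r x * |f x|) := by
    refine Summable.of_nonneg_of_le (fun x => mul_nonneg (hπpos x).le (abs_nonneg _))
      (fun x => mul_abs_le_aux _ _ (hπpos x).le) ?_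
    exact (hπsum.add hfsq).div_const 2
  -- stationarity pointwise bound
  have hKle : ∀ z x, π r z * K r z x ≤ π r x := fun z x =>
    le_hasSum (hst x) z (fun j _ => mul_nonneg (hπpos j).le (hK0 j x))
  -- Tonelli for u = f^2 and u = |f|
  obtain ⟨T2fib, T2sum, T2val⟩ := tonelli_pair (fun x => (hπpos x).le) hK0
    (fun y => sq_nonneg (f y)) hst hfsq
  obtain ⟨T1fib, T1sum, T1val⟩ := tonelli_pair (fun x => (hπpos x).le) hK0
    (fun y => abs_nonneg (f y)) hst hπabsf
  have hfib2 : ∀ z, Summable (fun y => K r z y * f y ^ 2) := fun z =>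
    summable_of_mul_left_pos (hπpos z) (T2fib z)
  have hfib1 : ∀ z, Summable (fun y => K r z y * |f y|) := fun z =>
    summable_of_mul_left_pos (hπpos z) (T1fib z)
  have hfibf : ∀ z, Summable (fun y => K r z y * f y) := by
    intro z
    refine Summable.of_abs ?_
    have : (fun y => |K r z y * f y|) = fun y => K r z y * |f y| := by
      funext y; rw [abs_mul, abs_of_nonneg (hK0 z y)]
    rw [this]; exact hfib1 z
  set S1 : V → ℝ := fun z => ∑' y, K r z y * f y with hS1def
  set S2 : V → ℝ := fun z => ∑' y, K r z y * f y ^ 2 with hS2def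
  -- inner identity
  have hI2 : ∀ z x, HasSum (fun y => K r z y * (f x - f y) ^ 2)
      (f x ^ 2 - 2 * f x * S1 z + S2 z) := by
    intro z x
    have h1 : HasSum (fun y => f x ^ 2 * K r z y) (f x ^ 2 * 1) := (hKrow z).mul_left _
    have h2 : HasSum (fun y => (2 * f x) * (K r z y * f y)) (2 * f x * S1 z) :=
      (hfibf z).hasSum.mul_left _
    have h3 : HasSum (fun y => K r z y * f y ^ 2) (S2 z) := (hfib2 z).hasSum
    have h := (h1.sub h2).add h3
    convert h using 1
    · rfl
    · funext y; ring
    · ring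
  have hJ : ∀ z, HasSum (fun x => K r z x * (∑' y, K r z y * (f x - f y) ^ 2))
      (2 * (S2 z - S1 z ^ 2)) := by
    intro z
    have hcong : (fun x => K r z x * (∑' y, K r z y * (f x - f y) ^ 2))
        = fun x => (K r z x * f x ^ 2 - (2 * S1 z) * (K r z x * f x)) + (S2 z) * K r z x := by
      funext x; rw [(hI2 z x).tsum_eq]; ring
    rw [hcong]
    have h := ((hfib2 z).hasSum.sub ((hfibf z).hasSum.mul_left (2 * S1 z))).add
      ((hKrow z).mul_left (S2 z))
    convert h using 1
    · rfl
    ring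
  have hI2nonneg : ∀ z x, 0 ≤ ∑' y, K r z y * (f x - f y) ^ 2 := fun z x =>
    tsum_nonneg (fun y => mul_nonneg (hK0 z y) (sq_nonneg _))
  have hw0 : ∀ z, 0 ≤ 2 * (S2 z - S1 z ^ 2) := fun z =>
    hasSum_le (fun x => mul_nonneg (hK0 z x) (hI2nonneg z x)) hasSum_zero (hJ z)
  have hJensen : ∀ z, S1 z ^ 2 ≤ S2 z := fun z => by have := hw0 z; linarith
  -- normalized facts
  have hpw_sum : Summable (fun z => p z * (2 * (S2 z - S1 z ^ 2))) := by
    refine Summable.of_nonneg_of_le (fun z => mul_nonneg (hp_pos z).le (hw0 z)) (fun z => ?_)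
      (T2sum.mul_left (2 / M))
    have h1 : p z * (2 * (S2 z - S1 z ^ 2)) ≤ p z * (2 * S2 z) := by
      have := sq_nonneg (S1 z)
      nlinarith [hp_pos z]
    have h2 : p z * (2 * S2 z) = 2 / M * (π r z * S2 z) := by rw [hpx]; ring
    rw [← h2]; exact h1
  have hpst : ∀ y, HasSum (fun z => p z * K r z y) (p y) := by
    intro y
    have h1 := (hst y).div_const M
    have h2 : (fun z => π r z * K r z y / M) = fun z => p z * K r z y := by
      funext z; rw [hpx]; ring
    rw [h2] at h1
    exact h1
  have hQsum : ∀ x y, Summable (fun z => p z * K r z x * K r z y) := by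
    intro x y
    refine Summable.of_nonneg_of_le
      (fun z => mul_nonneg (mul_nonneg (hp_pos z).le (hK0 z x)) (hK0 z y)) (fun z => ?_)
      (hpst x).summable
    exact mul_le_of_le_one_right (mul_nonneg (hp_pos z).le (hK0 z x)) (hK1 z y)
  have hpQ : ∀ x y, p x * Qker p (K r) x y = ∑' z, p z * K r z x * K r z y := by
    intro x y
    have h0 : Qker p (K r) x y = ∑' z, (p z * K r z x / p x) * K r z y := rfl
    rw [h0, ← tsum_mul_left]
    refine tsum_congr fun z => ?_
    have hpx0 : p x ≠ 0 := (hp_pos x).ne'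
    field_simp
  have hQ0 : ∀ x y, 0 ≤ Qker p (K r) x y := by
    intro x y
    have h0 : Qker p (K r) x y = ∑' z, (p z * K r z x / p x) * K r z y := rfl
    rw [h0]
    exact tsum_nonneg fun z => mul_nonneg
      (div_nonneg (mul_nonneg (hp_pos z).le (hK0 z x)) (hp_pos x).le) (hK0 z y)
  have hQb : ∀ x y, p x * Qker p (K r) x y ≤ p y := by
    intro x y
    rw [hpQ]
    have h1 : ∀ z, p z * K r z x * K r z y ≤ p z * K r z y := fun z =>
      mul_le_mul_of_nonneg_right (mul_le_of_le_one_right (hp_pos z).le (hK1 z x)) (hK0 z y)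
    calc (∑' z, p z * K r z x * K r z y) ≤ ∑' z, p z * K r z y :=
          Summable.tsum_le_tsum h1 (hQsum x y) (hpst y).summable
      _ = p y := (hpst y).tsum_eq
  set R : V → V → ℝ := fun x y => (f x - f y) ^ 2 * p x * Qker p (K r) x y with hRdef
  have hR0 : ∀ x y, 0 ≤ R x y := fun x y =>
    mul_nonneg (mul_nonneg (sq_nonneg _) (hp_pos x).le) (hQ0 x y)
  have hpf2 : Summable (fun y => p y * f y ^ 2) := by
    have h1 := hfsq.div_const M
    have h2 : (fun x => π r x * f x ^ 2 / M) = fun x => p x * f x ^ 2 := by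
      funext x; rw [hpx]; ring
    rwa [h2] at h1
  have hp_sum : Summable p := by
    have h1 := hπsum.div_const M
    exact h1
  have hRsum : ∀ x, Summable (fun y => R x y) := by
    intro x
    refine Summable.of_nonneg_of_le (fun y => hR0 x y) (fun y => ?_)
      (((hp_sum.mul_left (2 * f x ^ 2))).add (hpf2.mul_left 2))
    have h1 : R x y = (f x - f y) ^ 2 * (p x * Qker p (K r) x y) := by rw [hRdef]; ring
    have h2 : (f x - f y) ^ 2 ≤ 2 * f x ^ 2 + 2 * f y ^ 2 := by nlinarith [sq_nonneg (f x + f y)]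
    calc R x y ≤ (2 * f x ^ 2 + 2 * f y ^ 2) * p y := by
          rw [h1]
          exact mul_le_mul h2 (hQb x y) (mul_nonneg (hp_pos x).le (hQ0 x y))
            (by positivity)
      _ = 2 * f x ^ 2 * p y + 2 * (p y * f y ^ 2) := by ring
  -- ENNReal stage
  set Te : V → V → V → ENNReal := fun z x y =>
    ENNReal.ofReal (p z * (K r z x * (K r z y * (f x - f y) ^ 2))) with hTedef
  have hE3 : ∀ x y, ENNReal.ofReal (R x y) = ∑' z, Te z x y := by
    intro x y
    have hsum1 : Summable (fun z => p z * (K r z x * (K r z y * (f x - f y) ^ 2))) := by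
      have h1 := (hQsum x y).mul_left ((f x - f y) ^ 2)
      have h2 : (fun z => (f x - f y) ^ 2 * (p z * K r z x * K r z y))
          = fun z => p z * (K r z x * (K r z y * (f x - f y) ^ 2)) := by funext z; ring
      rwa [h2] at h1
    have hval : R x y = ∑' z, p z * (K r z x * (K r z y * (f x - f y) ^ 2)) := by
      have h1 : R x y = (f x - f y) ^ 2 * (p x * Qker p (K r) x y) := by rw [hRdef]; ring
      rw [h1, hpQ, ← tsum_mul_left]
      refine tsum_congr fun z => ?_
      ring
    rw [hval]
    exact ENNReal.ofReal_tsum_of_nonneg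
      (fun z => mul_nonneg (hp_pos z).le (mul_nonneg (hK0 z x)
        (mul_nonneg (hK0 z y) (sq_nonneg _)))) hsum1
  have hE1 : ∀ z, (∑' x, ∑' y, Te z x y)
      = ENNReal.ofReal (p z * (2 * (S2 z - S1 z ^ 2))) := by
    intro z
    have hinner : ∀ x, (∑' y, Te z x y)
        = ENNReal.ofReal (p z * (K r z x * (∑' y, K r z y * (f x - f y) ^ 2))) := by
      intro x
      have hs : Summable (fun y => (p z * K r z x) * (K r z y * (f x - f y) ^ 2)) :=
        (hI2 z x).summable.mul_left _
      have h1 : (∑' y, Te z x y)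
          = ∑' y, ENNReal.ofReal ((p z * K r z x) * (K r z y * (f x - f y) ^ 2)) := by
        refine tsum_congr fun y => ?_
        rw [hTedef]
        congr 1
        ring
      rw [h1, ← ENNReal.ofReal_tsum_of_nonneg
        (fun y => mul_nonneg (mul_nonneg (hp_pos z).le (hK0 z x))
          (mul_nonneg (hK0 z y) (sq_nonneg _))) hs, tsum_mul_left]
      congr 1
      ring
    have hsx : Summable (fun x => p z * (K r z x * (∑' y, K r z y * (f x - f y) ^ 2))) :=
      (hJ z).summable.mul_left _
    calc (∑' x, ∑' y, Te z x y)
        = ∑' x, ENNReal.ofReal (p z * (K r z x * (∑' y, K r z y * (f x - f y) ^ 2))) :=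
          tsum_congr hinner
      _ = ENNReal.ofReal (∑' x, p z * (K r z x * (∑' y, K r z y * (f x - f y) ^ 2))) :=
          (ENNReal.ofReal_tsum_of_nonneg
            (fun x => mul_nonneg (hp_pos z).le (mul_nonneg (hK0 z x) (hI2nonneg z x))) hsx).symm
      _ = ENNReal.ofReal (p z * (2 * (S2 z - S1 z ^ 2))) := by
          rw [tsum_mul_left, (hJ z).tsum_eq]
  have hswap : (∑' x, ∑' y, ∑' z, Te z x y) = ∑' z, ∑' x, ∑' y, Te z x y := by
    calc (∑' x, ∑' y, ∑' z, Te z x y) = ∑' x, ∑' z, ∑' y, Te z x y :=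
          tsum_congr fun x => ENNReal.tsum_comm
      _ = ∑' z, ∑' x, ∑' y, Te z x y := ENNReal.tsum_comm
  set W : ℝ := ∑' z, p z * (2 * (S2 z - S1 z ^ 2)) with hWdef
  have hW0 : 0 ≤ W := tsum_nonneg fun z => mul_nonneg (hp_pos z).le (hw0 z)
  have hu0 : ∀ x, 0 ≤ ∑' y, R x y := fun x => tsum_nonneg fun y => hR0 x y
  have hENN : (∑' x, ENNReal.ofReal (∑' y, R x y)) = ENNReal.ofReal W := by
    calc (∑' x, ENNReal.ofReal (∑' y, R x y))
        = ∑' x, ∑' y, ENNReal.ofReal (R x y) :=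
          tsum_congr fun x => ENNReal.ofReal_tsum_of_nonneg (fun y => hR0 x y) (hRsum x)
      _ = ∑' x, ∑' y, ∑' z, Te z x y :=
          tsum_congr fun x => tsum_congr fun y => congrArg _ rfl |>.trans (hE3 x y)
      _ = ∑' z, ∑' x, ∑' y, Te z x y := hswap
      _ = ∑' z, ENNReal.ofReal (p z * (2 * (S2 z - S1 z ^ 2))) := tsum_congr hE1
      _ = ENNReal.ofReal W :=
          (ENNReal.ofReal_tsum_of_nonneg
            (fun z => mul_nonneg (hp_pos z).le (hw0 z)) hpw_sum).symm
  have husum : Summable (fun x => ∑' y, R x y) := by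
    have hfin : (∑' x, ENNReal.ofReal (∑' y, R x y)) ≠ ⊤ := by
      rw [hENN]; exact ENNReal.ofReal_ne_top
    have h1 := ENNReal.summable_toReal hfin
    have h2 : (fun x => (ENNReal.ofReal (∑' y, R x y)).toReal) = fun x => ∑' y, R x y := by
      funext x; rw [ENNReal.toReal_ofReal (hu0 x)]
    rwa [h2] at h1
  have key : (∑' x, ∑' y, R x y) = W := by
    have h1 : ENNReal.ofReal (∑' x, ∑' y, R x y) = ENNReal.ofReal W := by
      rw [ENNReal.ofReal_tsum_of_nonneg hu0 husum, hENN]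
    exact (ENNReal.ofReal_eq_ofReal_iff (tsum_nonneg hu0) hW0).mp h1
  -- value of the Dirichlet form
  have hdir : dirichlet (Qker p (K r)) p g = ∑' z, p z * (S2 z - S1 z ^ 2) := by
    have h1 : dirichlet (Qker p (K r)) p g = (1 / 2) * ∑' x, ∑' y, R x y := by
      unfold dirichlet
      congr 1
      refine tsum_congr fun x => tsum_congr fun y => ?_
      rw [hRdef]
      have : g x - g y = f x - f y := by rw [hfx, hfx]; ring
      rw [this]
    have h2 : W = 2 * ∑' z, p z * (S2 z - S1 z ^ 2) := by
      rw [hWdef, ← tsum_mul_left]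
      refine tsum_congr fun z => ?_
      ring
    rw [h1, key, h2]
    ring
  have hπS1sq : Summable (fun z => π r z * S1 z ^ 2) :=
    Summable.of_nonneg_of_le (fun z => mul_nonneg (hπpos z).le (sq_nonneg _))
      (fun z => mul_le_mul_of_nonneg_left (hJensen z) (hπpos z).le) T2sum
  have hLHS : M * dirichlet (Qker p (K r)) p g
      = (∑' x, π r x * f x ^ 2) - ∑' z, π r z * S1 z ^ 2 := by
    rw [hdir, ← tsum_mul_left]
    have h1 : (fun z => M * (p z * (S2 z - S1 z ^ 2)))
        = fun z => π r z * S2 z - π r z * S1 z ^ 2 := by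
      funext z
      rw [hpx]
      field_simp
    rw [h1, Summable.tsum_sub T2sum hπS1sq, T2val]
  -- RHS analysis
  have hact : ∀ x, act (K r) g x = S1 x + c := by
    intro x
    have h1 : HasSum (fun y => K r x y * f y + c * K r x y) (S1 x + c * 1) :=
      (hfibf x).hasSum.add ((hKrow x).mul_left c)
    have h2 : (fun y => K r x y * f y + c * K r x y) = fun y => K r x y * g y := by
      funext y; rw [hfx]; ring
    rw [h2] at h1
    have h3 : act (K r) g x = ∑' y, K r x y * g y := rfl
    rw [h3, h1.tsum_eq]
    ring
  have hM'0 : 0 < mass (π (r-1)) := by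
    have := Summable.tsum_pos hπpsum (fun x => (hπppos x).le) (Classical.arbitrary V) (hπppos _)
    simpa [mass] using this
  set M' : ℝ := mass (π (r-1)) with hM'def
  have habsS1 : ∀ z, |S1 z| ≤ ∑' y, K r z y * |f y| := by
    intro z
    have heq : (fun y => ‖K r z y * f y‖) = fun y => K r z y * |f y| := by
      funext y; rw [Real.norm_eq_abs, abs_mul, abs_of_nonneg (hK0 z y)]
    have h1 : Summable (fun y => ‖K r z y * f y‖) := by rw [heq]; exact hfib1 z
    have h2 := norm_tsum_le_tsum_norm h1
    rw [heq] at h2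
    simpa [Real.norm_eq_abs] using h2
  have hπpS1 : Summable (fun x => π (r-1) x * S1 x) := by
    refine Summable.of_abs ?_
    refine Summable.of_nonneg_of_le (fun x => abs_nonneg _) (fun x => ?_) T1sum
    rw [abs_mul, abs_of_nonneg (hπppos x).le]
    exact mul_le_mul (hπple x) (habsS1 x) (abs_nonneg _) (hπpos x).le
  set m1 : ℝ := ∑' x, π (r-1) x * S1 x with hm1def
  have hm : integral (nmz (π (r-1))) (act (K r) g) = m1 / M' + c := by
    have h1 : HasSum (fun x => π (r-1) x * S1 x / M') (m1 / M') := hπpS1.hasSum.div_const M'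
    have h2 : HasSum (fun x => (π (r-1) x / M') * c) (M' / M' * c) :=
      (hπpsum.hasSum.div_const M').mul_right c
    have h3 := h1.add h2
    have h4 : (fun x => π (r-1) x * S1 x / M' + (π (r-1) x / M') * c)
        = fun x => nmz (π (r-1)) x * act (K r) g x := by
      funext x
      have h5 : nmz (π (r-1)) x = π (r-1) x / M' := rfl
      rw [h5, hact]
      ring
    rw [h4] at h3
    have h6 : integral (nmz (π (r-1))) (act (K r) g)
        = ∑' x, nmz (π (r-1)) x * act (K r) g x := rfl
    rw [h6, h3.tsum_eq, div_self hM'0.ne']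
    ring
  set mb : ℝ := m1 / M' with hmbdef
  have hπpS1sq : Summable (fun x => π (r-1) x * S1 x ^ 2) := by
    refine Summable.of_nonneg_of_le
      (fun x => mul_nonneg (hπppos x).le (sq_nonneg _)) (fun x => ?_) T2sum
    calc π (r-1) x * S1 x ^ 2 ≤ π r x * S1 x ^ 2 :=
          mul_le_mul_of_nonneg_right (hπple x) (sq_nonneg _)
      _ ≤ π r x * S2 x := mul_le_mul_of_nonneg_left (hJensen x) (hπpos x).le
  have hval : HasSum (fun x => π (r-1) x * (S1 x - mb) ^ 2)
      ((∑' x, π (r-1) x * S1 x ^ 2) - (2 * mb) * m1 + M' * mb ^ 2) := by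
    have h := (hπpS1sq.hasSum.sub (hπpS1.hasSum.mul_left (2 * mb))).add
      (hπpsum.hasSum.mul_right (mb ^ 2))
    convert h using 1
    · rfl
    · funext x; ring
    rfl
  have hvar_le : (∑' x, π (r-1) x * (S1 x - mb) ^ 2) ≤ ∑' x, π (r-1) x * S1 x ^ 2 := by
    rw [hval.tsum_eq]
    have h1 : (2 * mb) * m1 - M' * mb ^ 2 = m1 ^ 2 / M' := by
      rw [hmbdef]
      field_simp
      ring
    nlinarith [div_nonneg (sq_nonneg m1) hM'0.le]
  have hstep : (∑' x, π (r-1) x * S1 x ^ 2) ≤ ∑' z, π r z * S1 z ^ 2 :=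
    Summable.tsum_le_tsum (fun x => mul_le_mul_of_nonneg_right (hπple x) (sq_nonneg _)) hπpS1sq hπS1sq
  -- assemble
  have hRHS2 : (∑' x, π (r-1) x * (act (K r) g x - integral (nmz (π (r-1))) (act (K r) g)) ^ 2)
      = ∑' x, π (r-1) x * (S1 x - mb) ^ 2 := by
    refine tsum_congr fun x => ?_
    rw [hact, hm, hmbdef]
    ring_nf
  have hRHS1 : (∑' x, π r x * (g x - integral (nmz (π r)) g) ^ 2) = ∑' x, π r x * f x ^ 2 :=
    tsum_congr fun x => by rw [← hcdef, ← hfx]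
  rw [hRHS1, hRHS2, hLHS]
  have hfinal : (∑' x, π (r-1) x * (S1 x - mb) ^ 2) ≤ ∑' z, π r z * S1 z ^ 2 :=
    hvar_le.trans hstep
  linarith
end
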